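/- arXiv:1605.06223 — 10 statements merged into one kernel-verified Lean document; each statement's English description precedes it below -/
import Mathlib

section
/- Let γ > 0, let α₁ be a nonnegative integer and α₂ an integer. The monomial z₁^{α₁} z₂^{α₂} is square-integrable on ℍ_γ, i.e. ∫_{ℍ_γ} |z₁|^{2α₁} |z₂|^{2α₂} dV(z) < ∞, if and only if α₁ + γ(α₂ + 1) > −1. -/
open MeasureTheory Complex Real
open Set

noncomputable section

/-- The power-generalized Hartogs triangle. -/
def Hartogs (γ : ℝ) : Set (ℂ × ℂ) :=
  {z : ℂ × ℂ | ‖z.1‖ ^ γ < ‖z.2‖ ∧ ‖z.2‖ < 1}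

theorem lintegral_comp_polarCoord_symm' (f : ℝ × ℝ → ENNReal) :
    ∫⁻ p, f p = ∫⁻ p in polarCoord.target, ENNReal.ofReal p.1 * f (polarCoord.symm p) := by
  set B : ℝ × ℝ → ℝ × ℝ →L[ℝ] ℝ × ℝ := fun p =>
    LinearMap.toContinuousLinearMap (Matrix.toLin (Module.Basis.finTwoProd ℝ) (Module.Basis.finTwoProd ℝ)
      !![Real.cos p.2, -p.1 * Real.sin p.2; Real.sin p.2, p.1 * Real.cos p.2])
  have A : ∀ p ∈ polarCoord.target, HasFDerivWithinAt polarCoord.symm (B p) polarCoord.target p :=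
    fun p _ => (hasFDerivAt_polarCoord_symm p).hasFDerivWithinAt
  have B_det : ∀ p, (B p).det = p.1 := by
    intro p
    conv_rhs => rw [← one_mul p.1, ← Real.cos_sq_add_sin_sq p.2]
    simp only [B, neg_mul, LinearMap.det_toContinuousLinearMap, LinearMap.det_toLin,
      Matrix.det_fin_two_of, sub_neg_eq_add]
    ring
  calc
    ∫⁻ p, f p = ∫⁻ p in polarCoord.source, f p := by
      rw [← setLIntegral_univ]
      exact (setLIntegral_congr polarCoord_source_ae_eq_univ.symm)
    _ = ∫⁻ p in polarCoord.symm '' polarCoord.target, f p := by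
      rw [polarCoord.symm_image_target_eq_source]
    _ = ∫⁻ p in polarCoord.target, ENNReal.ofReal |(B p).det| * f (polarCoord.symm p) := by
      exact lintegral_image_eq_lintegral_abs_det_fderiv_mul volume
        polarCoord.open_target.measurableSet A
        (polarCoord.symm.injOn) f
    _ = ∫⁻ p in polarCoord.target, ENNReal.ofReal p.1 * f (polarCoord.symm p) := by
      refine setLIntegral_congr_fun polarCoord.open_target.measurableSet
        (fun p hp => ?_)
      rw [B_det, abs_of_pos hp.1]

theorem lintegral_radial' (F : ℝ → ENNReal) (hF : Measurable F) :
    ∫⁻ z : ℂ, F (‖z‖) =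
      ENNReal.ofReal (2 * π) * ∫⁻ r in Ioi (0 : ℝ), ENNReal.ofReal r * F r := by
  have h1 : ∫⁻ z : ℂ, F (‖z‖)
      = ∫⁻ p : ℝ × ℝ, F (Real.sqrt (p.1 ^ 2 + p.2 ^ 2)) := by
    have hcomp : Measurable fun z : ℂ => F (‖z‖) :=
      hF.comp continuous_norm.measurable
    rw [← (Complex.volume_preserving_equiv_real_prod.symm _).lintegral_comp hcomp]
    refine lintegral_congr fun p => ?_
    congr 1
    rw [Complex.norm_def, Complex.normSq_apply, Complex.measurableEquivRealProd_symm_apply]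
    ring_nf
  rw [h1, lintegral_comp_polarCoord_symm']
  have h2 : ∀ p ∈ polarCoord.target,
      ENNReal.ofReal p.1 * F (Real.sqrt ((polarCoord.symm p).1 ^ 2 + (polarCoord.symm p).2 ^ 2))
        = ENNReal.ofReal p.1 * F p.1 := by
    intro p hp
    congr 2
    have : (p.1 *Real.cos p.2) ^ 2 + (p.1 * Real.sin p.2) ^ 2 = p.1 ^ 2 := by
      nlinarith [Real.sin_sq_add_cos_sq p.2]
    show Real.sqrt ((p.1 * Real.cos p.2) ^ 2 + (p.1 * Real.sin p.2) ^ 2) = p.1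
    rw [this, Real.sqrt_sq_eq_abs, abs_of_pos hp.1]
  rw [setLIntegral_congr_fun polarCoord.open_target.measurableSet
    h2]
  have htgt : polarCoord.target = Ioi (0 : ℝ) ×ˢ Ioo (-π) π := rfl
  have hm : Measurable fun r : ℝ => ENNReal.ofReal r * F r :=
    (ENNReal.measurable_ofReal.comp measurable_id).mul hF
  rw [htgt, Measure.volume_eq_prod, ← Measure.prod_restrict,
    lintegral_prod (fun x : ℝ × ℝ => ENNReal.ofReal x.1 * F x.1)
      ((hm.comp measurable_fst).aemeasurable)]
  simp only [setLIntegral_const]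
  rw [lintegral_mul_const _ hm, Real.volume_Ioo, mul_comm]
  congr 1
  rw [sub_neg_eq_add, two_mul]

theorem lintegral_ball_pow' (k : ℕ) (R : ℝ) (hR : 0 ≤ R) :
    ∫⁻ z in {z : ℂ | ‖z‖ < R}, ENNReal.ofReal (‖z‖ ^ k)
      = ENNReal.ofReal (2 * π) * ENNReal.ofReal (R ^ (k + 2) / (k + 2)) := by
  have hs : MeasurableSet {z : ℂ | ‖z‖ < R} :=
    (isOpen_lt continuous_norm continuous_const).measurableSet
  have hFm : Measurable fun r : ℝ => ENNReal.ofReal (r ^ k) :=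
    ENNReal.measurable_ofReal.comp (measurable_id.pow_const k)
  set F : ℝ → ENNReal := (Iio R).indicator fun r => ENNReal.ofReal (r ^ k) with hF
  have key : ∫⁻ z in {z : ℂ | ‖z‖ < R}, ENNReal.ofReal (‖z‖ ^ k)
      = ∫⁻ z : ℂ, F (‖z‖) := by
    rw [← lintegral_indicator hs _]
    refine lintegral_congr fun z => ?_
    by_cases h : ‖z‖ < R <;> simp [F, indicator, h]
  rw [key, lintegral_radial' F (hFm.indicator measurableSet_Iio)]
  congr 1
  have step1 : ∀ r : ℝ, ENNReal.ofReal r * F r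
      = (Iio R).indicator (fun r => ENNReal.ofReal r * ENNReal.ofReal (r ^ k)) r := by
    intro r
    by_cases h : r < R <;> simp [F, indicator, h]
  simp_rw [step1]
  rw [lintegral_indicator measurableSet_Iio _, Measure.restrict_restrict measurableSet_Iio,
    Set.Iio_inter_Ioi]
  have step2 : ∫⁻ r in Ioo (0 : ℝ) R, ENNReal.ofReal r * ENNReal.ofReal (r ^ k)
      = ∫⁻ r in Ioo (0 : ℝ) R, ENNReal.ofReal (r ^ (k + 1)) := by
    refine setLIntegral_congr_fun measurableSet_Ioo
      (fun r hr => ?_)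
    rw [← ENNReal.ofReal_mul hr.1.le, ← pow_succ']
  rw [step2, Measure.restrict_congr_set Ioo_ae_eq_Ioc,
    ← ofReal_integral_eq_lintegral_ofReal (intervalIntegral.intervalIntegrable_pow _).1 ?_,
    ← intervalIntegral.integral_of_le hR, integral_pow]
  · norm_num [add_assoc]
  · filter_upwards [ae_restrict_mem measurableSet_Ioc] with y hy
    exact pow_nonneg hy.1.le _

theorem measurable_zpow' (n : ℤ) : Measurable fun x : ℝ => x ^ n := by
  obtain ⟨q, rfl | rfl⟩ := n.eq_nat_or_neg
  · simpa [zpow_natCast] using measurable_id.pow_const q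
  · simpa [zpow_neg, zpow_natCast] using (measurable_id (α := ℝ)).pow_const q

theorem ennreal_const_mul_lt_top_iff {c x : ENNReal} (h0 : c ≠ 0) (ht : c ≠ ⊤) :
    c * x < ⊤ ↔ x < ⊤ := by
  rw [ENNReal.mul_lt_top_iff]
  constructor
  · rintro (⟨-, h⟩ | h | h)
    · exact h
    · exact absurd h h0
    · simp [h]
  · intro h
    exact Or.inl ⟨lt_top_iff_ne_top.2 ht, h⟩


theorem monomial_aux (γ : ℝ) (hγ : 0 < γ) (α₁ : ℕ) (α₂ : ℤ) (S : Set (ℂ × ℂ))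
    (hS : S = {z : ℂ × ℂ | ‖z.1‖ ^ γ < ‖z.2‖ ∧ ‖z.2‖ < 1}) :
    IntegrableOn
        (fun z : ℂ × ℂ => ‖z.1‖ ^ (2 * α₁) * ‖z.2‖ ^ (2 * α₂))
        S volume
      ↔ (α₁ : ℝ) + γ * ((α₂ : ℝ) + 1) > -1 := by
  subst hS
  set k : ℕ := 2 * α₁ with hk
  set m : ℤ := 2 * α₂ with hm
  set S : Set (ℂ × ℂ) :=
    {z : ℂ × ℂ | ‖z.1‖ ^ γ < ‖z.2‖ ∧ ‖z.2‖ < 1} with hSdef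
  set t : ℝ := 1 + (m : ℝ) + ((k : ℝ) + 2) / γ with htdef
  -- measurability facts
  have hSm : MeasurableSet S := by
    rw [hSdef, Set.setOf_and]
    have c1 : Continuous fun z : ℂ × ℂ => ‖z.1‖ ^ γ :=
      (continuous_norm.comp continuous_fst).rpow_const (fun z => Or.inr hγ.le)
    have c2 : Continuous fun z : ℂ × ℂ => ‖z.2‖ :=
      continuous_norm.comp continuous_snd
    exact (measurableSet_lt c1.measurable c2.measurable).inter
      (measurableSet_lt c2.measurable measurable_const)
  have h1m : MeasurableSet {w : ℂ | ‖w‖ < 1} :=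
    (isOpen_lt continuous_norm continuous_const).measurableSet
  have habs1 : Measurable fun z : ℂ × ℂ => ‖z.1‖ :=
    continuous_norm.measurable.comp measurable_fst
  have habs2 : Measurable fun z : ℂ × ℂ => ‖z.2‖ :=
    continuous_norm.measurable.comp measurable_snd
  set f : ℂ × ℂ → ℝ := fun z => ‖z.1‖ ^ k * ‖z.2‖ ^ m with hfdef
  have hfm : Measurable f := (habs1.pow_const k).mul
    ((measurable_zpow' m).comp habs2)
  have hf0 : ∀ z, 0 ≤ f z := fun z => mul_nonneg (pow_nonneg (norm_nonneg _) _)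
    (zpow_nonneg (norm_nonneg _) _)
  -- reduce to a lintegral
  have hint : IntegrableOn f S volume ↔ (∫⁻ z in S, ENNReal.ofReal (f z)) < ⊤ := by
    rw [IntegrableOn, ← hasFiniteIntegral_iff_ofReal (ae_of_all _ hf0)]
    exact ⟨fun h => h.2, fun h => ⟨hfm.aestronglyMeasurable, h⟩⟩
  rw [hint]
  -- the integrand as a product of `ofReal`s
  set g : ℂ × ℂ → ENNReal :=
    fun z => ENNReal.ofReal (‖z.1‖ ^ k) * ENNReal.ofReal (‖z.2‖ ^ m)
    with hgdef
  have hgm : Measurable g :=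
    (ENNReal.measurable_ofReal.comp (habs1.pow_const k)).mul
      (ENNReal.measurable_ofReal.comp ((measurable_zpow' m).comp habs2))
  -- the inner-integral comparison function
  set v : ℂ → ENNReal := fun w => ENNReal.ofReal (‖w‖ ^ m) *
      (ENNReal.ofReal (2 * π) *
        ENNReal.ofReal ((‖w‖ ^ (1 / γ)) ^ (k + 2) / ((k : ℝ) + 2))) with hvdef
  have hiff : ∀ x y : ℝ, 0 ≤ x → 0 ≤ y → (x ^ γ < y ↔ x < y ^ (1 / γ)) := by
    intro x y hx hy
    rw [one_div]
    conv_lhs => rw [← Real.rpow_inv_rpow hy hγ.ne']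
    exact Real.rpow_lt_rpow_iff hx (Real.rpow_nonneg hy _) hγ
  have inner : ∀ z₂ : ℂ, (∫⁻ z₁ : ℂ, S.indicator g (z₁, z₂))
      = ({w : ℂ | ‖w‖ < 1}).indicator v z₂ := by
    intro z₂
    by_cases h1 : ‖z₂‖ < 1
    · set R : ℝ := ‖z₂‖ ^ (1 / γ) with hRdef
      have hR0 : 0 ≤ R := Real.rpow_nonneg (norm_nonneg _) _
      have hmem : ∀ z₁ : ℂ, ((z₁, z₂) ∈ S) ↔ ‖z₁‖ < R := by
        intro z₁
        simp only [hSdef, Set.mem_setOf_eq, h1, and_true]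
        exact hiff _ _ (norm_nonneg _) (norm_nonneg _)
      have hpt : ∀ z₁ : ℂ, S.indicator g (z₁, z₂)
          = ({w : ℂ | ‖w‖ < R}).indicator
              (fun w => ENNReal.ofReal (‖w‖ ^ k)) z₁
            * ENNReal.ofReal (‖z₂‖ ^ m) := by
        intro z₁
        by_cases h : ‖z₁‖ < R
        · rw [Set.indicator_of_mem ((hmem z₁).mpr h),
            Set.indicator_of_mem (show z₁ ∈ {w : ℂ | ‖w‖ < R} from h)]
        · rw [Set.indicator_of_notMem (fun hc => h ((hmem z₁).mp hc)),
            Set.indicator_of_notMem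
              (show z₁ ∉ {w : ℂ | ‖w‖ < R} from h), zero_mul]
      have hballm : MeasurableSet {w : ℂ | ‖w‖ < R} :=
        (isOpen_lt continuous_norm continuous_const).measurableSet
      calc (∫⁻ z₁ : ℂ, S.indicator g (z₁, z₂))
          = ∫⁻ z₁ : ℂ, ({w : ℂ | ‖w‖ < R}).indicator
              (fun w => ENNReal.ofReal (‖w‖ ^ k)) z₁
            * ENNReal.ofReal (‖z₂‖ ^ m) := lintegral_congr hpt
        _ = (∫⁻ z₁ in {w : ℂ | ‖w‖ < R}, ENNReal.ofReal (‖z₁‖ ^ k))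
            * ENNReal.ofReal (‖z₂‖ ^ m) := by
            have hb : Measurable fun w : ℂ => ENNReal.ofReal (‖w‖ ^ k) :=
              ENNReal.measurable_ofReal.comp (continuous_norm.measurable.pow_const k)
            rw [lintegral_mul_const _ (hb.indicator hballm), lintegral_indicator hballm _]
        _ = ({w : ℂ | ‖w‖ < 1}).indicator v z₂ := by
            rw [lintegral_ball_pow' k R hR0,
              Set.indicator_of_mem (show z₂ ∈ {w : ℂ | ‖w‖ < 1} from h1)]
            simp only [hvdef]
            ring
    · have hz : ∀ z₁ : ℂ, S.indicator g (z₁, z₂) = 0 := fun z₁ =>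
        Set.indicator_of_notMem (fun hc => h1 hc.2) _
      rw [Set.indicator_of_notMem (show z₂ ∉ {w : ℂ | ‖w‖ < 1} from h1)]
      simp [hz]
  -- pointwise simplification of v
  set D : ENNReal := ENNReal.ofReal (2 * π) * ENNReal.ofReal (1 / ((k : ℝ) + 2)) with hDdef
  set v' : ℂ → ENNReal := fun w => ENNReal.ofReal (‖w‖ ^ m) *
      ENNReal.ofReal (‖w‖ ^ (((k : ℝ) + 2) / γ)) with hv'def
  have hv : ∀ w : ℂ, v w = D * v' w := by
    intro w
    have e1 : (‖w‖ ^ (1 / γ)) ^ (k + 2) = ‖w‖ ^ (((k : ℝ) + 2) / γ) := by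
      rw [← Real.rpow_natCast (‖w‖ ^ (1 / γ)) (k + 2),
        ← Real.rpow_mul (norm_nonneg _)]
      congr 1
      push_cast
      ring
    simp only [hvdef, hv'def, hDdef]
    rw [e1, div_eq_mul_one_div,
      ENNReal.ofReal_mul (Real.rpow_nonneg (norm_nonneg _) _)]
    ring
  have hv'm : Measurable v' :=
    (ENNReal.measurable_ofReal.comp
        ((measurable_zpow' m).comp continuous_norm.measurable)).mul
      (ENNReal.measurable_ofReal.comp
        (continuous_norm.measurable.pow_const (((k : ℝ) + 2) / γ)))
  -- the radial profile of v'
  set F : ℝ → ENNReal := (Iio (1 : ℝ)).indicator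
      (fun r => ENNReal.ofReal (r ^ m) * ENNReal.ofReal (r ^ (((k : ℝ) + 2) / γ))) with hFdef
  have hFm : Measurable F :=
    (((ENNReal.measurable_ofReal.comp (measurable_zpow' m))).mul
      (ENNReal.measurable_ofReal.comp
        ((measurable_id (α := ℝ)).pow_const (((k : ℝ) + 2) / γ)))).indicator measurableSet_Iio
  -- main computation
  have key : (∫⁻ z in S, ENNReal.ofReal (f z))
      = D * (ENNReal.ofReal (2 * π) * ∫⁻ r in Ioo (0 : ℝ) 1, ENNReal.ofReal (r ^ t)) := by
    calc (∫⁻ z in S, ENNReal.ofReal (f z))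
        = ∫⁻ z in S, g z := by
          refine setLIntegral_congr_fun hSm (fun z _ => ?_)
          rw [hgdef, hfdef, ENNReal.ofReal_mul (pow_nonneg (norm_nonneg _) _)]
      _ = ∫⁻ z : ℂ × ℂ, S.indicator g z := (lintegral_indicator hSm g).symm
      _ = ∫⁻ z₂ : ℂ, ∫⁻ z₁ : ℂ, S.indicator g (z₁, z₂) := by
          rw [Measure.volume_eq_prod, lintegral_prod_symm _ (hgm.indicator hSm).aemeasurable]
      _ = ∫⁻ z₂ : ℂ, ({w : ℂ | ‖w‖ < 1}).indicator v z₂ := lintegral_congr inner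
      _ = ∫⁻ w in {w : ℂ | ‖w‖ < 1}, v w := lintegral_indicator h1m v
      _ = D * ∫⁻ w in {w : ℂ | ‖w‖ < 1}, v' w := by
          rw [← lintegral_const_mul D hv'm]
          exact setLIntegral_congr_fun h1m (fun w _ => hv w)
      _ = D * ∫⁻ z : ℂ, F (‖z‖) := by
          congr 1
          rw [← lintegral_indicator h1m _]
          refine lintegral_congr fun w => ?_
          by_cases h : ‖w‖ < 1 <;>
            simp [F, v', indicator, h]
      _ = D * (ENNReal.ofReal (2 * π) * ∫⁻ r in Ioi (0 : ℝ), ENNReal.ofReal r * F r) := by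
          rw [lintegral_radial' F hFm]
      _ = D * (ENNReal.ofReal (2 * π) * ∫⁻ r in Ioo (0 : ℝ) 1, ENNReal.ofReal (r ^ t)) := by
          congr 1
          have step1 : ∀ r : ℝ, ENNReal.ofReal r * F r
              = (Iio (1 : ℝ)).indicator
                  (fun r => ENNReal.ofReal r *
                    (ENNReal.ofReal (r ^ m) * ENNReal.ofReal (r ^ (((k : ℝ) + 2) / γ)))) r := by
            intro r
            by_cases h : r < 1 <;> simp [F, indicator, h]
          simp_rw [step1]
          rw [lintegral_indicator measurableSet_Iio _,
            Measure.restrict_restrict measurableSet_Iio, Set.Iio_inter_Ioi]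
          congr 1
          refine setLIntegral_congr_fun measurableSet_Ioo
            (fun r hr => ?_)
          rw [← ENNReal.ofReal_mul (zpow_nonneg hr.1.le m),
            ← ENNReal.ofReal_mul hr.1.le]
          congr 1
          rw [← Real.rpow_intCast r m, htdef, Real.rpow_add hr.1, Real.rpow_add hr.1,
            Real.rpow_one]
          ring
  rw [key]
  have hD0 : D ≠ 0 := by
    rw [hDdef]
    refine mul_ne_zero ?_ ?_ <;>
      exact (ENNReal.ofReal_pos.mpr (by positivity)).ne'
  have hDt : D ≠ ⊤ := by
    rw [hDdef]
    exact ENNReal.mul_ne_top ENNReal.ofReal_ne_top ENNReal.ofReal_ne_top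
  rw [ennreal_const_mul_lt_top_iff hD0 hDt,
    ennreal_const_mul_lt_top_iff (ENNReal.ofReal_pos.mpr (by positivity)).ne'
      ENNReal.ofReal_ne_top]
  -- finiteness of the one-dimensional integral
  have hJ : (∫⁻ r in Ioo (0 : ℝ) 1, ENNReal.ofReal (r ^ t)) < ⊤ ↔ (-1 : ℝ) < t := by
    rw [← intervalIntegral.integrableOn_Ioo_rpow_iff (zero_lt_one (α := ℝ))]
    have hmeas : AEStronglyMeasurable (fun x : ℝ => x ^ t)
        (volume.restrict (Ioo (0 : ℝ) 1)) :=
      ((measurable_id (α := ℝ)).pow_const t).aestronglyMeasurable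
    have h0' : 0 ≤ᵐ[volume.restrict (Ioo (0 : ℝ) 1)] fun x : ℝ => x ^ t := by
      filter_upwards [ae_restrict_mem measurableSet_Ioo] with x hx
      exact Real.rpow_nonneg hx.1.le _
    constructor
    · intro h
      exact ⟨hmeas, (hasFiniteIntegral_iff_ofReal h0').2 h⟩
    · intro h
      exact (hasFiniteIntegral_iff_ofReal h0').1 h.2
  rw [hJ]
  -- final arithmetic
  have hcast : (t : ℝ) = 1 + 2 * (α₂ : ℝ) + (2 * (α₁ : ℝ) + 2) / γ := by
    rw [htdef, hk, hm]; push_cast; ring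
  rw [hcast]
  constructor
  · intro h
    have h2 : (-2 - 2 * (α₂ : ℝ)) * γ < 2 * (α₁ : ℝ) + 2 :=
      (lt_div_iff₀ hγ).mp (by linarith)
    show (-1 : ℝ) < (α₁ : ℝ) + γ * ((α₂ : ℝ) + 1)
    nlinarith
  · intro h
    have h' : (-1 : ℝ) < (α₁ : ℝ) + γ * ((α₂ : ℝ) + 1) := h
    have h2 : (-2 - 2 * (α₂ : ℝ)) * γ < 2 * (α₁ : ℝ) + 2 := by nlinarith
    have := (lt_div_iff₀ hγ).mpr h2
    linarith

/-- Lemma: the monomial `z₁^{α₁} z₂^{α₂}` is square-integrable on `ℍ_γ` iff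
`α₁ + γ(α₂+1) > -1`. -/
theorem monomial_memL2_iff (γ : ℝ) (hγ : 0 < γ) (α₁ : ℕ) (α₂ : ℤ) :
    IntegrableOn
        (fun z : ℂ × ℂ => ‖z.1‖ ^ (2 * α₁) * ‖z.2‖ ^ (2 * α₂))
        (Hartogs γ) volume
      ↔ (α₁ : ℝ) + γ * ((α₂ : ℝ) + 1) > -1 :=
  monomial_aux γ hγ α₁ α₂ (Hartogs γ) rfl

end
end

section
/- Let γ > 0 and let α = (α₁, α₂) with α₁ a nonnegative integer, α₂ an integer, and α₁ + γ(α₂ + 1) > −1. Then ∫_{ℍ_γ} |z₁|^{2α₁} |z₂|^{2α₂} dV(z) = γπ² / ((α₁+1)² + γ(α₁+1)(α₂+1)). -/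
open MeasureTheory Complex Real

noncomputable section

lemma measurable_zpow_real (m : ℤ) : Measurable fun x : ℝ => x ^ m := by
  cases m with
  | ofNat k => simpa using measurable_id.pow_const k
  | negSucc k => simp only [zpow_negSucc]; exact ((measurable_id (α := ℝ)).pow_const (k+1)).inv

lemma integral_complex_radial (g : ℝ → ℝ) :
    ∫ z : ℂ, g (‖z‖) = (2 * π) * ∫ r in Set.Ioi (0:ℝ), r * g r := by
  rw [← Complex.integral_comp_polarCoord_symm (fun z => g (‖z‖))]
  have heq : Set.EqOn (fun p : ℝ × ℝ => p.1 • g (‖(Complex.polarCoord.symm p)‖))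
      (fun p : ℝ × ℝ => (fun r => r * g r) p.1 * (fun _ : ℝ => (1:ℝ)) p.2) polarCoord.target := by
    intro p hp
    simp only [Complex.norm_polarCoord_symm, smul_eq_mul, mul_one]
    rw [abs_of_pos hp.1]
  rw [setIntegral_congr_fun polarCoord.open_target.measurableSet heq, polarCoord_target,
    Measure.volume_eq_prod,
    setIntegral_prod_mul (fun r : ℝ => r * g r) (fun _ : ℝ => (1:ℝ)) (Set.Ioi 0) (Set.Ioo (-π) π)]
  have : ∫ y in Set.Ioo (-π) π, (1:ℝ) = 2 * π := by
    simp [Real.volume_Ioo]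
    rw [max_eq_left (by positivity)]
    ring
  rw [this]; ring

lemma integrable_complex_radial {g : ℝ → ℝ} (hg : Measurable g)
    (h1 : IntegrableOn (fun r => r * g r) (Set.Ioi (0:ℝ))) :
    Integrable (fun z : ℂ => g (‖z‖)) := by
  have _hg := hg
  have habs : ∀ p : ℝ × ℝ, ‖(Complex.measurableEquivRealProd.symm p)‖
      = Real.sqrt (p.1 ^ 2 + p.2 ^ 2) := by
    intro p
    simp [Complex.norm_def, Complex.normSq_apply, Complex.measurableEquivRealProd,
      Complex.equivRealProd, sq]
  set h : ℝ × ℝ → ℝ := fun p => g (Real.sqrt (p.1 ^ 2 + p.2 ^ 2)) with hh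
  have h0 : Integrable h := by
    set B : ℝ × ℝ → ℝ × ℝ →L[ℝ] ℝ × ℝ := fun p =>
      LinearMap.toContinuousLinearMap (Matrix.toLin (Module.Basis.finTwoProd ℝ) (Module.Basis.finTwoProd ℝ)
        !![Real.cos p.2, -p.1 * Real.sin p.2; Real.sin p.2, p.1 * Real.cos p.2]) with hB
    have B_det : ∀ p, (B p).det = p.1 := by
      intro p
      conv_rhs => rw [← one_mul p.1, ← Real.cos_sq_add_sin_sq p.2]
      simp only [hB, neg_mul, LinearMap.det_toContinuousLinearMap, LinearMap.det_toLin,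
        Matrix.det_fin_two_of, sub_neg_eq_add]
      ring
    have key : IntegrableOn h polarCoord.source := by
      rw [← polarCoord.symm_image_target_eq_source]
      rw [integrableOn_image_iff_integrableOn_abs_det_fderiv_smul volume
        polarCoord.open_target.measurableSet
        (fun p _ => (hasFDerivAt_polarCoord_symm p).hasFDerivWithinAt)
        polarCoord.symm.injOn h]
      show Integrable (fun p => |(B p).det| • h (polarCoord.symm p))
        (volume.restrict polarCoord.target)
      have heq : Set.EqOn (fun p : ℝ × ℝ => |(B p).det| • h (polarCoord.symm p))
          (fun p : ℝ × ℝ => (fun r => r * g r) p.1 * (fun _ : ℝ => (1:ℝ)) p.2)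
          polarCoord.target := by
        intro p hp
        have h2 : (p.1 * Real.cos p.2) ^ 2 + (p.1 * Real.sin p.2) ^ 2 = p.1 ^ 2 := by
          rw [mul_pow, mul_pow, ← mul_add, Real.cos_sq_add_sin_sq, mul_one]
        simp only [B_det, smul_eq_mul, mul_one, hh, polarCoord_symm_apply]
        rw [h2, Real.sqrt_sq_eq_abs, abs_of_pos hp.1]
      apply (integrable_congr (ae_restrict_of_forall_mem polarCoord.open_target.measurableSet
        heq)).mpr
      rw [polarCoord_target]
      have hpm : Integrable (fun p : ℝ × ℝ => (fun r => r * g r) p.1 * (fun _ : ℝ => (1:ℝ)) p.2)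
          ((volume.restrict (Set.Ioi (0:ℝ))).prod (volume.restrict (Set.Ioo (-π) π))) :=
        Integrable.mul_prod h1
          ((integrableOn_const_iff (C := (1:ℝ))).mpr (Or.inr (by simp [Real.volume_Ioo])))
      rwa [Measure.prod_restrict, ← Measure.volume_eq_prod] at hpm
    rwa [IntegrableOn, Measure.restrict_congr_set polarCoord_source_ae_eq_univ,
      Measure.restrict_univ] at key
  have := ((MeasurePreserving.symm Complex.measurableEquivRealProd
    Complex.volume_preserving_equiv_real_prod).integrable_comp_emb
    Complex.measurableEquivRealProd.symm.measurableEmbedding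
    (g := fun z : ℂ => g (‖z‖))).mp ?_
  · exact this
  · have he : (fun z : ℂ => g (‖z‖)) ∘ Complex.measurableEquivRealProd.symm = h := by
      funext p; exact congrArg g (habs p)
    rwa [he]

lemma integrableOn_ball_pow (n : ℕ) (R : ℝ) :
    IntegrableOn (fun z : ℂ => ‖z‖ ^ n) (Metric.ball (0:ℂ) R) :=
  (((continuous_norm.pow n).continuousOn).integrableOn_compact
      (isCompact_closedBall (0:ℂ) R)).mono_set Metric.ball_subset_closedBall

lemma integral_ball_pow (n : ℕ) {R : ℝ} (hR : 0 ≤ R) :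
    ∫ z in Metric.ball (0:ℂ) R, ‖z‖ ^ n
      = (2 * π) * (R ^ (n + 2) / ((n : ℝ) + 2)) := by
  rw [← integral_indicator measurableSet_ball]
  have h1 : ∀ z : ℂ, (Metric.ball (0:ℂ) R).indicator (fun z => ‖z‖ ^ n) z
      = (fun t : ℝ => Set.indicator (Set.Iio R) (fun t => t ^ n) t) (‖z‖) := by
    intro z
    by_cases hz : ‖z‖ < R <;>
      simp [Set.indicator_apply, Metric.mem_ball, Complex.dist_eq, hz]
  simp_rw [h1]
  rw [integral_complex_radial]
  have h2 : (fun r : ℝ => r * Set.indicator (Set.Iio R) (fun t => t ^ n) r)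
      = Set.indicator (Set.Iio R) (fun t => t ^ (n + 1)) := by
    funext r
    by_cases hr : r ∈ Set.Iio R
    · rw [Set.indicator_of_mem hr, Set.indicator_of_mem hr, pow_succ']
    · rw [Set.indicator_of_notMem hr, Set.indicator_of_notMem hr, mul_zero]
  rw [h2, setIntegral_indicator measurableSet_Iio, Set.Ioi_inter_Iio,
    ← integral_Ioc_eq_integral_Ioo, ← intervalIntegral.integral_of_le hR, integral_pow]
  rw [zero_pow (by omega), sub_zero]
  push_cast
  ring

/-- Lemma: the squared `L²` norm of the monomial `z₁^{α₁} z₂^{α₂}` on `ℍ_γ` equals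
`γπ² / ((α₁+1)² + γ(α₁+1)(α₂+1))`. -/
theorem monomial_L2_norm_sq (γ : ℝ) (hγ : 0 < γ) (α₁ : ℕ) (α₂ : ℤ)
    (h : (α₁ : ℝ) + γ * ((α₂ : ℝ) + 1) > -1) :
    ∫ z in Hartogs γ, ‖z.1‖ ^ (2 * α₁) * ‖z.2‖ ^ (2 * α₂)
      = γ * π ^ 2 / (((α₁ : ℝ) + 1) ^ 2 + γ * ((α₁ : ℝ) + 1) * ((α₂ : ℝ) + 1)) := by
  have hπ := Real.pi_pos
  have hγ' : γ ≠ 0 := ne_of_gt hγ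
  have hkey : 0 < (α₁ : ℝ) + 1 + γ * ((α₂ : ℝ) + 1) := by linarith
  set s1 : ℝ := 1 + 2*(α₂:ℝ) + (2*(α₁:ℝ)+2)/γ with hs1def
  have hs1e : s1 + 1 = 2 * ((α₁:ℝ) + 1 + γ*((α₂:ℝ)+1)) / γ := by
    rw [hs1def]; field_simp; ring
  have hs1pos : 0 < s1 + 1 := by rw [hs1e]; positivity
  have hs1' : (-1:ℝ) < s1 := by linarith
  have hSm : MeasurableSet (Hartogs γ) := by
    have h1 : Measurable fun z : ℂ × ℂ => ‖z.1‖ ^ γ :=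
      ((Real.continuous_rpow_const hγ.le).comp
        (continuous_norm.comp continuous_fst)).measurable
    have h2 : Measurable fun z : ℂ × ℂ => ‖z.2‖ :=
      continuous_norm.measurable.comp measurable_snd
    show MeasurableSet {z : ℂ × ℂ | ‖z.1‖ ^ γ < ‖z.2‖ ∧ ‖z.2‖ < 1}
    simp only [Set.setOf_and]
    exact (measurableSet_lt h1 h2).inter (measurableSet_lt h2 measurable_const)
  have hball : ∀ z₂ : ℂ, {w : ℂ | ‖w‖ ^ γ < ‖z₂‖}
      = Metric.ball (0:ℂ) (‖z₂‖ ^ (1/γ)) := by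
    intro z₂
    rcases eq_or_lt_of_le (norm_nonneg z₂) with ht | ht
    · have hz : (0:ℝ) ^ (1/γ) = 0 := Real.zero_rpow (by positivity)
      ext w
      simp only [Set.mem_setOf_eq, Metric.mem_ball, Complex.dist_eq, sub_zero, ← ht, hz]
      constructor
      · intro hw; exact absurd hw (not_lt.mpr (Real.rpow_nonneg (norm_nonneg w) γ))
      · intro hw; exact absurd hw (not_lt.mpr (norm_nonneg w))
    · ext w
      simp only [Set.mem_setOf_eq, Metric.mem_ball, Complex.dist_eq, sub_zero, one_div]
      exact (Real.lt_rpow_inv_iff_of_pos (norm_nonneg w) (le_of_lt ht) hγ).symm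
  set f₂ : ℂ → ℝ := fun w => Set.indicator {w : ℂ | ‖w‖ < 1}
      (fun w => ‖w‖ ^ (2*α₂)) w with hf₂
  set g₁ : ℂ → ℂ → ℝ := fun z₂ z₁ => Set.indicator {w : ℂ | ‖w‖ ^ γ < ‖z₂‖}
      (fun w => ‖w‖ ^ (2*α₁)) z₁ with hg₁
  set G : ℂ × ℂ → ℝ := fun z => g₁ z.2 z.1 * f₂ z.2 with hG
  have hfact : ∀ z : ℂ × ℂ, (Hartogs γ).indicator
      (fun z : ℂ × ℂ => ‖z.1‖ ^ (2*α₁) * ‖z.2‖ ^ (2*α₂)) z = G z := by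
    intro z
    by_cases h1 : ‖z.1‖ ^ γ < ‖z.2‖ <;>
      by_cases h2 : ‖z.2‖ < 1 <;>
        simp [hG, hg₁, hf₂, Hartogs, Set.indicator_apply, h1, h2]
  have hGm : Measurable G := by
    have hGe : G = (Hartogs γ).indicator
        (fun z : ℂ × ℂ => ‖z.1‖ ^ (2*α₁) * ‖z.2‖ ^ (2*α₂)) :=
      (funext hfact).symm
    rw [hGe]
    exact Measurable.indicator
      (((continuous_norm.measurable.comp measurable_fst).pow_const _).mul
        ((measurable_zpow_real _).comp (continuous_norm.measurable.comp measurable_snd)))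
      hSm
  have hGnn : ∀ z, 0 ≤ G z := by
    intro z
    apply mul_nonneg
    · exact Set.indicator_nonneg (fun w _ => pow_nonneg (norm_nonneg _) _) _
    · exact Set.indicator_nonneg (fun w _ => zpow_nonneg (norm_nonneg _) _) _
  have hsec : ∀ z₂ : ℂ, Integrable (fun z₁ => G (z₁, z₂)) := by
    intro z₂
    show Integrable fun z₁ => g₁ z₂ z₁ * f₂ z₂
    apply Integrable.mul_const
    rw [hg₁]
    simp only []
    rw [hball z₂]
    exact (integrableOn_ball_pow (2*α₁) _).integrable_indicator measurableSet_ball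
  have hval : ∀ z₂ : ℂ, (∫ z₁, G (z₁, z₂))
      = (2*π) * ((‖z₂‖ ^ (1/γ)) ^ (2*α₁ + 2) / (((2*α₁ : ℕ) : ℝ) + 2)) * f₂ z₂ := by
    intro z₂
    show (∫ z₁, g₁ z₂ z₁ * f₂ z₂) = _
    rw [integral_mul_const]
    congr 1
    show (∫ z₁, Set.indicator {w : ℂ | ‖w‖ ^ γ < ‖z₂‖}
      (fun w => ‖w‖ ^ (2*α₁)) z₁) = _
    rw [hball z₂, integral_indicator measurableSet_ball,
      integral_ball_pow (2*α₁) (Real.rpow_nonneg (norm_nonneg z₂) _)]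
  set C : ℝ := (2*π) / (((2*α₁ : ℕ) : ℝ) + 2) with hC
  set g0 : ℝ → ℝ := fun t => (2*π) * ((t ^ (1/γ)) ^ (2*α₁ + 2) / (((2*α₁ : ℕ) : ℝ) + 2)) *
      Set.indicator (Set.Iio (1:ℝ)) (fun t => t ^ (2*α₂)) t with hg0
  have hrad : ∀ z₂ : ℂ, (∫ z₁, G (z₁, z₂)) = g0 (‖z₂‖) := by
    intro z₂
    rw [hval z₂, hg0]
    simp only [hf₂]
    by_cases h2 : ‖z₂‖ < 1 <;>
      simp [Set.indicator_apply, Set.mem_setOf_eq, Set.mem_Iio, h2]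
  have hg0m : Measurable g0 := by
    rw [hg0]
    apply Measurable.mul
    · exact measurable_const.mul ((((Real.continuous_rpow_const (by positivity)).measurable).pow_const _).div_const _)
    · exact Measurable.indicator (measurable_zpow_real _) measurableSet_Iio
  have e1 : Set.EqOn (fun r => r * g0 r)
      (Set.indicator (Set.Ioo (0:ℝ) 1) (fun r => C * r ^ s1)) (Set.Ioi (0:ℝ)) := by
    intro r hr
    have hr0 : (0:ℝ) < r := hr
    by_cases h2 : r < 1
    · rw [Set.indicator_of_mem (Set.mem_Ioo.mpr ⟨hr0, h2⟩), hg0, hC]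
      simp only []
      rw [Set.indicator_of_mem (Set.mem_Iio.mpr h2)]
      have e2 : (r ^ (1/γ)) ^ (2*α₁ + 2) = r ^ ((2*(α₁:ℝ)+2)/γ) := by
        rw [← Real.rpow_natCast (r ^ (1/γ)) (2*α₁ + 2), ← Real.rpow_mul hr0.le]
        congr 1
        push_cast
        ring
      have e3 : r ^ (2*α₂) = r ^ ((2:ℝ)*(α₂:ℝ)) := by
        rw [← Real.rpow_intCast r (2*α₂)]
        push_cast
        ring_nf
      have e4 : r ^ s1 = r * r ^ ((2:ℝ)*(α₂:ℝ)) * r ^ ((2*(α₁:ℝ)+2)/γ) := by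
        rw [hs1def, Real.rpow_add hr0, Real.rpow_add hr0, Real.rpow_one]
      rw [e2, e3, e4]
      ring
    · rw [Set.indicator_of_notMem (by simp [h2]), hg0]
      simp only []
      rw [Set.indicator_of_notMem (by simpa using not_lt.mp h2)]
      ring
  have hg0int : IntegrableOn (fun r => r * g0 r) (Set.Ioi (0:ℝ)) := by
    have hb : IntegrableOn (fun r : ℝ => C * r ^ s1) (Set.Ioo (0:ℝ) 1) := by
      have hii := intervalIntegral.intervalIntegrable_rpow' (a := 0) (b := 1) hs1'
      rw [intervalIntegrable_iff_integrableOn_Ioo_of_le zero_le_one] at hii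
      exact hii.const_mul C
    exact ((hb.integrable_indicator measurableSet_Ioo).integrableOn).congr_fun
      e1.symm measurableSet_Ioi
  have hcond2 : Integrable (fun z₂ : ℂ => g0 (‖z₂‖)) :=
    integrable_complex_radial hg0m hg0int
  have hGint : Integrable G ((volume : Measure ℂ).prod volume) := by
    refine (integrable_prod_iff' hGm.aestronglyMeasurable).2 ⟨ae_of_all _ hsec, ?_⟩
    have hnorm : ∀ z₂ : ℂ, (∫ z₁, ‖G (z₁, z₂)‖) = g0 (‖z₂‖) := by
      intro z₂
      rw [← hrad z₂]
      exact integral_congr_ae (ae_of_all _ fun z₁ => Real.norm_of_nonneg (hGnn _))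
    exact hcond2.congr (ae_of_all _ fun z₂ => (hnorm z₂).symm)
  have hIoo1 : ∫ r in Set.Ioo (0:ℝ) 1, r ^ s1 = 1/(s1+1) := by
    rw [← integral_Ioc_eq_integral_Ioo, ← intervalIntegral.integral_of_le zero_le_one,
      integral_rpow (Or.inl hs1'), Real.one_rpow, Real.zero_rpow (ne_of_gt hs1pos), sub_zero]
  calc ∫ z in Hartogs γ, ‖z.1‖ ^ (2 * α₁) * ‖z.2‖ ^ (2 * α₂)
      = ∫ z : ℂ × ℂ, (Hartogs γ).indicator
          (fun z : ℂ × ℂ => ‖z.1‖ ^ (2*α₁) * ‖z.2‖ ^ (2*α₂)) z :=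
        (integral_indicator hSm).symm
    _ = ∫ z : ℂ × ℂ, G z := by simp_rw [hfact]
    _ = ∫ z₂ : ℂ, ∫ z₁ : ℂ, G (z₁, z₂) := by
        rw [Measure.volume_eq_prod]; exact integral_prod_symm G hGint
    _ = ∫ z₂ : ℂ, g0 (‖z₂‖) := by simp_rw [hrad]
    _ = (2*π) * ∫ r in Set.Ioi (0:ℝ), r * g0 r := integral_complex_radial g0
    _ = (2*π) * ∫ r in Set.Ioi (0:ℝ),
          Set.indicator (Set.Ioo (0:ℝ) 1) (fun r => C * r ^ s1) r := by
        rw [setIntegral_congr_fun measurableSet_Ioi e1]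
    _ = (2*π) * ∫ r in Set.Ioo (0:ℝ) 1, C * r ^ s1 := by
        rw [setIntegral_indicator measurableSet_Ioo,
          Set.inter_eq_self_of_subset_right (fun x hx => hx.1)]
    _ = (2*π) * (C * (1/(s1+1))) := by rw [integral_const_mul, hIoo1]
    _ = γ * π ^ 2 / (((α₁ : ℝ) + 1) ^ 2 + γ * ((α₁ : ℝ) + 1) * ((α₂ : ℝ) + 1)) := by
        have hd : ((α₁ : ℝ) + 1) ^ 2 + γ * ((α₁ : ℝ) + 1) * ((α₂ : ℝ) + 1)
            = ((α₁:ℝ) + 1) * ((α₁:ℝ) + 1 + γ * ((α₂:ℝ) + 1)) := by ring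
        have hα : (0:ℝ) < (α₁:ℝ) + 1 := by positivity
        rw [hs1e, hC, hd]
        have hc1 : (((2*α₁ : ℕ) : ℝ) + 2) = 2 * ((α₁:ℝ) + 1) := by push_cast; ring
        rw [hc1]
        field_simp

end
end

section
/- Let γ > 0, let 0 < p < ∞, let α₁ be a nonnegative integer and α₂ an integer. Then ∫_{ℍ_γ} |z₁|^{pα₁} |z₂|^{pα₂} dV(z) < ∞ (i.e. z₁^{α₁} z₂^{α₂} ∈ A^p(ℍ_γ)) if and only if α₂ > −α₁/γ − 2/p − 2/(γp). -/
open MeasureTheory Complex Real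
open Set Metric intervalIntegral
open scoped ENNReal NNReal

noncomputable section

/-- Auxiliary: value of `∫⁻ r in Ioo 0 R, r ^ s` for `s > -1`. -/
lemma aux_lintegral_Ioo_rpow {s R : ℝ} (hs : -1 < s) (hR : 0 < R) :
    ∫⁻ r in Ioo (0:ℝ) R, ENNReal.ofReal (r ^ s) =
      ENNReal.ofReal (R ^ (s + 1) / (s + 1)) := by
  have hint : IntegrableOn (fun r : ℝ => r ^ s) (Ioo 0 R) :=
    (integrableOn_Ioo_rpow_iff hR).2 hs
  rw [← ofReal_integral_eq_lintegral_ofReal hint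
    (by filter_upwards [ae_restrict_mem measurableSet_Ioo] with r hr
        exact Real.rpow_nonneg hr.1.le s)]
  congr 1
  rw [← integral_Ioc_eq_integral_Ioo, ← intervalIntegral.integral_of_le hR.le,
    integral_rpow (Or.inl hs)]
  rw [Real.zero_rpow (by linarith), sub_zero]

/-- Auxiliary: divergence of `∫⁻ r in Ioo 0 1, r ^ s` for `s ≤ -1`. -/
lemma aux_lintegral_Ioo_rpow_top {s : ℝ} (hs : s ≤ -1) :
    ∫⁻ r in Ioo (0:ℝ) (1:ℝ), ENNReal.ofReal (r ^ s) = ⊤ := by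
  by_contra h
  have hfin : ∫⁻ r in Ioo (0:ℝ) 1, ENNReal.ofReal (r ^ s) < ⊤ := lt_top_iff_ne_top.2 h
  have : IntegrableOn (fun r : ℝ => r ^ s) (Ioo 0 1) := by
    refine ⟨(measurable_id.pow_const s).aestronglyMeasurable, ?_⟩
    rw [hasFiniteIntegral_iff_ofReal
      (by filter_upwards [ae_restrict_mem measurableSet_Ioo] with r hr
          exact Real.rpow_nonneg hr.1.le s)]
    exact hfin
  rw [integrableOn_Ioo_rpow_iff zero_lt_one] at this
  linarith

/-- Auxiliary: polar-type formula for lower integrals of radial functions on `ℂ`. -/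
lemma aux_lintegral_radial_complex (g : ℝ → ℝ≥0∞) (hg : Measurable g) :
    ∫⁻ z : ℂ, g ‖z‖ = (volume : Measure ℂ).toSphere univ *
      ∫⁻ r in Ioi (0:ℝ), ENNReal.ofReal r * g r := by
  have h1 : ∫⁻ z : ℂ, g ‖z‖ = ∫⁻ z in ({(0:ℂ)}ᶜ), g ‖z‖ := by
    rw [MeasureTheory.restrict_compl_singleton]
  have h2 : ∫⁻ z in ({(0:ℂ)}ᶜ), g ‖z‖ =
      ∫⁻ x : ({(0:ℂ)}ᶜ : Set ℂ), g ‖(x : ℂ)‖ ∂((volume : Measure ℂ).comap (↑)) :=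
    (lintegral_subtype_comap (measurableSet_singleton _).compl _).symm
  have hmp := (Measure.measurePreserving_homeomorphUnitSphereProd (volume : Measure ℂ))
  have hdim : Module.finrank ℝ ℂ - 1 = 1 := by rw [Complex.finrank_real_complex]
  rw [hdim] at hmp
  have h3 : ∫⁻ x : ({(0:ℂ)}ᶜ : Set ℂ), g ‖(x : ℂ)‖ ∂((volume : Measure ℂ).comap (↑)) =
      ∫⁻ q : sphere (0:ℂ) 1 × Ioi (0:ℝ), g q.2
        ∂(((volume : Measure ℂ).toSphere).prod (Measure.volumeIoiPow 1)) := by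
    rw [← hmp.lintegral_comp_emb (Homeomorph.measurableEmbedding _)
      (fun q : sphere (0:ℂ) 1 × Ioi (0:ℝ) => g q.2)]
    simp
  have h4 : ∫⁻ q : sphere (0:ℂ) 1 × Ioi (0:ℝ), g q.2
        ∂(((volume : Measure ℂ).toSphere).prod (Measure.volumeIoiPow 1)) =
      (volume : Measure ℂ).toSphere univ * ∫⁻ r : Ioi (0:ℝ), g r ∂(Measure.volumeIoiPow 1) := by
    rw [MeasureTheory.lintegral_prod (fun q : sphere (0:ℂ) 1 × Ioi (0:ℝ) => g ↑q.2)
      (show Measurable fun q : sphere (0:ℂ) 1 × Ioi (0:ℝ) => g ↑q.2 from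
        hg.comp (measurable_subtype_coe.comp measurable_snd)).aemeasurable]
    simp [lintegral_const, mul_comm]
  have h5 : ∫⁻ r : Ioi (0:ℝ), g r ∂(Measure.volumeIoiPow 1) =
      ∫⁻ r in Ioi (0:ℝ), ENNReal.ofReal r * g r := by
    rw [Measure.volumeIoiPow, lintegral_withDensity_eq_lintegral_mul _
      (show Measurable fun r : Ioi (0:ℝ) => ENNReal.ofReal ((r:ℝ) ^ (1:ℕ)) from
        (measurable_subtype_coe.pow_const 1).ennreal_ofReal)
      (show Measurable fun r : Ioi (0:ℝ) => g ↑r from hg.comp measurable_subtype_coe)]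
    rw [← lintegral_subtype_comap measurableSet_Ioi (fun r => ENNReal.ofReal r * g r)]
    congr 1 with r
    simp [pow_one]
  rw [h1, h2, h3, h4, h5]

/-- Auxiliary: lower integral of `‖z‖ ^ s` over a ball in `ℂ`. -/
lemma aux_lintegral_ball_rpow {R s : ℝ} (hR : 0 ≤ R) (hs : 0 ≤ s) :
    ∫⁻ z : ℂ, (if ‖z‖ < R then ENNReal.ofReal (‖z‖ ^ s) else 0) =
      (volume : Measure ℂ).toSphere univ * ENNReal.ofReal (R ^ (s + 2) / (s + 2)) := by
  have hg : Measurable fun r : ℝ => if r < R then ENNReal.ofReal (r ^ s) else 0 :=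
    Measurable.ite measurableSet_Iio ((measurable_id.pow_const s).ennreal_ofReal)
      measurable_const
  rw [aux_lintegral_radial_complex _ hg]
  congr 1
  have hfun : (fun r : ℝ => ENNReal.ofReal r * (if r < R then ENNReal.ofReal (r ^ s) else 0)) =
      (Ioo (0:ℝ) R).indicator (fun r => ENNReal.ofReal (r ^ (s+1))) := by
    funext r
    by_cases h1 : 0 < r
    · by_cases h2 : r < R
      · rw [if_pos h2, indicator_of_mem (mem_Ioo.2 ⟨h1, h2⟩),
          Real.rpow_add_one h1.ne', ENNReal.ofReal_mul (Real.rpow_nonneg h1.le s), mul_comm]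
      · rw [if_neg h2, indicator_of_notMem (by simp [mem_Ioo, h2]), mul_zero]
    · rw [indicator_of_notMem (by simp [mem_Ioo, h1]),
        ENNReal.ofReal_eq_zero.2 (not_lt.1 h1), zero_mul]
  rw [show (fun r : ℝ => ENNReal.ofReal r *
      (fun r : ℝ => if r < R then ENNReal.ofReal (r ^ s) else 0) r) =
      (Ioo (0:ℝ) R).indicator (fun r => ENNReal.ofReal (r ^ (s+1))) from hfun]
  rw [lintegral_indicator measurableSet_Ioo, Measure.restrict_restrict measurableSet_Ioo,
    inter_eq_left.2 Ioo_subset_Ioi_self]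
  rcases eq_or_lt_of_le hR with h | h
  · rw [← h]
    simp [Real.zero_rpow (by linarith : s + 2 ≠ 0)]
  · rw [aux_lintegral_Ioo_rpow (by linarith) h]
    ring_nf

/-- Auxiliary: comparing `x ^ γ < c` with `x < c ^ (1/γ)`. -/
lemma aux_rpow_lt_iff_lt_rpow {x c γ : ℝ} (hx : 0 ≤ x) (hc : 0 ≤ c) (hγ : 0 < γ) :
    x ^ γ < c ↔ x < c ^ (1/γ) := by
  rcases eq_or_lt_of_le hc with h | h
  · rw [← h]
    rw [one_div, Real.zero_rpow (by positivity : γ⁻¹ ≠ 0)]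
    simp [not_lt.2 hx, not_lt.2 (Real.rpow_nonneg hx γ)]
  · rw [← Real.rpow_lt_rpow_iff hx (Real.rpow_nonneg hc _) hγ,
      ← Real.rpow_mul hc, one_div, inv_mul_cancel₀ hγ.ne', Real.rpow_one]

/-- Lemma: the monomial `z₁^{α₁} z₂^{α₂}` belongs to `A^p(ℍ_γ)` iff
`α₂ > -α₁/γ - 2/p - 2/(γp)`. -/
theorem monomial_memLp_iff (γ : ℝ) (hγ : 0 < γ) (p : ℝ) (hp : 0 < p) (α₁ : ℕ) (α₂ : ℤ) :
    IntegrableOn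
        (fun z : ℂ × ℂ =>
          ‖z.1‖ ^ (p * (α₁ : ℝ)) * ‖z.2‖ ^ (p * (α₂ : ℝ)))
        (Hartogs γ) volume
      ↔ (α₂ : ℝ) > -(α₁ : ℝ) / γ - 2 / p - 2 / (γ * p) := by
  set a : ℝ := p * (α₁ : ℝ) with ha_def
  set b : ℝ := p * (α₂ : ℝ) with hb_def
  have ha : 0 ≤ a := by positivity
  have ha2 : (0:ℝ) < a + 2 := by linarith
  have habs : ∀ w : ℂ, ‖w‖ = ‖w‖ := fun w => rfl
  have hfm : Measurable fun z : ℂ × ℂ => ‖z.1‖ ^ a * ‖z.2‖ ^ b := by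
    exact (measurable_fst.norm.pow_const a).mul (measurable_snd.norm.pow_const b)
  have hHm : MeasurableSet (Hartogs γ) := by
    have : Hartogs γ = {z : ℂ × ℂ | ‖z.1‖ ^ γ < ‖z.2‖} ∩
        {z : ℂ × ℂ | ‖z.2‖ < 1} := rfl
    rw [this]
    exact (measurableSet_lt (measurable_fst.norm.pow_const γ) measurable_snd.norm).inter
      (measurableSet_lt measurable_snd.norm measurable_const)
  -- reduce integrability to the lower integral being finite
  have key : IntegrableOn
      (fun z : ℂ × ℂ => ‖z.1‖ ^ a * ‖z.2‖ ^ b) (Hartogs γ) volume ↔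
      ∫⁻ z in Hartogs γ, ENNReal.ofReal (‖z.1‖ ^ a * ‖z.2‖ ^ b) < ⊤ := by
    have hnn : 0 ≤ᵐ[volume.restrict (Hartogs γ)]
        fun z : ℂ × ℂ => ‖z.1‖ ^ a * ‖z.2‖ ^ b :=
      Filter.Eventually.of_forall fun z => by positivity
    constructor
    · intro h; exact (hasFiniteIntegral_iff_ofReal hnn).1 h.2
    · intro h; exact ⟨hfm.aestronglyMeasurable, (hasFiniteIntegral_iff_ofReal hnn).2 h⟩
  set CC := (volume : Measure ℂ).toSphere univ with hCC
  have hCC0 : CC ≠ 0 := by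
    rw [hCC, Measure.toSphere_apply_univ]
    exact mul_ne_zero (by simp [Complex.finrank_real_complex])
      (measure_ball_pos volume (0:ℂ) one_pos).ne'
  have hCCtop : CC ≠ ⊤ := by
    rw [hCC, Measure.toSphere_apply_univ]
    exact ENNReal.mul_ne_top (ENNReal.natCast_ne_top _) measure_ball_lt_top.ne
  set t : ℝ := b + (a+2)/γ + 1 with ht_def
  -- the H profile after integrating out z₁
  set H : ℝ → ℝ≥0∞ := fun c =>
    if c < 1 then CC * ENNReal.ofReal (c ^ ((a+2)/γ) / (a+2)) * ENNReal.ofReal (c ^ b) else 0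
    with hH_def
  have hHmeas : Measurable H := by
    refine Measurable.ite measurableSet_Iio ?_ measurable_const
    exact (((((measurable_id.pow_const ((a+2)/γ))).div_const (a+2)).ennreal_ofReal.const_mul
      CC).mul ((measurable_id.pow_const b).ennreal_ofReal))
  -- main computation of the lower integral
  have hL : ∫⁻ z in Hartogs γ, ENNReal.ofReal (‖z.1‖ ^ a * ‖z.2‖ ^ b)
      = CC * (CC * ENNReal.ofReal (1/(a+2)) *
          ∫⁻ r in Ioo (0:ℝ) 1, ENNReal.ofReal (r ^ t)) := by
    rw [← lintegral_indicator hHm, Measure.volume_eq_prod,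
      lintegral_prod_symm _ (hfm.ennreal_ofReal.indicator hHm).aemeasurable]
    have hinner : ∀ z₂ : ℂ, (∫⁻ z₁ : ℂ, (Hartogs γ).indicator
        (fun z : ℂ × ℂ => ENNReal.ofReal (‖z.1‖ ^ a * ‖z.2‖ ^ b)) (z₁, z₂))
        = H ‖z₂‖ := by
      intro z₂
      by_cases h1 : ‖z₂‖ < 1
      · have heq : ∀ z₁ : ℂ, (Hartogs γ).indicator
            (fun z : ℂ × ℂ => ENNReal.ofReal (‖z.1‖ ^ a * ‖z.2‖ ^ b)) (z₁, z₂)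
            = (if ‖z₁‖ < ‖z₂‖ ^ (1/γ) then ENNReal.ofReal (‖z₁‖ ^ a) else 0) *
              ENNReal.ofReal (‖z₂‖ ^ b) := by
          intro z₁
          classical
          rw [indicator_apply]
          have hmem : ((z₁, z₂) ∈ Hartogs γ) = (‖z₁‖ < ‖z₂‖ ^ (1/γ)) := by
            simp only [Hartogs, mem_setOf_eq, habs]
            rw [eq_iff_iff]
            exact ⟨fun h => (aux_rpow_lt_iff_lt_rpow (norm_nonneg _) (norm_nonneg _) hγ).1 h.1,
              fun h => ⟨(aux_rpow_lt_iff_lt_rpow (norm_nonneg _) (norm_nonneg _) hγ).2 h, h1⟩⟩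
          rw [if_congr (Eq.to_iff hmem) rfl rfl]
          by_cases h2 : ‖z₁‖ < ‖z₂‖ ^ (1/γ)
          · rw [if_pos h2, if_pos h2, habs, habs,
              ENNReal.ofReal_mul (Real.rpow_nonneg (norm_nonneg _) _)]
          · rw [if_neg h2, if_neg h2, zero_mul]
        calc (∫⁻ z₁ : ℂ, (Hartogs γ).indicator
              (fun z : ℂ × ℂ => ENNReal.ofReal (‖z.1‖ ^ a * ‖z.2‖ ^ b)) (z₁, z₂))
            = ∫⁻ z₁ : ℂ, (if ‖z₁‖ < ‖z₂‖ ^ (1/γ) then ENNReal.ofReal (‖z₁‖ ^ a) else 0) *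
              ENNReal.ofReal (‖z₂‖ ^ b) := lintegral_congr heq
          _ = (∫⁻ z₁ : ℂ, (if ‖z₁‖ < ‖z₂‖ ^ (1/γ) then ENNReal.ofReal (‖z₁‖ ^ a) else 0)) *
              ENNReal.ofReal (‖z₂‖ ^ b) := by
              rw [lintegral_mul_const _ (Measurable.ite
                (measurableSet_lt measurable_norm measurable_const)
                ((measurable_norm.pow_const a).ennreal_ofReal) measurable_const)]
          _ = H ‖z₂‖ := by
              rw [aux_lintegral_ball_rpow (Real.rpow_nonneg (norm_nonneg z₂) _) ha, hH_def]
              simp only [if_pos h1]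
              congr 2
              rw [← Real.rpow_mul (norm_nonneg z₂)]
              congr 1
              field_simp
      · have heq : ∀ z₁ : ℂ, (Hartogs γ).indicator
            (fun z : ℂ × ℂ => ENNReal.ofReal (‖z.1‖ ^ a * ‖z.2‖ ^ b)) (z₁, z₂)
            = 0 := fun z₁ => indicator_of_notMem (fun hmem => h1 hmem.2) _
        rw [lintegral_congr heq, lintegral_zero, hH_def]
        simp only [if_neg h1]
    calc (∫⁻ z₂ : ℂ, ∫⁻ z₁ : ℂ, (Hartogs γ).indicator
          (fun z : ℂ × ℂ => ENNReal.ofReal (‖z.1‖ ^ a * ‖z.2‖ ^ b)) (z₁, z₂))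
        = ∫⁻ z₂ : ℂ, H ‖z₂‖ := lintegral_congr hinner
      _ = CC * ∫⁻ r in Ioi (0:ℝ), ENNReal.ofReal r * H r :=
          aux_lintegral_radial_complex H hHmeas
      _ = CC * (CC * ENNReal.ofReal (1/(a+2)) * ∫⁻ r in Ioo (0:ℝ) 1, ENNReal.ofReal (r ^ t)) := by
          congr 1
          have hfun2 : (fun r : ℝ => ENNReal.ofReal r * H r) = (Ioo (0:ℝ) 1).indicator
              (fun r => (CC * ENNReal.ofReal (1/(a+2))) * ENNReal.ofReal (r ^ t)) := by
            funext r
            by_cases h1 : 0 < r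
            · by_cases h2 : r < 1
              · rw [hH_def]
                simp only [if_pos h2]
                rw [indicator_of_mem (mem_Ioo.2 ⟨h1, h2⟩)]
                have h3 : r ^ t = r ^ b * r ^ ((a+2)/γ) * r := by
                  rw [ht_def, Real.rpow_add h1, Real.rpow_add h1, Real.rpow_one]
                rw [h3, div_eq_mul_one_div,
                  ENNReal.ofReal_mul (Real.rpow_nonneg h1.le _),
                  ENNReal.ofReal_mul (by positivity),
                  ENNReal.ofReal_mul (by positivity)]
                ring
              · rw [hH_def]
                simp only [if_neg h2]
                rw [indicator_of_notMem (by simp [mem_Ioo, h2]), mul_zero]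
            · rw [indicator_of_notMem (by simp [mem_Ioo, h1]),
                ENNReal.ofReal_eq_zero.2 (not_lt.1 h1), zero_mul]
          rw [show (fun r : ℝ => ENNReal.ofReal r * H r) = (Ioo (0:ℝ) 1).indicator
              (fun r => (CC * ENNReal.ofReal (1/(a+2))) * ENNReal.ofReal (r ^ t)) from hfun2]
          rw [lintegral_indicator measurableSet_Ioo, Measure.restrict_restrict measurableSet_Ioo,
            inter_eq_left.2 Ioo_subset_Ioi_self,
            lintegral_const_mul' _ _ (ENNReal.mul_ne_top hCCtop ENNReal.ofReal_ne_top)]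
  rw [key, hL]
  -- strip off the positive finite constants
  have hfin_iff : CC * (CC * ENNReal.ofReal (1/(a+2)) *
      (∫⁻ r in Ioo (0:ℝ) 1, ENNReal.ofReal (r ^ t))) < ⊤ ↔ -1 < t := by
    constructor
    · intro h
      by_contra hcon
      push_neg at hcon
      rw [aux_lintegral_Ioo_rpow_top hcon,
        ENNReal.mul_top (mul_ne_zero hCC0 (ENNReal.ofReal_pos.2 (by positivity)).ne'),
        ENNReal.mul_top hCC0] at h
      exact absurd h (lt_irrefl ⊤)
    · intro h
      rw [aux_lintegral_Ioo_rpow h zero_lt_one]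
      exact ENNReal.mul_lt_top (lt_top_iff_ne_top.2 hCCtop)
        (ENNReal.mul_lt_top
          (ENNReal.mul_lt_top (lt_top_iff_ne_top.2 hCCtop) ENNReal.ofReal_lt_top)
          ENNReal.ofReal_lt_top)
  rw [hfin_iff]
  have hS : t + 1 = p * ((α₂:ℝ) + (α₁:ℝ)/γ + 2/p + 2/(γ*p)) := by
    rw [ht_def, hb_def, ha_def]
    field_simp
    ring
  constructor
  · intro h
    have h2 : 0 < p * ((α₂:ℝ) + (α₁:ℝ)/γ + 2/p + 2/(γ*p)) := by rw [← hS]; linarith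
    have h3 : 0 < (α₂:ℝ) + (α₁:ℝ)/γ + 2/p + 2/(γ*p) := by
      by_contra hc
      push_neg at hc
      nlinarith
    rw [gt_iff_lt, neg_div]
    linarith
  · intro h
    rw [gt_iff_lt, neg_div] at h
    have h3 : 0 < (α₂:ℝ) + (α₁:ℝ)/γ + 2/p + 2/(γ*p) := by linarith
    have h2 : 0 < t + 1 := by rw [hS]; exact mul_pos hp h3
    linarith

end
end

section
/- Let m, n be coprime positive integers and j ∈ {0, 1, …, m−1}. Let s, t be real numbers with s ≥ 0, 0 < t < 1 and s^m < t^n. Then the family ( ((α₁+1)² + (m/n)(α₁+1)(α₂+1)) · n/(mπ²) · s^{α₁} t^{α₂} ) indexed by α ∈ 𝒢_j is summable, with sum equal to (n/(mπ²)) · f_j(s,t) · g_j(t) · s^j t^{n−1−E_j} / ((1−t)² (t^n − s^m)²). -/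
open MeasureTheory Complex Real

noncomputable section

/-- The set of `γ`-allowable multi-indices: exponents of monomials in `A²(ℍ_γ)`. -/
def allowable (γ : ℝ) : Set (ℤ × ℤ) :=
  {α | 0 ≤ α.1 ∧ (α.1 : ℝ) + γ * ((α.2 : ℝ) + 1) > -1}

/-- The indices of the subspace `𝒮_j`: allowable indices with `α₁ ≡ j (mod m)`. -/
def Gset (m n j : ℕ) : Set (ℤ × ℤ) :=
  {α | α ∈ allowable ((m : ℝ) / n) ∧ α.1 % (m : ℤ) = (j : ℤ)}

/-- `E_j = ⌊((j+1)n - 1)/m⌋`. -/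
def Ej (m n j : ℕ) : ℕ := ((j + 1) * n - 1) / m

set_option maxHeartbeats 2000000 in
/-- Theorem (computation of the sub-Bergman kernels, on the diagonal):
the weighted monomial family indexed by `𝒢_j` sums to the closed-form expression
`(n/(mπ²)) f_j(s,t) g_j(t) s^j t^{n-1-E_j} / ((1-t)²(t^n - s^m)²)`. -/
theorem subBergman_kernel_hasSum (m n : ℕ) (hm : 0 < m) (hn : 0 < n)
    (hgcd : Nat.gcd m n = 1) (j : ℕ) (hj : j < m)
    (s t : ℝ) (hs : 0 ≤ s) (ht0 : 0 < t) (ht1 : t < 1) (hst : s ^ m < t ^ n) :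
    HasSum
      (fun α : Gset m n j =>
        ((((α : ℤ × ℤ).1 : ℝ) + 1) ^ 2
            + ((m : ℝ) / n) * (((α : ℤ × ℤ).1 : ℝ) + 1) * (((α : ℤ × ℤ).2 : ℝ) + 1))
          * n / (m * π ^ 2) * s ^ (α : ℤ × ℤ).1 * t ^ (α : ℤ × ℤ).2)
      ((n / (m * π ^ 2))
        * (((j : ℝ) + 1) * t ^ n + ((m : ℝ) - j - 1) * s ^ m)
        * (((j : ℝ) + 1 - ((m : ℝ) / n) * Ej m n j)
            + (((m : ℝ) / n) + ((m : ℝ) / n) * Ej m n j - j - 1) * t)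
        * s ^ j * t ^ ((n : ℤ) - 1 - (Ej m n j : ℤ))
        / ((1 - t) ^ 2 * (t ^ n - s ^ m) ^ 2)) := by
  have hmR : (0:ℝ) < m := by exact_mod_cast hm
  have hnR : (0:ℝ) < n := by exact_mod_cast hn
  have hπ : (π:ℝ) ≠ 0 := Real.pi_ne_zero
  have htne : t ≠ 0 := ne_of_gt ht0
  have htn : (0:ℝ) < t ^ n := by positivity
  have h1t : (0:ℝ) < 1 - t := by linarith
  have hts : (0:ℝ) < t ^ n - s ^ m := by linarith
  have hu0 : (0:ℝ) ≤ s ^ m / t ^ n := by positivity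
  have hu1 : s ^ m / t ^ n < 1 := (div_lt_one htn).mpr hst
  have h1u : (0:ℝ) < 1 - s ^ m / t ^ n := by linarith
  set E : ℕ := Ej m n j with hEdef
  -- integer facts about E
  have hjn1 : 1 ≤ (j+1) * n := Nat.one_le_iff_ne_zero.mpr (Nat.mul_ne_zero (Nat.succ_ne_zero j) hn.ne')
  have hL1 : E * m ≤ (j+1)*n - 1 := Nat.div_mul_le_self _ _
  have hL2 : (j+1)*n ≤ E * m + m := by
    have h := Nat.lt_div_mul_add (a := (j+1)*n - 1) hm
    rw [hEdef] at *; unfold Ej at *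
    omega
  have hL1' : (E:ℤ) * m + 1 ≤ (j+1)*n := by
    zify [hjn1] at hL1; linarith
  have hL2' : ((j:ℤ)+1)*n ≤ (E:ℤ) * m + m := by exact_mod_cast hL2
  -- key equivalence between the real allowability condition and an integer one
  have key : ∀ x y : ℝ, (0 < (n:ℝ)*(x+1) + m*(y+1)) ↔ (-1 < x + (m:ℝ)/n * (y+1)) := by
    intro x y
    have h3 : x + (m:ℝ)/n*(y+1) + 1 = ((n:ℝ)*(x+1)+m*(y+1))/n := by field_simp; ring
    constructor
    · intro h
      have h4 : 0 < x + (m:ℝ)/n*(y+1) + 1 := by rw [h3]; exact div_pos h hnR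
      linarith
    · intro h
      have h4 : 0 < x + (m:ℝ)/n*(y+1) + 1 := by linarith
      rw [h3] at h4
      have := (div_pos_iff.mp h4)
      rcases this with ⟨h5, _⟩ | ⟨_, h6⟩
      · exact h5
      · linarith
  -- the parametrization map
  set φ : ℕ × ℕ → ℤ × ℤ := fun p => ((j:ℤ) + m * p.1, (p.2:ℤ) - E - 1 - n * p.1) with hφ
  have hmem : ∀ p : ℕ × ℕ, φ p ∈ Gset m n j := by
    rintro ⟨k, l⟩
    refine ⟨⟨by positivity, ?_⟩, ?_⟩
    · show (-1:ℝ) < _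
      have h9 : (0:ℝ) < (n:ℝ)*((((j:ℤ) + m * k : ℤ):ℝ)+1) + m*((((l:ℤ) - E - 1 - n * k : ℤ):ℝ)+1) := by
        push_cast
        have hml : (0:ℝ) ≤ (m:ℝ) * l := by positivity
        have hc : ((E:ℝ) * m + 1 : ℝ) ≤ ((j:ℝ)+1)*n := by exact_mod_cast hL1'
        nlinarith
      exact (key _ _).mp h9
    · show ((j:ℤ) + m * k) % m = (j:ℤ)
      rw [Int.add_mul_emod_self_left]
      exact Int.emod_eq_of_lt (by positivity) (by exact_mod_cast hj)
  have hinj : Function.Injective (fun p : ℕ × ℕ => (⟨φ p, hmem p⟩ : Gset m n j)) := by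
    rintro ⟨k, l⟩ ⟨k', l'⟩ h
    have h1 : φ (k, l) = φ (k', l') := congrArg Subtype.val h
    rw [Prod.ext_iff] at h1
    obtain ⟨ha, hb⟩ := h1
    simp only [hφ] at ha hb
    have hk : k = k' := by
      have : (m:ℤ) * k = m * k' := by linarith
      have := mul_left_cancel₀ (by exact_mod_cast hm.ne' : (m:ℤ) ≠ 0) this
      exact_mod_cast this
    subst hk
    have : (l:ℤ) = l' := by linarith
    exact Prod.ext rfl (by exact_mod_cast this)
  have hsurj : Function.Surjective (fun p : ℕ × ℕ => (⟨φ p, hmem p⟩ : Gset m n j)) := by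
    rintro ⟨⟨a, b⟩, ⟨⟨ha0, hal⟩, hamod⟩⟩
    have hq : (m:ℤ) * (a / m) + j = a := by
      conv_rhs => rw [← Int.mul_ediv_add_emod a m]
      rw [hamod]
    have hq0 : 0 ≤ a / m := Int.ediv_nonneg ha0 (by exact_mod_cast hm.le)
    set k : ℕ := (a / m).toNat with hk
    have hk' : (k:ℤ) = a / m := Int.toNat_of_nonneg hq0
    have hak : a = (j:ℤ) + m * k := by rw [hk']; linarith
    -- second coordinate
    have h5R : (0:ℝ) < (n:ℝ)*((a:ℝ)+1) + m*((b:ℝ)+1) := (key _ _).mpr hal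
    have h5 : 0 < (n:ℤ)*(a+1) + m*(b+1) := by exact_mod_cast h5R
    have h6 : -((m:ℤ)*((E:ℤ)+1)) < m*(b+1+n*k) := by
      rw [hak] at h5
      nlinarith [h5, hL2']
    have h7 : -((E:ℤ)+1) < b+1+(n:ℤ)*k := by
      have := lt_of_mul_lt_mul_left (a := (m:ℤ))
        (by linarith : (m:ℤ) * (-(((E:ℤ)+1))) < m*(b+1+n*k)) (by positivity)
      linarith
    have h8 : 0 ≤ b + (E:ℤ) + 1 + n*k := by linarith
    refine ⟨(k, (b + (E:ℤ) + 1 + n*k).toNat), ?_⟩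
    apply Subtype.ext
    show φ _ = (a, b)
    simp only [hφ]
    refine Prod.ext ?_ ?_
    · exact hak.symm
    · show ((b + (E:ℤ) + 1 + n*k).toNat : ℤ) - E - 1 - n * k = b
      rw [Int.toNat_of_nonneg h8]; ring
  let e : ℕ × ℕ ≃ Gset m n j := Equiv.ofBijective _ ⟨hinj, hsurj⟩
  -- the factored summands
  set A : ℝ := (n:ℝ)*((j:ℝ)+1) - m*E with hA
  have hA0 : (0:ℝ) < A := by
    have hc : ((E:ℝ) * m + 1 : ℝ) ≤ ((j:ℝ)+1)*n := by exact_mod_cast hL1'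
    rw [hA]; nlinarith
  set G : ℕ → ℝ := fun k => ((j:ℝ)+1+m*k) * (s^m/t^n)^k with hG
  set H : ℕ → ℝ := fun l => (A + m*l) * t^l with hH
  set C : ℝ := s^j * (t^(E+1))⁻¹ / (m*π^2) with hC
  have hGsum : HasSum G (((j:ℝ)+1) * (1 - s^m/t^n)⁻¹ + m * ((s^m/t^n)/(1-s^m/t^n)^2)) := by
    have h1 := (hasSum_geometric_of_lt_one hu0 hu1).mul_left ((j:ℝ)+1)
    have h2 := (hasSum_coe_mul_geometric_of_norm_lt_one
      (by rwa [Real.norm_eq_abs, _root_.abs_of_nonneg hu0] : ‖s^m/t^n‖ < 1)).mul_left (m:ℝ)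
    have h3 := h1.add h2
    have : G = fun k : ℕ => ((j:ℝ)+1)*(s^m/t^n)^k + (m:ℝ)*((k:ℝ)*(s^m/t^n)^k) := by
      funext k; rw [hG]; ring
    rw [this]
    exact h3
  have hHsum : HasSum H (A * (1 - t)⁻¹ + m * (t/(1-t)^2)) := by
    have h1 := (hasSum_geometric_of_lt_one ht0.le ht1).mul_left A
    have h2 := (hasSum_coe_mul_geometric_of_norm_lt_one
      (by rwa [Real.norm_eq_abs, _root_.abs_of_nonneg ht0.le] : ‖t‖ < 1)).mul_left (m:ℝ)
    have h3 := h1.add h2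
    have : H = fun l : ℕ => A*t^l + (m:ℝ)*((l:ℝ)*t^l) := by
      funext l; rw [hH]; ring
    rw [this]
    exact h3
  have hGnn : ∀ k, 0 ≤ G k := by
    intro k; rw [hG]; positivity
  have hHnn : ∀ l, 0 ≤ H l := by
    intro l; rw [hH]; positivity
  have hsum2 : Summable (fun p : ℕ × ℕ => G p.1 * H p.2) :=
    Summable.mul_of_nonneg hGsum.summable hHsum.summable hGnn hHnn
  have hprod := (hGsum.mul hHsum hsum2).mul_left C
  -- transfer along the equivalence
  rw [← Equiv.hasSum_iff e]
  have hfun : (fun α : Gset m n j =>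
        ((((α : ℤ × ℤ).1 : ℝ) + 1) ^ 2
            + ((m : ℝ) / n) * (((α : ℤ × ℤ).1 : ℝ) + 1) * (((α : ℤ × ℤ).2 : ℝ) + 1))
          * n / (m * π ^ 2) * s ^ (α : ℤ × ℤ).1 * t ^ (α : ℤ × ℤ).2) ∘ e
      = fun p : ℕ × ℕ => C * (G p.1 * H p.2) := by
    funext p
    obtain ⟨k, l⟩ := p
    show ((((φ (k,l)).1 : ℝ) + 1) ^ 2
            + ((m : ℝ) / n) * (((φ (k,l)).1 : ℝ) + 1) * (((φ (k,l)).2 : ℝ) + 1))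
          * n / (m * π ^ 2) * s ^ (φ (k,l)).1 * t ^ (φ (k,l)).2 = C * (G k * H l)
    simp only [hφ]
    have hz1 : s ^ ((j:ℤ) + m * k) = s^j * (s^m)^k := by
      rw [show (j:ℤ)+(m:ℤ)*k = ((j + m*k : ℕ) : ℤ) by push_cast; ring,
        zpow_natCast, pow_add, pow_mul]
    have hz2 : t ^ ((l:ℤ) - E - 1 - n * k) = t^l * (t^(E+1) * (t^n)^k)⁻¹ := by
      rw [show (l:ℤ)-(E:ℤ)-1-(n:ℤ)*k = ((l:ℕ):ℤ) - ((E+1+n*k : ℕ):ℤ) by push_cast; ring,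
        zpow_sub₀ htne, zpow_natCast, zpow_natCast, pow_add, pow_mul, div_eq_mul_inv]
    rw [hz1, hz2, hG, hH, hC, hA]
    have htE : (0:ℝ) < t^(E+1) := by positivity
    have htnk : (0:ℝ) < (t^n)^k := by positivity
    push_cast
    field_simp
    ring_nf
    simp only [inv_pow, mul_assoc, mul_inv_cancel₀ (pow_ne_zero _ htne), mul_inv_cancel_left₀ (pow_ne_zero _ htne), mul_one]
  rw [hfun]
  -- identify the sum values
  have hval : C * ((((j:ℝ)+1) * (1 - s^m/t^n)⁻¹ + m * ((s^m/t^n)/(1-s^m/t^n)^2))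
      * (A * (1 - t)⁻¹ + m * (t/(1-t)^2)))
      = ((n:ℝ) / (m * π ^ 2))
        * (((j : ℝ) + 1) * t ^ n + ((m : ℝ) - j - 1) * s ^ m)
        * (((j : ℝ) + 1 - ((m : ℝ) / n) * E)
            + (((m : ℝ) / n) + ((m : ℝ) / n) * E - j - 1) * t)
        * s ^ j * t ^ ((n : ℤ) - 1 - (E : ℤ))
        / ((1 - t) ^ 2 * (t ^ n - s ^ m) ^ 2) := by
    have hz3 : t ^ ((n:ℤ) - 1 - (E:ℤ)) = t^n * (t^(E+1))⁻¹ := by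
      rw [show (n:ℤ)-1-(E:ℤ) = ((n:ℕ):ℤ) - ((E+1:ℕ):ℤ) by push_cast; ring,
        zpow_sub₀ htne, zpow_natCast, zpow_natCast, div_eq_mul_inv]
    rw [hz3, hC, hA]
    have htE : (0:ℝ) < t^(E+1) := by positivity
    have h1une : (1:ℝ) - s^m/t^n ≠ 0 := ne_of_gt h1u
    have h1tne : (1:ℝ) - t ≠ 0 := ne_of_gt h1t
    have htsne : t^n - s^m ≠ 0 := ne_of_gt hts
    field_simp
    ring
  rw [← hval]
  exact hprod
end
end

section
/- Let m, n be coprime positive integers. For all z, w in the power-generalized Hartogs triangle ℍ_{m/n}, the family ( z^α · conj(w)^α / c²_{m/n,α} ) indexed by α ∈ 𝒜²_{m/n} is summable and its sum equals Σ_{j=0}^{m−1} K_j(z,w), where K_j(z,w) = (n/(mπ²)) · f_j(s,t) g_j(t) s^j t^{n−1−E_j} / ((1−t)²(t^n − s^m)²) with s = z₁·conj(w₁) and t = z₂·conj(w₂). In particular the Bergman kernel 𝔹_{m/n}(z,w) is a rational function of (z,w) on ℍ_{m/n} × ℍ_{m/n}. -/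
open MeasureTheory Complex Real

noncomputable section

/-- `c²_{γ,α}`, the squared `L²(ℍ_γ)` norm of the monomial `z^α`. -/
def cSq (γ : ℝ) (α : ℤ × ℤ) : ℝ :=
  γ * π ^ 2 / (((α.1 : ℝ) + 1) ^ 2 + γ * ((α.1 : ℝ) + 1) * ((α.2 : ℝ) + 1))

/-- The explicit sub-Bergman kernel `K_j(z,w)` of `ℍ_{m/n}`. -/
def Kj (m n j : ℕ) (z w : ℂ × ℂ) : ℂ :=
  let s : ℂ := z.1 * (starRingEnd ℂ) w.1
  let t : ℂ := z.2 * (starRingEnd ℂ) w.2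
  ((n : ℂ) / (m * (π : ℂ) ^ 2))
    * (((j : ℂ) + 1) * t ^ n + ((m : ℂ) - j - 1) * s ^ m)
    * (((j : ℂ) + 1 - ((m : ℂ) / n) * (Ej m n j : ℂ))
        + (((m : ℂ) / n) + ((m : ℂ) / n) * (Ej m n j : ℂ) - j - 1) * t)
    * s ^ j * t ^ ((n : ℤ) - 1 - (Ej m n j : ℤ))
    / ((1 - t) ^ 2 * (t ^ n - s ^ m) ^ 2)

/-! ### Auxiliary material -/

lemma hasSum_fintype_prod {ι β M : Type*} [Fintype ι] [DecidableEq ι] [AddCommMonoid M]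
    [TopologicalSpace M] [ContinuousAdd M]
    {f : ι → β → M} {a : ι → M} (h : ∀ i, HasSum (f i) (a i)) :
    HasSum (fun p : ι × β => f p.1 p.2) (∑ i, a i) := by
  have key : ∀ i : ι, HasSum (fun p : ι × β => if p.1 = i then f i p.2 else 0) (a i) := by
    intro i
    have hinj : Function.Injective (fun b : β => ((i, b) : ι × β)) := by
      intro b b' hb; simpa using congrArg Prod.snd hb
    rw [← hinj.hasSum_iff]
    · have hc : ((fun p : ι × β => if p.1 = i then f i p.2 else 0) ∘ fun b => (i, b)) = f i := by
        funext b; simp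
      rw [hc]; exact h i
    · rintro ⟨i', b⟩ hp
      have hne : i' ≠ i := by rintro rfl; exact hp ⟨b, rfl⟩
      simp [hne]
  have H := hasSum_sum (s := (Finset.univ : Finset ι))
      (f := fun i (p : ι × β) => if p.1 = i then f i p.2 else 0) (a := a) (fun i _ => key i)
  have hfun : (fun p : ι × β => f p.1 p.2)
      = fun p : ι × β => ∑ i, if p.1 = i then f i p.2 else 0 := by
    funext p; simp
  rw [hfun]
  exact H

lemma hasSum_linear_geometric {𝕜 : Type*} [NormedField 𝕜] [CompleteSpace 𝕜]
    {x : 𝕜} (hx : ‖x‖ < 1) (a b : 𝕜) :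
    HasSum (fun q : ℕ => (a + b * q) * x ^ q) (a * (1 - x)⁻¹ + b * (x / (1 - x) ^ 2)) := by
  have h1 := (hasSum_geometric_of_norm_lt_one hx).mul_left a
  have h2 := (hasSum_coe_mul_geometric_of_norm_lt_one hx).mul_left b
  have hfun : (fun q : ℕ => (a + b * q) * x ^ q)
      = fun q : ℕ => a * x ^ q + b * (q * x ^ q) := by
    funext q; ring
  rw [hfun]
  exact h1.add h2

lemma summable_norm_linear_geometric {x : ℂ} (hx : ‖x‖ < 1) (a b : ℂ) :
    Summable (fun q : ℕ => ‖(a + b * q) * x ^ q‖) := by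
  have hx' : ‖(‖x‖ : ℝ)‖ < 1 := by
    rwa [Real.norm_eq_abs, _root_.abs_of_nonneg (norm_nonneg x)]
  have hR := (hasSum_linear_geometric hx' ‖a‖ ‖b‖).summable
  refine hR.of_nonneg_of_le (fun q => norm_nonneg _) (fun q => ?_)
  rw [norm_mul, norm_pow]
  have h1 : ‖a + b * q‖ ≤ ‖a‖ + ‖b‖ * q := by
    calc ‖a + b * q‖ ≤ ‖a‖ + ‖b * (q : ℂ)‖ := norm_add_le _ _
    _ = ‖a‖ + ‖b‖ * q := by rw [norm_mul, Complex.norm_natCast]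
  exact mul_le_mul_of_nonneg_right h1 (pow_nonneg (norm_nonneg x) q)

lemma Ej_bounds (m n j : ℕ) (hm : 0 < m) (hn : 0 < n) :
    m * Ej m n j + 1 ≤ (j + 1) * n ∧ (j + 1) * n ≤ m * Ej m n j + m := by
  have h0 : 1 ≤ (j + 1) * n := Nat.one_le_iff_ne_zero.mpr (by positivity)
  have h2 := Nat.div_add_mod ((j + 1) * n - 1) m
  have h3 := Nat.mod_lt ((j + 1) * n - 1) hm
  show m * (((j + 1) * n - 1) / m) + 1 ≤ (j + 1) * n ∧
    (j + 1) * n ≤ m * (((j + 1) * n - 1) / m) + m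
  set X := m * (((j + 1) * n - 1) / m)
  set A := (j + 1) * n
  omega

lemma Ej_le₁ (m n j : ℕ) (hm : 0 < m) (hn : 0 < n) :
    (m : ℤ) * (Ej m n j : ℤ) + 1 ≤ ((j : ℤ) + 1) * n := by
  have h := (Ej_bounds m n j hm hn).1
  exact_mod_cast h

lemma Ej_le₂ (m n j : ℕ) (hm : 0 < m) (hn : 0 < n) :
    ((j : ℤ) + 1) * n ≤ (m : ℤ) * (Ej m n j : ℤ) + m := by
  have h := (Ej_bounds m n j hm hn).2
  exact_mod_cast h

lemma mem_allowable_iff (m n : ℕ) (hm : 0 < m) (hn : 0 < n) (α : ℤ × ℤ) :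
    α ∈ allowable ((m : ℝ) / n) ↔
      0 ≤ α.1 ∧ 0 < (n : ℤ) * (α.1 + 1) + (m : ℤ) * (α.2 + 1) := by
  unfold allowable
  simp only [Set.mem_setOf_eq]
  refine and_congr Iff.rfl ?_
  have hn' : (0 : ℝ) < n := by exact_mod_cast hn
  rw [gt_iff_lt, show (-1 : ℝ) < (α.1 : ℝ) + (m : ℝ) / n * ((α.2 : ℝ) + 1) ↔
      (0 : ℝ) < (n : ℝ) * ((α.1 : ℝ) + 1) + (m : ℝ) * ((α.2 : ℝ) + 1) from ?_]
  · constructor <;> intro h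
    · exact_mod_cast h
    · exact_mod_cast h
  · have hmn : (m : ℝ) = (m : ℝ) / n * n := by field_simp
    have expand : (n : ℝ) * ((α.1 : ℝ) + (m : ℝ) / n * ((α.2 : ℝ) + 1) + 1)
        = (n : ℝ) * ((α.1 : ℝ) + 1) + (m : ℝ) * ((α.2 : ℝ) + 1) := by
      field_simp; ring
    constructor <;> intro h
    · have key : 0 < (n : ℝ) * ((α.1 : ℝ) + (m : ℝ) / n * ((α.2 : ℝ) + 1) + 1) :=
        mul_pos hn' (by linarith)
      linarith [expand ▸ key]
    · have key : 0 < (n : ℝ) * ((α.1 : ℝ) + (m : ℝ) / n * ((α.2 : ℝ) + 1) + 1) := by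
        rw [expand]; linarith
      nlinarith [key, hn']

def phiMap (m n : ℕ) (p : Fin m × ℕ × ℕ) : ℤ × ℤ :=
  (((m * p.2.1 + (p.1 : ℕ) : ℕ) : ℤ),
    (p.2.2 : ℤ) - 1 - (Ej m n (p.1 : ℕ) : ℤ) - (n : ℤ) * (p.2.1 : ℤ))

lemma phiMap_mem (m n : ℕ) (hm : 0 < m) (hn : 0 < n) (p : Fin m × ℕ × ℕ) :
    phiMap m n p ∈ allowable ((m : ℝ) / n) := by
  obtain ⟨j, q, k⟩ := p
  rw [mem_allowable_iff m n hm hn]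
  simp only [phiMap]
  refine ⟨Int.natCast_nonneg _, ?_⟩
  have h1 := Ej_le₁ m n (j : ℕ) hm hn
  have hk : (0 : ℤ) ≤ (k : ℤ) := Int.natCast_nonneg k
  have hmk : (0 : ℤ) ≤ (m : ℤ) * k := mul_nonneg (Int.natCast_nonneg m) hk
  push_cast
  nlinarith [h1, hmk]

lemma phiMap_injective (m n : ℕ) (hm : 0 < m) : Function.Injective (phiMap m n) := by
  rintro ⟨j, q, k⟩ ⟨j', q', k'⟩ h
  simp only [phiMap, Prod.mk.injEq] at h
  obtain ⟨h1, h2⟩ := h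
  have h1' : m * q + (j : ℕ) = m * q' + (j' : ℕ) := by exact_mod_cast h1
  have hj : (j : ℕ) = (j' : ℕ) := by
    have e1 : (m * q + (j : ℕ)) % m = (j : ℕ) := by
      rw [Nat.mul_add_mod]; exact Nat.mod_eq_of_lt j.isLt
    have e2 : (m * q' + (j' : ℕ)) % m = (j' : ℕ) := by
      rw [Nat.mul_add_mod]; exact Nat.mod_eq_of_lt j'.isLt
    rw [← e1, ← e2, h1']
  have hq : q = q' := by
    have e1 : (m * q + (j : ℕ)) / m = q := by
      rw [Nat.mul_add_div hm, Nat.div_eq_of_lt j.isLt, add_zero]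
    have e2 : (m * q' + (j' : ℕ)) / m = q' := by
      rw [Nat.mul_add_div hm, Nat.div_eq_of_lt j'.isLt, add_zero]
    rw [← e1, ← e2, h1']
  have hjf : j = j' := Fin.ext hj
  subst hjf; subst hq
  have hk : k = k' := by
    have : (k : ℤ) = (k' : ℤ) := by linarith [h2]
    exact_mod_cast this
  subst hk; rfl

lemma phiMap_surjective (m n : ℕ) (hm : 0 < m) (hn : 0 < n) (α : ℤ × ℤ)
    (hα : α ∈ allowable ((m : ℝ) / n)) : ∃ p, phiMap m n p = α := by
  rw [mem_allowable_iff m n hm hn] at hα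
  obtain ⟨ha1, ha2⟩ := hα
  set N : ℕ := α.1.toNat with hN
  have hNa : (N : ℤ) = α.1 := Int.toNat_of_nonneg ha1
  have hsplit : (m : ℤ) * ((N / m : ℕ) : ℤ) + ((N % m : ℕ) : ℤ) = α.1 := by
    rw [← hNa]; exact_mod_cast Nat.div_add_mod N m
  have hE2 := Ej_le₂ m n (N % m) hm hn
  have hmpos : (0 : ℤ) < m := by exact_mod_cast hm
  have ha2' : 0 < (n : ℤ) * ((m : ℤ) * ((N / m : ℕ) : ℤ) + ((N % m : ℕ) : ℤ) + 1)
      + (m : ℤ) * (α.2 + 1) := by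
    rw [hsplit]; exact ha2
  have hkey : 0 ≤ α.2 + 1 + (Ej m n (N % m) : ℤ) + (n : ℤ) * ((N / m : ℕ) : ℤ) := by
    have step : (1 : ℤ) ≤ m * (α.2 + 1 + (Ej m n (N % m) : ℤ) + (n : ℤ) * ((N / m : ℕ) : ℤ) + 1) := by
      nlinarith [ha2', hE2]
    nlinarith [step, hmpos]
  refine ⟨⟨⟨N % m, Nat.mod_lt N hm⟩, N / m,
      (α.2 + 1 + (Ej m n (N % m) : ℤ) + (n : ℤ) * ((N / m : ℕ) : ℤ)).toNat⟩, ?_⟩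
  have htn : (((α.2 + 1 + (Ej m n (N % m) : ℤ) + (n : ℤ) * ((N / m : ℕ) : ℤ)).toNat : ℕ) : ℤ)
      = α.2 + 1 + (Ej m n (N % m) : ℤ) + (n : ℤ) * ((N / m : ℕ) : ℤ) := Int.toNat_of_nonneg hkey
  simp only [phiMap]
  rw [Prod.ext_iff]
  constructor
  · push_cast
    push_cast at hsplit
    linarith [hsplit]
  · show ((_ : ℕ) : ℤ) - 1 - (Ej m n (N % m) : ℤ) - (n : ℤ) * ((N / m : ℕ) : ℤ) = α.2
    rw [htn]; ring

set_option maxHeartbeats 1000000 in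
lemma kernel_algebra (s t a b c d : ℂ) (mN nN jN eN : ℕ)
    (ht : t ≠ 0) (h1t : 1 - t ≠ 0) (hpow : t ^ nN - s ^ mN ≠ 0)
    (ha : a ≠ 0) (hb : b ≠ 0) (hpi : (π : ℂ) ≠ 0) :
    (s ^ jN * (t ^ (1 + eN))⁻¹ / (a * (π : ℂ) ^ 2)) *
      (((c + 1) * (1 - s ^ mN / t ^ nN)⁻¹ + a * (s ^ mN / t ^ nN / (1 - s ^ mN / t ^ nN) ^ 2)) *
        ((b * c + b - a * d) * (1 - t)⁻¹ + a * (t / (1 - t) ^ 2)))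
    = (b / (a * (π : ℂ) ^ 2)) * ((c + 1) * t ^ nN + (a - c - 1) * s ^ mN)
        * ((c + 1 - a / b * d) + (a / b + a / b * d - c - 1) * t)
        * s ^ jN * (t ^ nN / t ^ (1 + eN)) / ((1 - t) ^ 2 * (t ^ nN - s ^ mN) ^ 2) := by
  have htn : t ^ nN ≠ 0 := pow_ne_zero _ ht
  have hte : t ^ (1 + eN) ≠ 0 := pow_ne_zero _ ht
  have h1u : (1 : ℂ) - s ^ mN / t ^ nN = (t ^ nN - s ^ mN) / t ^ nN := by field_simp
  rw [h1u]
  have hP : ((c + 1) * ((t ^ nN - s ^ mN) / t ^ nN)⁻¹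
        + a * (s ^ mN / t ^ nN / ((t ^ nN - s ^ mN) / t ^ nN) ^ 2))
      = ((c + 1) * t ^ nN + (a - c - 1) * s ^ mN) * t ^ nN / (t ^ nN - s ^ mN) ^ 2 := by
    field_simp
    ring
  have hQ : ((b * c + b - a * d) * (1 - t)⁻¹ + a * (t / (1 - t) ^ 2))
      = b * ((c + 1 - a / b * d) + (a / b + a / b * d - c - 1) * t) / (1 - t) ^ 2 := by
    field_simp
    ring
  rw [hP, hQ]
  generalize t ^ (1 + eN) = TE
  generalize s ^ jN = SJ
  generalize hT : t ^ nN = T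
  generalize hS : s ^ mN = S
  generalize hr : T - S = r
  generalize hv : (1 : ℂ) - t = v
  ring

set_option maxHeartbeats 1000000 in
lemma pointwise_eq (m n : ℕ) (hm : 0 < m) (hn : 0 < n) (z w : ℂ × ℂ)
    (hz2 : z.2 ≠ 0) (hw2 : (starRingEnd ℂ) w.2 ≠ 0) (j : Fin m) (q k : ℕ) :
    z.1 ^ (phiMap m n (j, q, k)).1 * z.2 ^ (phiMap m n (j, q, k)).2
      * ((starRingEnd ℂ) w.1) ^ (phiMap m n (j, q, k)).1
      * ((starRingEnd ℂ) w.2) ^ (phiMap m n (j, q, k)).2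
      / (cSq ((m : ℝ) / n) (phiMap m n (j, q, k)) : ℂ)
    = ((z.1 * (starRingEnd ℂ) w.1) ^ (j : ℕ)
          * ((z.2 * (starRingEnd ℂ) w.2) ^ (1 + Ej m n (j : ℕ)))⁻¹ / ((m : ℂ) * (π : ℂ) ^ 2)) *
        ((((j : ℕ) : ℂ) + 1 + (m : ℂ) * q)
            * ((z.1 * (starRingEnd ℂ) w.1) ^ m / (z.2 * (starRingEnd ℂ) w.2) ^ n) ^ q *
          (((n : ℂ) * ((j : ℕ) : ℂ) + (n : ℂ) - (m : ℂ) * (Ej m n (j : ℕ) : ℂ) + (m : ℂ) * k)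
            * (z.2 * (starRingEnd ℂ) w.2) ^ k)) := by
  have hm0 : (m : ℂ) ≠ 0 := Nat.cast_ne_zero.mpr hm.ne'
  have hn0 : (n : ℂ) ≠ 0 := Nat.cast_ne_zero.mpr hn.ne'
  have hpi : (π : ℂ) ≠ 0 := Complex.ofReal_ne_zero.mpr Real.pi_ne_zero
  simp only [phiMap]
  rw [show (k : ℤ) - 1 - (Ej m n (j : ℕ) : ℤ) - (n : ℤ) * (q : ℤ)
      = (k : ℤ) - ((1 + Ej m n (j : ℕ) + n * q : ℕ) : ℤ) by push_cast; ring]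
  rw [zpow_sub₀ hz2, zpow_sub₀ hw2]
  simp only [zpow_natCast]
  simp only [cSq]
  push_cast
  rw [div_div_eq_mul_div]
  rw [div_pow]
  field_simp [hz2, hw2, hm0, hn0, hpi]
  ring

/-- Corollary: the Bergman kernel of `ℍ_{m/n}` is the sum of the `m` explicit (rational)
sub-Bergman kernels `K_j`. -/
theorem bergmanKernel_eq_sum_subkernels (m n : ℕ) (hm : 0 < m) (hn : 0 < n)
    (hgcd : Nat.gcd m n = 1) (z w : ℂ × ℂ)
    (hz : z ∈ Hartogs ((m : ℝ) / n)) (hw : w ∈ Hartogs ((m : ℝ) / n)) :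
    HasSum
      (fun α : allowable ((m : ℝ) / n) =>
        z.1 ^ (α : ℤ × ℤ).1 * z.2 ^ (α : ℤ × ℤ).2
          * ((starRingEnd ℂ) w.1) ^ (α : ℤ × ℤ).1 * ((starRingEnd ℂ) w.2) ^ (α : ℤ × ℤ).2
          / (cSq ((m : ℝ) / n) α : ℂ))
      (∑ j ∈ Finset.range m, Kj m n j z w) := by
  classical
  obtain ⟨hz1, hz2lt⟩ := hz
  obtain ⟨hw1, hw2lt⟩ := hw
  have hm0 : (m : ℂ) ≠ 0 := Nat.cast_ne_zero.mpr hm.ne'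
  have hn0 : (n : ℂ) ≠ 0 := Nat.cast_ne_zero.mpr hn.ne'
  have hpi : (π : ℂ) ≠ 0 := Complex.ofReal_ne_zero.mpr Real.pi_ne_zero
  have hz20 : 0 < ‖z.2‖ :=
    lt_of_le_of_lt (Real.rpow_nonneg (norm_nonneg _) _) hz1
  have hw20 : 0 < ‖w.2‖ :=
    lt_of_le_of_lt (Real.rpow_nonneg (norm_nonneg _) _) hw1
  have hz2ne : z.2 ≠ 0 := by intro h; rw [h] at hz20; simp at hz20
  have hw2ne : w.2 ≠ 0 := by intro h; rw [h] at hw20; simp at hw20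
  have hcw2ne : (starRingEnd ℂ) w.2 ≠ 0 := by
    simp only [ne_eq, map_eq_zero]; exact hw2ne
  set s : ℂ := z.1 * (starRingEnd ℂ) w.1 with hs_def
  set t : ℂ := z.2 * (starRingEnd ℂ) w.2 with ht_def
  have ht0 : t ≠ 0 := mul_ne_zero hz2ne hcw2ne
  have habspos : 0 < ‖t‖ := norm_pos_iff.mpr ht0
  have habs : ∀ ζ : ℂ × ℂ, ‖ζ.1‖ ^ ((m : ℝ) / n) < ‖ζ.2‖ →
      ‖ζ.1‖ ^ m < ‖ζ.2‖ ^ n := by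
    intro ζ h
    have h0 : (0 : ℝ) ≤ ‖ζ.1‖ ^ ((m : ℝ) / n) :=
      Real.rpow_nonneg (norm_nonneg _) _
    have hp := pow_lt_pow_left₀ h h0 hn.ne'
    have hkey : (‖ζ.1‖ ^ ((m : ℝ) / n)) ^ n = ‖ζ.1‖ ^ m := by
      rw [← Real.rpow_natCast (‖ζ.1‖ ^ ((m : ℝ) / n)) n,
        ← Real.rpow_mul (norm_nonneg _),
        div_mul_cancel₀ _ (show (n : ℝ) ≠ 0 from Nat.cast_ne_zero.mpr hn.ne'),
        Real.rpow_natCast]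
    rwa [hkey] at hp
  have hst : ‖s‖ ^ m < ‖t‖ ^ n := by
    rw [hs_def, ht_def, norm_mul, norm_mul, Complex.norm_conj, Complex.norm_conj, mul_pow, mul_pow]
    exact mul_lt_mul'' (habs z hz1) (habs w hw1) (by positivity) (by positivity)
  have hts : ‖t‖ < 1 := by
    rw [ht_def, norm_mul, Complex.norm_conj]
    nlinarith [norm_nonneg z.2, norm_nonneg w.2,
      hz2lt, hw2lt]
  have hu : ‖s ^ m / t ^ n‖ < 1 := by
    rw [norm_div, norm_pow, norm_pow,
      div_lt_one (by positivity)]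
    exact hst
  have hden : t ^ n - s ^ m ≠ 0 := by
    have hlt : ‖s ^ m‖ < ‖t ^ n‖ := by
      rw [norm_pow, norm_pow]; exact hst
    intro h
    rw [sub_eq_zero] at h
    rw [h] at hlt
    exact lt_irrefl _ hlt
  have h1t : (1 : ℂ) - t ≠ 0 := by
    intro h
    rw [sub_eq_zero] at h
    rw [← h] at hts
    simp at hts
  -- the reindexing equivalence
  have hbij : Function.Bijective
      (fun p : Fin m × ℕ × ℕ =>
        (⟨phiMap m n p, phiMap_mem m n hm hn p⟩ : allowable ((m : ℝ) / n))) := by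
    constructor
    · intro p p' hpp'
      exact phiMap_injective m n hm (congrArg Subtype.val hpp')
    · rintro ⟨α, hα⟩
      obtain ⟨p, hp⟩ := phiMap_surjective m n hm hn α hα
      exact ⟨p, Subtype.ext hp⟩
  -- fiberwise sums
  have perfiber : ∀ j : Fin m, HasSum (fun p : ℕ × ℕ =>
      (s ^ (j : ℕ) * (t ^ (1 + Ej m n (j : ℕ)))⁻¹ / ((m : ℂ) * (π : ℂ) ^ 2)) *
        ((((j : ℕ) : ℂ) + 1 + (m : ℂ) * p.1) * (s ^ m / t ^ n) ^ p.1 *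
          (((n : ℂ) * ((j : ℕ) : ℂ) + (n : ℂ) - (m : ℂ) * (Ej m n (j : ℕ) : ℂ) + (m : ℂ) * p.2)
            * t ^ p.2)))
      (Kj m n (j : ℕ) z w) := by
    intro j
    have hA := hasSum_linear_geometric hu (((j : ℕ) : ℂ) + 1) (m : ℂ)
    have hB := hasSum_linear_geometric hts
      ((n : ℂ) * ((j : ℕ) : ℂ) + (n : ℂ) - (m : ℂ) * (Ej m n (j : ℕ) : ℂ)) (m : ℂ)
    have hS := summable_mul_of_summable_norm
      (summable_norm_linear_geometric hu (((j : ℕ) : ℂ) + 1) (m : ℂ))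
      (summable_norm_linear_geometric hts
        ((n : ℂ) * ((j : ℕ) : ℂ) + (n : ℂ) - (m : ℂ) * (Ej m n (j : ℕ) : ℂ)) (m : ℂ))
    have h3 := (hA.mul hB hS).mul_left
      (s ^ (j : ℕ) * (t ^ (1 + Ej m n (j : ℕ)))⁻¹ / ((m : ℂ) * (π : ℂ) ^ 2))
    have hval := kernel_algebra s t (m : ℂ) (n : ℂ) ((j : ℕ) : ℂ) (Ej m n (j : ℕ) : ℂ)
      m n (j : ℕ) (Ej m n (j : ℕ)) ht0 h1t hden hm0 hn0 hpi
    convert h3 using 1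
    · rfl
    rw [hval]
    show Kj m n (j : ℕ) z w = _
    rw [Kj]
    rw [show ((n : ℤ) - 1 - (Ej m n (j : ℕ) : ℤ))
        = ((n : ℕ) : ℤ) - ((1 + Ej m n (j : ℕ) : ℕ) : ℤ) by push_cast; ring]
    rw [zpow_sub₀ ht0, zpow_natCast, zpow_natCast]
  have hbig := hasSum_fintype_prod perfiber
  rw [show (∑ j ∈ Finset.range m, Kj m n j z w) = ∑ j : Fin m, Kj m n (j : ℕ) z w from
    (Fin.sum_univ_eq_sum_range (fun j => Kj m n j z w) m).symm]
  rw [← Equiv.hasSum_iff (Equiv.ofBijective _ hbij)]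
  convert hbig using 1
  funext p
  obtain ⟨j, q, k⟩ := p
  exact pointwise_eq m n hm hn z w hz2ne hcw2ne j q k

end
end

section
/- Let D ⊂ ℂ be the open unit disc, let ε ∈ (0,1) and β ∈ (−∞, 2). There exists a constant K > 0 such that for every z ∈ D, ∫_D (1 − |w|²)^{−ε} |1 − z·conj(w)|^{−2} |w|^{−β} dV(w) ≤ K (1 − |z|²)^{−ε}. -/
open MeasureTheory Complex Real Set
open scoped ENNReal

noncomputable section

/- ### Auxiliary lemmas -/

theorem my_lintegral_comp_polarCoord_symm (g : ℝ × ℝ → ℝ≥0∞) :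
    ∫⁻ p in polarCoord.target, ENNReal.ofReal p.1 * g (polarCoord.symm p) = ∫⁻ p, g p := by
  set B : ℝ × ℝ → ℝ × ℝ →L[ℝ] ℝ × ℝ := fun p =>
    LinearMap.toContinuousLinearMap (Matrix.toLin (Module.Basis.finTwoProd ℝ) (Module.Basis.finTwoProd ℝ)
      !![Real.cos p.2, -p.1 * Real.sin p.2; Real.sin p.2, p.1 * Real.cos p.2])
  have A : ∀ p ∈ polarCoord.target, HasFDerivWithinAt polarCoord.symm (B p) polarCoord.target p :=
    fun p _ => (hasFDerivAt_polarCoord_symm p).hasFDerivWithinAt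
  have B_det : ∀ p, (B p).det = p.1 := by
    intro p
    conv_rhs => rw [← one_mul p.1, ← Real.cos_sq_add_sin_sq p.2]
    simp only [B, neg_mul, LinearMap.det_toContinuousLinearMap, LinearMap.det_toLin,
      Matrix.det_fin_two_of, sub_neg_eq_add]
    ring
  symm
  calc
    ∫⁻ p, g p = ∫⁻ p in polarCoord.source, g p := by
      rw [← setLIntegral_univ]
      exact setLIntegral_congr polarCoord_source_ae_eq_univ.symm
    _ = ∫⁻ p in polarCoord.target, ENNReal.ofReal |(B p).det| * g (polarCoord.symm p) := by
      rw [← polarCoord.symm_image_target_eq_source]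
      exact lintegral_image_eq_lintegral_abs_det_fderiv_mul volume
        polarCoord.open_target.measurableSet A polarCoord.symm.injOn g
    _ = ∫⁻ p in polarCoord.target, ENNReal.ofReal p.1 * g (polarCoord.symm p) := by
      apply setLIntegral_congr_fun polarCoord.open_target.measurableSet
      intro p hp
      dsimp only
      rw [B_det, abs_of_pos hp.1]

theorem my_lintegral_comp_complex_polarCoord_symm (g : ℂ → ℝ≥0∞) :
    ∫⁻ p in polarCoord.target, ENNReal.ofReal p.1 * g (Complex.polarCoord.symm p) = ∫⁻ w, g w := by
  rw [← (Complex.volume_preserving_equiv_real_prod.symm).lintegral_comp_emb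
    Complex.measurableEquivRealProd.symm.measurableEmbedding, ← my_lintegral_comp_polarCoord_symm]
  rfl

theorem lintegral_Ioo_ofReal (a b : ℝ) (hab : a ≤ b) (f : ℝ → ℝ)
    (hf : IntervalIntegrable f volume a b) (h0 : ∀ x ∈ Ioc a b, 0 ≤ f x) :
    ∫⁻ x in Ioo a b, ENNReal.ofReal (f x) = ENNReal.ofReal (∫ x in a..b, f x) := by
  rw [intervalIntegral.integral_of_le hab,
    ofReal_integral_eq_lintegral_ofReal (hf.1.mono_set (by simp [uIoc_of_le hab]))
      ((ae_restrict_iff' measurableSet_Ioc).2 (Filter.Eventually.of_forall h0))]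
  exact setLIntegral_congr Ioo_ae_eq_Ioc

theorem arctan_integral (d : ℝ) (hd : 0 < d) :
    ∫ θ in (-π)..π, 1 / (d ^ 2 + θ ^ 2 / π ^ 2) ≤ π ^ 2 / d := by
  have hπ := Real.pi_pos
  have key : ∫ θ in (-π)..π, 1 / (d ^ 2 + θ ^ 2 / π ^ 2)
      = π / d * Real.arctan (π / (π * d)) - π / d * Real.arctan (-π / (π * d)) := by
    apply intervalIntegral.integral_eq_sub_of_hasDerivAt
      (f := fun θ => π / d * Real.arctan (θ / (π * d)))
    · intro x _
      have h1 : HasDerivAt (fun θ : ℝ => θ / (π * d)) (1 / (π * d)) x := by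
        simpa using (hasDerivAt_id x).div_const (π * d)
      have h3 := ((Real.hasDerivAt_arctan (x / (π * d))).comp x h1).const_mul (π / d)
      refine h3.congr_deriv ?_
      have hpd : (π * d) ≠ 0 := by positivity
      field_simp
    · apply ContinuousOn.intervalIntegrable
      exact ContinuousOn.div continuousOn_const (by fun_prop) (fun x _ => by positivity)
  rw [key]
  have h1 : Real.arctan (π / (π * d)) ≤ π / 2 := (Real.arctan_lt_pi_div_two _).le
  have h2 : -(π / 2) ≤ Real.arctan (-π / (π * d)) := (Real.neg_pi_div_two_lt_arctan _).le
  have hpd : 0 < π / d := by positivity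
  calc π / d * Real.arctan (π / (π * d)) - π / d * Real.arctan (-π / (π * d))
      ≤ π / d * (π / 2) - π / d * (-(π / 2)) := by gcongr
  _ = π ^ 2 / d := by ring

theorem angular_bound (c : ℝ) (hc0 : 0 ≤ c) (hc1 : c < 1) :
    ∫ θ in (-π)..π, 1 / (1 - 2 * c * Real.cos θ + c ^ 2) ≤ 10 / (1 - c) := by
  have hπ := Real.pi_pos
  have hd : 0 < 1 - c := by linarith
  have hden : ∀ θ : ℝ, (1 - c) ^ 2 + 2 * c * (1 - Real.cos θ)
      = 1 - 2 * c * Real.cos θ + c ^ 2 := by intro θ; ring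
  have hdenpos : ∀ θ : ℝ, 0 < 1 - 2 * c * Real.cos θ + c ^ 2 := by
    intro θ
    rw [← hden]
    have : Real.cos θ ≤ 1 := Real.cos_le_one θ
    nlinarith
  have hcont : ContinuousOn (fun θ : ℝ => 1 / (1 - 2 * c * Real.cos θ + c ^ 2)) (uIcc (-π) π) :=
    ContinuousOn.div continuousOn_const (by fun_prop) (fun x _ => (hdenpos x).ne')
  rcases lt_or_ge c (1/4) with hc | hc
  · have hb : ∀ θ, 1 / (1 - 2 * c * Real.cos θ + c ^ 2) ≤ 1 / (1 - c) ^ 2 := by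
      intro θ
      apply one_div_le_one_div_of_le (by positivity)
      rw [← hden]
      nlinarith [Real.cos_le_one θ, Real.neg_one_le_cos θ]
    calc ∫ θ in (-π)..π, 1 / (1 - 2 * c * Real.cos θ + c ^ 2)
        ≤ ∫ θ in (-π)..π, 1 / (1 - c) ^ 2 := by
          apply intervalIntegral.integral_mono_on (by linarith)
            hcont.intervalIntegrable intervalIntegrable_const
          exact fun θ _ => hb θ
      _ = 2 * π / (1 - c) ^ 2 := by
          rw [intervalIntegral.integral_const]
          simp; ring
      _ ≤ 10 / (1 - c) := by
          rw [div_le_div_iff₀ (by positivity) hd]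
          have hπ4 : π ≤ 3.15 := by linarith [Real.pi_lt_d2]
          nlinarith
  · have hb : ∀ θ ∈ Icc (-π) π, 1 / (1 - 2 * c * Real.cos θ + c ^ 2)
        ≤ 1 / ((1 - c) ^ 2 + θ ^ 2 / π ^ 2) := by
      intro θ hθ
      have habs : |θ| ≤ π := abs_le.2 ⟨hθ.1, hθ.2⟩
      have hcos := Real.cos_le_one_sub_mul_cos_sq habs
      apply one_div_le_one_div_of_le (by positivity)
      rw [← hden]
      have h1 : 2 * c * (2 / π ^ 2 * θ ^ 2) ≤ 2 * c * (1 - Real.cos θ) :=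
        mul_le_mul_of_nonneg_left (by linarith) (by linarith)
      have hq : (0:ℝ) ≤ θ ^ 2 / π ^ 2 := by positivity
      have h2 : θ ^ 2 / π ^ 2 ≤ 2 * c * (2 / π ^ 2 * θ ^ 2) := by
        have h3 : (1:ℝ) * (θ ^ 2 / π ^ 2) ≤ (4 * c) * (θ ^ 2 / π ^ 2) :=
          mul_le_mul_of_nonneg_right (by linarith) hq
        calc θ ^ 2 / π ^ 2 = 1 * (θ ^ 2 / π ^ 2) := by ring
        _ ≤ (4 * c) * (θ ^ 2 / π ^ 2) := h3
        _ = 2 * c * (2 / π ^ 2 * θ ^ 2) := by ring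
      linarith
    have hπ10 : π ^ 2 ≤ 10 := by nlinarith [Real.pi_lt_d2, Real.pi_pos]
    calc ∫ θ in (-π)..π, 1 / (1 - 2 * c * Real.cos θ + c ^ 2)
        ≤ ∫ θ in (-π)..π, 1 / ((1 - c) ^ 2 + θ ^ 2 / π ^ 2) := by
          apply intervalIntegral.integral_mono_on (by linarith) hcont.intervalIntegrable
          · exact ContinuousOn.intervalIntegrable
              (ContinuousOn.div continuousOn_const (by fun_prop) (fun x _ => by positivity))
          · exact hb
      _ ≤ π ^ 2 / (1 - c) := arctan_integral (1 - c) hd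
      _ ≤ 10 / (1 - c) := by gcongr

theorem angular_bound' (z : ℂ) (hz : ‖z‖ < 1) (r : ℝ) (hr0 : 0 < r) (hr1 : r < 1) :
    ∫ θ in (-π)..π,
      1 / ‖1 - z * (starRingEnd ℂ) (Complex.polarCoord.symm (r, θ))‖ ^ 2
      ≤ 10 / (1 - ‖z‖ * r) := by
  set a := ‖z‖ with ha
  set ψ := Complex.arg z with hψ
  set c := a * r with hc
  have ha0 : 0 ≤ a := norm_nonneg z
  have hc0 : 0 ≤ c := mul_nonneg ha0 hr0.le
  have hc1 : c < 1 := by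
    rcases eq_or_lt_of_le ha0 with h | h
    · simp [hc, ← h]
    · calc c < a * 1 := by rw [hc]; exact mul_lt_mul_of_pos_left hr1 h
      _ < 1 := by simpa using hz
  have hre : z.re = a * Real.cos ψ := (Complex.norm_mul_cos_arg z).symm
  have him : z.im = a * Real.sin ψ := (Complex.norm_mul_sin_arg z).symm
  have hw : ∀ θ : ℝ, ‖1 - z * (starRingEnd ℂ) (Complex.polarCoord.symm (r, θ))‖ ^ 2
      = 1 - 2 * c * Real.cos (θ - ψ) + c ^ 2 := by
    intro θ
    have S1 := Real.sin_sq_add_cos_sq θ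
    have S2 := Real.sin_sq_add_cos_sq ψ
    rw [Complex.sq_norm, Complex.normSq_apply]
    simp only [Complex.polarCoord_symm_apply, Complex.sub_re, Complex.sub_im, Complex.one_re,
      Complex.one_im, Complex.mul_re, Complex.mul_im, Complex.conj_re, Complex.conj_im,
      Complex.add_re, Complex.add_im, Complex.ofReal_re, Complex.ofReal_im, Complex.I_re,
      Complex.I_im, hre, him, Real.cos_sub]
    linear_combination (a^2*r^2*(Real.cos ψ^2 + Real.sin ψ^2)) * S1 + (a^2*r^2) * S2
  have heq : (∫ θ in (-π)..π,
      1 / ‖1 - z * (starRingEnd ℂ) (Complex.polarCoord.symm (r, θ))‖ ^ 2)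
      = ∫ θ in (-π)..π, 1 / (1 - 2 * c * Real.cos (θ - ψ) + c ^ 2) := by
    apply intervalIntegral.integral_congr
    intro θ _
    dsimp only
    rw [hw θ]
  rw [heq]
  have hper : Function.Periodic (fun x : ℝ => 1 / (1 - 2 * c * Real.cos x + c ^ 2)) (2 * π) :=
    fun x => by simp [Real.cos_add_two_pi]
  have hshift : (∫ θ in (-π)..π, 1 / (1 - 2 * c * Real.cos (θ - ψ) + c ^ 2))
      = ∫ x in (-π - ψ)..(π - ψ), 1 / (1 - 2 * c * Real.cos x + c ^ 2) :=
    intervalIntegral.integral_comp_sub_right (fun x => 1 / (1 - 2 * c * Real.cos x + c ^ 2)) ψ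
  rw [hshift]
  have hper2 : (∫ x in (-π - ψ)..(π - ψ), 1 / (1 - 2 * c * Real.cos x + c ^ 2))
      = ∫ x in (-π)..π, 1 / (1 - 2 * c * Real.cos x + c ^ 2) := by
    have h := hper.intervalIntegral_add_eq (-π - ψ) (-π)
    rw [show -π - ψ + 2 * π = π - ψ by ring, show -π + 2 * π = π by ring] at h
    exact h
  rw [hper2]
  exact angular_bound c hc0 hc1

theorem radial_bound (ε : ℝ) (hε0 : 0 < ε) (hε1 : ε < 1) (b : ℝ) (hb0 : 0 < b) (hb1 : b ≤ 1) :
    ∫⁻ s in Ioo (0:ℝ) 1, ENNReal.ofReal (s ^ (-ε) / (s + b))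
      ≤ ENNReal.ofReal ((1 / (1 - ε) + 1 / ε) * b ^ (-ε)) := by
  have h1ε : (0:ℝ) < 1 - ε := by linarith
  have hbε : (0:ℝ) ≤ b ^ (-ε) := Real.rpow_nonneg hb0.le _
  have hb1ε : (0:ℝ) ≤ 1 / (1 - ε) * b ^ (-ε) := by
    apply mul_nonneg _ hbε
    rw [one_div]
    exact (inv_nonneg).2 (by linarith)
  have hb2ε : (0:ℝ) ≤ 1 / ε * b ^ (-ε) := by positivity
  have hsplit : Ioo (0:ℝ) 1 ⊆ Ioo 0 b ∪ Ico b 1 := by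
    intro x hx
    rcases lt_or_ge x b with h | h
    · exact Or.inl ⟨hx.1, h⟩
    · exact Or.inr ⟨h, hx.2⟩
  have hmeas1 : Measurable fun s : ℝ => ENNReal.ofReal (s ^ (-ε) * (1/b)) := by fun_prop
  have hmeas2 : Measurable fun s : ℝ => ENNReal.ofReal (s ^ (-ε - 1)) := by fun_prop
  calc ∫⁻ s in Ioo (0:ℝ) 1, ENNReal.ofReal (s ^ (-ε) / (s + b))
      ≤ ∫⁻ s in Ioo 0 b ∪ Ico b 1, ENNReal.ofReal (s ^ (-ε) / (s + b)) :=
        lintegral_mono_set hsplit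
    _ ≤ (∫⁻ s in Ioo 0 b, ENNReal.ofReal (s ^ (-ε) / (s + b)))
        + ∫⁻ s in Ico b 1, ENNReal.ofReal (s ^ (-ε) / (s + b)) := lintegral_union_le _ _ _
    _ ≤ (∫⁻ s in Ioo 0 b, ENNReal.ofReal (s ^ (-ε) * (1/b)))
        + ∫⁻ s in Ico b 1, ENNReal.ofReal (s ^ (-ε - 1)) := by
        apply add_le_add (setLIntegral_mono hmeas1 ?_) (setLIntegral_mono hmeas2 ?_)
        · intro s hs
          apply ENNReal.ofReal_le_ofReal
          rw [div_eq_mul_one_div]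
          exact mul_le_mul_of_nonneg_left
            (one_div_le_one_div_of_le hb0 (by linarith [hs.1])) (Real.rpow_nonneg hs.1.le _)
        · intro s hs
          apply ENNReal.ofReal_le_ofReal
          have hs0 : 0 < s := lt_of_lt_of_le hb0 hs.1
          have hrw : s ^ (-ε - 1) = s ^ (-ε) * (1 / s) := by
            rw [Real.rpow_sub hs0, Real.rpow_one, div_eq_mul_one_div]
          rw [hrw, div_eq_mul_one_div]
          exact mul_le_mul_of_nonneg_left
            (one_div_le_one_div_of_le hs0 (by linarith)) (Real.rpow_nonneg hs0.le _)
    _ ≤ ENNReal.ofReal (1 / (1 - ε) * b ^ (-ε)) + ENNReal.ofReal (1 / ε * b ^ (-ε)) := by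
        apply add_le_add
        · have hA : ∫⁻ s in Ioo (0:ℝ) b, ENNReal.ofReal (s ^ (-ε) * (1/b))
              = ENNReal.ofReal (∫ s in (0:ℝ)..b, s ^ (-ε) * (1/b)) := by
            apply lintegral_Ioo_ofReal _ _ hb0.le
            · exact (intervalIntegral.intervalIntegrable_rpow' (by linarith)).mul_const _
            · intro x hx
              have := hx.1
              positivity
          rw [hA, intervalIntegral.integral_mul_const,
            integral_rpow (Or.inl (by linarith : (-1:ℝ) < -ε))]
          apply ENNReal.ofReal_le_ofReal
          rw [Real.zero_rpow (by linarith : -ε + 1 ≠ 0),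
            show -ε + 1 = (-ε) + 1 from rfl, Real.rpow_add hb0, Real.rpow_one]
          rw [show (b ^ (-ε) * b - 0) / (-ε + 1) * (1 / b) = b ^ (-ε) * (b * (1/b)) / (1-ε) by ring,
            mul_one_div_cancel hb0.ne', mul_one]
          rw [div_eq_mul_one_div, mul_comm]
        · have hB : ∫⁻ s in Ico b 1, ENNReal.ofReal (s ^ (-ε - 1))
              = ENNReal.ofReal (∫ s in b..(1:ℝ), s ^ (-ε - 1)) := by
            rw [← setLIntegral_congr Ioo_ae_eq_Ico]
            apply lintegral_Ioo_ofReal _ _ hb1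
            · apply intervalIntegral.intervalIntegrable_rpow
              right
              rw [uIcc_of_le hb1]
              intro h
              exact absurd h.1 (not_le.2 hb0)
            · intro x hx
              have hx0 : 0 < x := hb0.trans hx.1
              positivity
          rw [hB, integral_rpow (Or.inr ⟨show -ε - 1 ≠ -1 by
              intro h
              have : ε = 0 := by linarith
              exact hε0.ne' this, by
              rw [uIcc_of_le hb1]; intro h; exact absurd h.1 (not_le.2 hb0)⟩)]
          apply ENNReal.ofReal_le_ofReal
          rw [show -ε - 1 + 1 = -ε by ring, Real.one_rpow]
          calc (1 - b ^ (-ε)) / (-ε) = (b ^ (-ε) - 1) / ε := by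
                rw [div_neg, ← neg_div, neg_sub]
          _ ≤ b ^ (-ε) / ε := by gcongr; linarith
          _ = 1 / ε * b ^ (-ε) := by ring
    _ = ENNReal.ofReal ((1 / (1 - ε) + 1 / ε) * b ^ (-ε)) := by
        rw [← ENNReal.ofReal_add hb1ε hb2ε]
        ring_nf

theorem inner_bound (ε β : ℝ) (z : ℂ) (hz : ‖z‖ < 1) (r : ℝ)
    (hr0 : 0 < r) (hr1 : r < 1) :
    ∫⁻ θ in Ioo (-π) π, ENNReal.ofReal r * ENNReal.ofReal
        ((1 - ‖Complex.polarCoord.symm (r, θ)‖ ^ 2) ^ (-ε)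
          / ‖1 - z * (starRingEnd ℂ) (Complex.polarCoord.symm (r, θ))‖ ^ 2
          * ‖Complex.polarCoord.symm (r, θ)‖ ^ (-β))
      ≤ ENNReal.ofReal (r * ((1 - r^2) ^ (-ε) * r ^ (-β))
          * (10 / (1 - ‖z‖ * r))) := by
  have hπ := Real.pi_pos
  have ha0 : 0 ≤ ‖z‖ := norm_nonneg z
  have har : ‖z‖ * r < 1 := by nlinarith
  have habs : ∀ θ : ℝ, ‖Complex.polarCoord.symm (r, θ)‖ = r := by
    intro θ
    rw [Complex.norm_polarCoord_symm]
    exact abs_of_pos hr0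
  have hane : ∀ θ : ℝ, (1 : ℂ) - z * (starRingEnd ℂ) (Complex.polarCoord.symm (r, θ)) ≠ 0 := by
    intro θ h
    have h1 : (1:ℂ) = z * (starRingEnd ℂ) (Complex.polarCoord.symm (r, θ)) := by
      rw [sub_eq_zero] at h; exact h
    have h2 := congrArg norm h1
    rw [norm_one, norm_mul, Complex.norm_conj, habs θ] at h2
    rw [← h2] at har
    exact absurd har (lt_irrefl 1)
  have hDpos : ∀ θ : ℝ,
      0 < ‖1 - z * (starRingEnd ℂ) (Complex.polarCoord.symm (r, θ))‖ ^ 2 :=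
    fun θ => pow_pos (norm_pos_iff.mpr (hane θ)) 2
  have hcnt : Continuous fun θ : ℝ =>
      ‖1 - z * (starRingEnd ℂ) (Complex.polarCoord.symm (r, θ))‖ ^ 2 := by
    have hfun : (fun θ : ℝ => Complex.polarCoord.symm (r, θ))
        = fun θ : ℝ => (r : ℂ) * (Real.cos θ + Real.sin θ * Complex.I) := by
      funext θ
      rw [Complex.polarCoord_symm_apply]
    have h1 : Continuous fun θ : ℝ => Complex.polarCoord.symm (r, θ) := by
      rw [hfun]; fun_prop
    exact (continuous_norm.comp
      (continuous_const.sub (continuous_const.mul (continuous_star.comp h1)))).pow 2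
  have hnnA : 0 ≤ r * ((1 - r^2) ^ (-ε) * r ^ (-β)) := by
    apply mul_nonneg hr0.le
    exact mul_nonneg (Real.rpow_nonneg (by nlinarith) _) (Real.rpow_nonneg hr0.le _)
  calc ∫⁻ θ in Ioo (-π) π, ENNReal.ofReal r * ENNReal.ofReal
        ((1 - ‖Complex.polarCoord.symm (r, θ)‖ ^ 2) ^ (-ε)
          / ‖1 - z * (starRingEnd ℂ) (Complex.polarCoord.symm (r, θ))‖ ^ 2
          * ‖Complex.polarCoord.symm (r, θ)‖ ^ (-β))
      = ∫⁻ θ in Ioo (-π) π, ENNReal.ofReal (r * ((1 - r^2) ^ (-ε) * r ^ (-β)))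
          * ENNReal.ofReal
          (1 / ‖1 - z * (starRingEnd ℂ) (Complex.polarCoord.symm (r, θ))‖ ^ 2) := by
        apply setLIntegral_congr_fun measurableSet_Ioo
        intro θ hθ
        dsimp only
        rw [habs θ, ← ENNReal.ofReal_mul hr0.le, ← ENNReal.ofReal_mul hnnA]
        congr 1
        ring
    _ = ENNReal.ofReal (r * ((1 - r^2) ^ (-ε) * r ^ (-β)))
        * ∫⁻ θ in Ioo (-π) π, ENNReal.ofReal
          (1 / ‖1 - z * (starRingEnd ℂ) (Complex.polarCoord.symm (r, θ))‖ ^ 2) :=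
        lintegral_const_mul' _ _ ENNReal.ofReal_ne_top
    _ ≤ ENNReal.ofReal (r * ((1 - r^2) ^ (-ε) * r ^ (-β)))
        * ENNReal.ofReal (10 / (1 - ‖z‖ * r)) := by
        apply mul_le_mul_right
        have hcont1 : Continuous fun θ : ℝ =>
            1 / ‖1 - z * (starRingEnd ℂ) (Complex.polarCoord.symm (r, θ))‖ ^ 2 :=
          continuous_const.div hcnt (fun θ => (hDpos θ).ne')
        rw [lintegral_Ioo_ofReal _ _ (by linarith) _ (hcont1.intervalIntegrable _ _)
          (fun θ _ => one_div_nonneg.2 (hDpos θ).le)]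
        exact ENNReal.ofReal_le_ofReal (angular_bound' z hz r hr0 hr1)
    _ = ENNReal.ofReal (r * ((1 - r^2) ^ (-ε) * r ^ (-β))
          * (10 / (1 - ‖z‖ * r))) := by
        rw [← ENNReal.ofReal_mul hnnA]

set_option maxHeartbeats 1000000 in
/-- Proposition: for `ε ∈ (0,1)` and `β < 2`, the weighted Bergman-type integral on the
unit disc satisfies `∫_D (1-|w|²)^{-ε} |1 - z·conj w|^{-2} |w|^{-β} dV(w) ≲ (1-|z|²)^{-ε}`. -/
theorem disc_kernel_estimate (ε β : ℝ) (hε0 : 0 < ε) (hε1 : ε < 1) (hβ : β < 2) :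
    ∃ K : ℝ, 0 < K ∧ ∀ z ∈ Metric.ball (0 : ℂ) 1,
      ∫⁻ w in Metric.ball (0 : ℂ) 1,
          ENNReal.ofReal ((1 - ‖w‖ ^ 2) ^ (-ε)
            / ‖1 - z * (starRingEnd ℂ) w‖ ^ 2
            * ‖w‖ ^ (-β))
        ≤ ENNReal.ofReal (K * (1 - ‖z‖ ^ 2) ^ (-ε)) := by
  have hπ := Real.pi_pos
  have h2β : (0:ℝ) < 2 - β := by linarith
  set M : ℝ := 2 ^ |β| with hM
  have hM0 : 0 < M := Real.rpow_pos_of_pos two_pos _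
  set C1 : ℝ := 27 * ((1/2:ℝ) ^ (2-β) / (2-β)) with hC1def
  have hC10 : 0 < C1 := by
    have h12 : (0:ℝ) < (1/2:ℝ) ^ (2-β) := Real.rpow_pos_of_pos (by norm_num) _
    positivity
  set Cε : ℝ := 1/(1-ε) + 1/ε with hCεdef
  have hCε0 : 0 < Cε := by
    have h1 : (0:ℝ) < 1 - ε := by linarith
    positivity
  have h2ε0 : (0:ℝ) < (2:ℝ) ^ ε := Real.rpow_pos_of_pos two_pos _
  refine ⟨C1 + 20 * M * Cε * 2 ^ ε, by positivity, ?_⟩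
  intro z hz
  set a := ‖z‖ with ha
  have ha1 : a < 1 := by rwa [Metric.mem_ball, dist_zero_right] at hz
  have ha0 : 0 ≤ a := norm_nonneg z
  set b : ℝ := 1 - a with hb
  have hb0 : 0 < b := by rw [hb]; linarith
  have hb1 : b ≤ 1 := by rw [hb]; linarith
  set F : ℂ → ℝ≥0∞ := fun w => ENNReal.ofReal ((1 - ‖w‖ ^ 2) ^ (-ε)
    / ‖1 - z * (starRingEnd ℂ) w‖ ^ 2 * ‖w‖ ^ (-β)) with hF
  have hFmeas : Measurable F := by
    rw [hF]
    have m1 : Measurable fun x : ℝ => x ^ (-ε) := by fun_prop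
    have m2 : Measurable fun x : ℝ => x ^ (-β) := by fun_prop
    have hb1m : Measurable fun w : ℂ => (1 - ‖w‖ ^ 2) :=
      (continuous_const.sub (continuous_norm.pow 2)).measurable
    have hb2m : Measurable fun w : ℂ => ‖1 - z * (starRingEnd ℂ) w‖ ^ 2 :=
      ((continuous_norm.comp
        (continuous_const.sub (continuous_const.mul continuous_star))).pow 2).measurable
    have hb3m : Measurable fun w : ℂ => ‖w‖ := continuous_norm.measurable
    exact (((m1.comp hb1m).div hb2m).mul (m2.comp hb3m)).ennreal_ofReal
  set S : Set (ℝ × ℝ) := (Ioo (0:ℝ) 1) ×ˢ (Ioo (-π) π) with hS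
  have hSmeas : MeasurableSet S := measurableSet_Ioo.prod measurableSet_Ioo
  have hSsub : S ⊆ polarCoord.target := by
    intro p hp
    rw [polarCoord_target]
    exact ⟨hp.1.1, hp.2⟩
  have hPmeas : Measurable fun p : ℝ × ℝ => ENNReal.ofReal p.1 * F (Complex.polarCoord.symm p) := by
    have hfun : (fun p : ℝ × ℝ => F (Complex.polarCoord.symm p))
        = fun p : ℝ × ℝ => F ((p.1 : ℂ) * (Real.cos p.2 + Real.sin p.2 * Complex.I)) := by
      funext p
      rw [Complex.polarCoord_symm_apply]
    apply Measurable.mul (f := fun p : ℝ × ℝ => ENNReal.ofReal p.1) (by fun_prop)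
    rw [hfun]
    exact hFmeas.comp (by fun_prop)
  have hHmeas : Measurable fun r : ℝ =>
      ENNReal.ofReal (r * ((1 - r^2) ^ (-ε) * r ^ (-β)) * (10 / (1 - a * r))) := by fun_prop
  calc ∫⁻ w in Metric.ball (0:ℂ) 1, F w
      = ∫⁻ w, (Metric.ball (0:ℂ) 1).indicator F w := (lintegral_indicator measurableSet_ball F).symm
    _ = ∫⁻ p in polarCoord.target,
          ENNReal.ofReal p.1 * (Metric.ball (0:ℂ) 1).indicator F (Complex.polarCoord.symm p) :=
        (my_lintegral_comp_complex_polarCoord_symm _).symm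
    _ = ∫⁻ p in polarCoord.target,
          S.indicator (fun p : ℝ × ℝ => ENNReal.ofReal p.1 * F (Complex.polarCoord.symm p)) p := by
        apply setLIntegral_congr_fun polarCoord.open_target.measurableSet
        intro p hp
        dsimp only
        have hp1 : 0 < p.1 := hp.1
        have habs : ‖Complex.polarCoord.symm p‖ = p.1 := by
          rw [Complex.norm_polarCoord_symm, abs_of_pos hp1]
        by_cases h : p.1 < 1
        · have hpS : p ∈ S := ⟨⟨hp1, h⟩, hp.2⟩
          have hball : Complex.polarCoord.symm p ∈ Metric.ball (0:ℂ) 1 := by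
            rw [Metric.mem_ball, dist_zero_right, habs]; exact h
          rw [indicator_of_mem hball, indicator_of_mem hpS]
        · have hpS : p ∉ S := fun hS' => h hS'.1.2
          have hball : Complex.polarCoord.symm p ∉ Metric.ball (0:ℂ) 1 := by
            rw [Metric.mem_ball, dist_zero_right, habs]; exact h
          rw [indicator_of_notMem hball, indicator_of_notMem hpS, mul_zero]
    _ = ∫⁻ p in S, ENNReal.ofReal p.1 * F (Complex.polarCoord.symm p) := by
        rw [lintegral_indicator hSmeas, Measure.restrict_restrict hSmeas,
          inter_eq_self_of_subset_left hSsub]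
    _ = ∫⁻ r in Ioo (0:ℝ) 1, ∫⁻ θ in Ioo (-π) π,
          ENNReal.ofReal r * F (Complex.polarCoord.symm (r, θ)) := by
        rw [hS, Measure.volume_eq_prod, ← Measure.prod_restrict,
          lintegral_prod _ hPmeas.aemeasurable]
    _ ≤ ∫⁻ r in Ioo (0:ℝ) 1,
          ENNReal.ofReal (r * ((1 - r^2) ^ (-ε) * r ^ (-β)) * (10 / (1 - a * r))) := by
        apply setLIntegral_mono hHmeas
        intro r hr
        have := inner_bound ε β z ha1 r hr.1 hr.2
        simp only [hF]
        exact this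
    _ ≤ ENNReal.ofReal C1 + ENNReal.ofReal (20 * M * (Cε * b ^ (-ε))) := by
        have hsplit : Ioo (0:ℝ) 1 ⊆ Ioo 0 (1/2) ∪ Ico (1/2) 1 := by
          intro x hx
          rcases lt_or_ge x (1/2) with h | h
          · exact Or.inl ⟨hx.1, h⟩
          · exact Or.inr ⟨h, hx.2⟩
        refine le_trans (lintegral_mono_set hsplit)
          (le_trans (lintegral_union_le _ _ _) (add_le_add ?_ ?_))
        · -- piece near the origin
          calc ∫⁻ r in Ioo (0:ℝ) (1/2),
                ENNReal.ofReal (r * ((1 - r^2) ^ (-ε) * r ^ (-β)) * (10 / (1 - a * r)))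
              ≤ ∫⁻ r in Ioo (0:ℝ) (1/2), ENNReal.ofReal (27 * r ^ (1-β)) := by
                apply setLIntegral_mono (by fun_prop)
                intro r hr
                have hr0 : 0 < r := hr.1
                have hr2 : r < 1/2 := hr.2
                have har : a * r ≤ r := mul_le_of_le_one_left hr0.le ha1.le
                have hden : (0:ℝ) < 1 - a * r := by nlinarith
                apply ENNReal.ofReal_le_ofReal
                have hX : (1 - r^2 : ℝ) ^ (-ε) ≤ 4/3 := by
                  have e1 : (1 - r^2 : ℝ) ^ (-ε) ≤ ((3/4:ℝ)) ^ (-ε) :=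
                    Real.rpow_le_rpow_of_nonpos (by norm_num) (by nlinarith) (by linarith)
                  have e2 : ((3/4:ℝ)) ^ (-ε) ≤ ((3/4:ℝ)) ^ (-1:ℝ) :=
                    Real.rpow_le_rpow_of_exponent_ge (by norm_num) (by norm_num) (by linarith)
                  have e3 : ((3/4:ℝ)) ^ (-1:ℝ) = 4/3 := by
                    rw [Real.rpow_neg_one]; norm_num
                  linarith
                have hY : 10 / (1 - a * r) ≤ 20 := by
                  rw [div_le_iff₀ hden]
                  nlinarith
                have hP : r * r ^ (-β) = r ^ (1-β) := by
                  rw [show (1:ℝ) - β = -β + 1 by ring, Real.rpow_add hr0, Real.rpow_one]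
                  ring
                have hPn : (0:ℝ) ≤ r ^ (1-β) := Real.rpow_nonneg hr0.le _
                calc r * ((1 - r^2) ^ (-ε) * r ^ (-β)) * (10 / (1 - a * r))
                    = (r * r ^ (-β)) * ((1 - r^2) ^ (-ε) * (10 / (1 - a * r))) := by ring
                  _ ≤ r ^ (1-β) * ((4/3) * 20) := by
                      rw [hP]
                      apply mul_le_mul_of_nonneg_left _ hPn
                      exact mul_le_mul hX hY (div_nonneg (by norm_num) hden.le) (by norm_num)
                  _ ≤ 27 * r ^ (1-β) := by nlinarith
          _ ≤ ENNReal.ofReal C1 := by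
                rw [lintegral_Ioo_ofReal 0 (1/2) (by norm_num) _
                  ((intervalIntegral.intervalIntegrable_rpow' (by linarith)).const_mul 27)
                  (fun x hx => by have := hx.1; positivity)]
                apply ENNReal.ofReal_le_ofReal
                rw [intervalIntegral.integral_const_mul, integral_rpow (Or.inl (by linarith)),
                  Real.zero_rpow (by intro h; linarith), sub_zero,
                  show (1:ℝ) - β + 1 = 2 - β by ring, hC1def]
        · -- piece near the boundary
          calc ∫⁻ r in Ico (1/2:ℝ) 1,
                ENNReal.ofReal (r * ((1 - r^2) ^ (-ε) * r ^ (-β)) * (10 / (1 - a * r)))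
              ≤ ∫⁻ r in Ico (1/2:ℝ) 1,
                ENNReal.ofReal (20 * M * ((1 - r) ^ (-ε) / ((1 - r) + b))) := by
                apply setLIntegral_mono (by fun_prop)
                intro r hr
                have hr1 : (1/2:ℝ) ≤ r := hr.1
                have hr2 : r < 1 := hr.2
                have hr0 : (0:ℝ) < r := by linarith
                have har : a * r ≤ r := mul_le_of_le_one_left hr0.le ha1.le
                have hra : a * r ≤ a := mul_le_of_le_one_right ha0 hr2.le
                have hden : (0:ℝ) < 1 - a * r := by nlinarith
                have hdb : (0:ℝ) < (1 - r) + b := by rw [hb]; nlinarith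
                apply ENNReal.ofReal_le_ofReal
                have hrβ : r ^ (-β) ≤ M := by
                  rcases le_or_gt β 0 with hβ0 | hβ0
                  · have e1 : r ^ (-β) ≤ (1:ℝ) ^ (-β) :=
                      Real.rpow_le_rpow hr0.le hr2.le (by linarith)
                    rw [Real.one_rpow] at e1
                    have e2 : (1:ℝ) ≤ M := by
                      rw [hM, show (1:ℝ) = (2:ℝ) ^ (0:ℝ) by simp]
                      exact Real.rpow_le_rpow_of_exponent_le one_le_two (abs_nonneg β)
                    linarith
                  · have e1 : r ^ (-β) ≤ ((1/2:ℝ)) ^ (-β) :=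
                      Real.rpow_le_rpow_of_nonpos (by norm_num) hr1 (by linarith)
                    have e2 : ((1/2:ℝ)) ^ (-β) = (2:ℝ) ^ β := by
                      rw [one_div, Real.inv_rpow (by norm_num), ← Real.rpow_neg (by norm_num),
                        neg_neg]
                    have e3 : (2:ℝ) ^ β ≤ (2:ℝ) ^ |β| :=
                      Real.rpow_le_rpow_of_exponent_le one_le_two (le_abs_self β)
                    rw [hM]
                    linarith
                have hXX : (1 - r^2 : ℝ) ^ (-ε) ≤ (1 - r) ^ (-ε) :=
                  Real.rpow_le_rpow_of_nonpos (by nlinarith) (by nlinarith) (by linarith)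
                have hYY : 10 / (1 - a * r) ≤ 20 / ((1 - r) + b) := by
                  rw [div_le_div_iff₀ hden hdb, hb]
                  nlinarith
                have hXn : (0:ℝ) ≤ (1 - r) ^ (-ε) := Real.rpow_nonneg (by linarith) _
                have hA : r * ((1 - r^2) ^ (-ε) * r ^ (-β)) ≤ 1 * ((1 - r) ^ (-ε) * M) := by
                  apply mul_le_mul hr2.le
                    (mul_le_mul hXX hrβ (Real.rpow_nonneg hr0.le _) hXn)
                    (mul_nonneg (Real.rpow_nonneg (by nlinarith) _) (Real.rpow_nonneg hr0.le _))
                    zero_le_one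
                calc r * ((1 - r^2) ^ (-ε) * r ^ (-β)) * (10 / (1 - a * r))
                    ≤ (1 * ((1 - r) ^ (-ε) * M)) * (20 / ((1 - r) + b)) :=
                      mul_le_mul hA hYY (div_nonneg (by norm_num) hden.le)
                        (by positivity)
                  _ = 20 * M * ((1 - r) ^ (-ε) / ((1 - r) + b)) := by ring
          _ ≤ ∫⁻ r in Ioo (0:ℝ) 1,
                ENNReal.ofReal (20 * M * ((1 - r) ^ (-ε) / ((1 - r) + b))) := by
                apply lintegral_mono_set
                intro x hx
                exact ⟨by linarith [hx.1], hx.2⟩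
          _ = ENNReal.ofReal (20 * M) * ∫⁻ r in Ioo (0:ℝ) 1,
                ENNReal.ofReal ((1 - r) ^ (-ε) / ((1 - r) + b)) := by
                rw [← lintegral_const_mul' _ _ ENNReal.ofReal_ne_top]
                apply setLIntegral_congr_fun measurableSet_Ioo
                intro r hr
                dsimp only
                rw [← ENNReal.ofReal_mul (by positivity)]
          _ = ENNReal.ofReal (20 * M) * ∫⁻ s in Ioo (0:ℝ) 1,
                ENNReal.ofReal (s ^ (-ε) / (s + b)) := by
                congr 1
                have hmp : MeasurePreserving (fun x : ℝ => 1 - x) volume volume :=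
                  Measure.measurePreserving_sub_left volume 1
                have hemb : MeasurableEmbedding (fun x : ℝ => 1 - x) :=
                  (Homeomorph.subLeft (1:ℝ)).measurableEmbedding
                have hpre : (fun x : ℝ => 1 - x) ⁻¹' (Ioo 0 1) = Ioo 0 1 := by
                  ext x
                  simp only [mem_preimage, mem_Ioo]
                  constructor <;> rintro ⟨h1, h2⟩ <;> constructor <;> linarith
                have hcov := hmp.setLIntegral_comp_preimage_emb hemb
                  (fun s => ENNReal.ofReal (s ^ (-ε) / (s + b))) (Ioo 0 1)
                rw [hpre] at hcov
                exact hcov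
          _ ≤ ENNReal.ofReal (20 * M) * ENNReal.ofReal (Cε * b ^ (-ε)) := by
                apply mul_le_mul_right
                rw [hCεdef]
                exact radial_bound ε hε0 hε1 b hb0 hb1
          _ = ENNReal.ofReal (20 * M * (Cε * b ^ (-ε))) := by
                rw [← ENNReal.ofReal_mul (by positivity)]
    _ ≤ ENNReal.ofReal ((C1 + 20 * M * Cε * 2 ^ ε) * (1 - a ^ 2) ^ (-ε)) := by
        rw [← ENNReal.ofReal_add hC10.le (by positivity)]
        apply ENNReal.ofReal_le_ofReal
        set X : ℝ := (1 - a ^ 2) ^ (-ε) with hX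
        have hX1 : 1 ≤ X :=
          Real.one_le_rpow_of_pos_of_le_one_of_nonpos (by nlinarith) (by nlinarith) (by linarith)
        have hbX : b ^ (-ε) ≤ 2 ^ ε * X := by
          have h1 : ((2:ℝ) * (1 - a)) ^ (-ε) ≤ X :=
            Real.rpow_le_rpow_of_nonpos (by nlinarith) (by nlinarith) (by linarith)
          have h2 : ((2:ℝ) * (1 - a)) ^ (-ε) = 2 ^ (-ε) * b ^ (-ε) := by
            rw [hb]
            exact Real.mul_rpow (by norm_num) (by linarith)
          rw [h2] at h1
          have h3 : (2:ℝ) ^ ε * (2 ^ (-ε) * b ^ (-ε)) ≤ 2 ^ ε * X :=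
            mul_le_mul_of_nonneg_left h1 h2ε0.le
          have h4 : (2:ℝ) ^ ε * 2 ^ (-ε) = 1 := by
            rw [← Real.rpow_add two_pos]; simp
          calc b ^ (-ε) = 2 ^ ε * (2 ^ (-ε) * b ^ (-ε)) := by rw [← mul_assoc, h4, one_mul]
          _ ≤ 2 ^ ε * X := h3
        have hc1x : C1 ≤ C1 * X := le_mul_of_one_le_right hC10.le hX1
        have hc2x : 20 * M * (Cε * b ^ (-ε)) ≤ 20 * M * (Cε * (2 ^ ε * X)) := by
          apply mul_le_mul_of_nonneg_left _ (by positivity)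
          exact mul_le_mul_of_nonneg_left hbX hCε0.le
        calc C1 + 20 * M * (Cε * b ^ (-ε)) ≤ C1 * X + 20 * M * (Cε * (2 ^ ε * X)) :=
              add_le_add hc1x hc2x
        _ = (C1 + 20 * M * Cε * 2 ^ ε) * X := by ring
end
end

section
/- Let m, n be coprime positive integers and j ∈ {0,…,m−1}. There exists a constant C > 0 such that for all (z,w) ∈ ℍ_{m/n} × ℍ_{m/n}, |K_j(z,w)| ≤ C |t|^{2n − 1 − E_j + nj/m} / (|1 − t|² |t^n − s^m|²), where s = z₁·conj(w₁) and t = z₂·conj(w₂), and K_j is the explicit sub-Bergman kernel. -/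
open MeasureTheory Complex Real

noncomputable section

/-- The size estimate on the sub-Bergman kernel `K_j`:
`|K_j(z,w)| ≲ |t|^{2n-1-E_j+nj/m} / (|1-t|² |tⁿ - sᵐ|²)` on `ℍ_{m/n} × ℍ_{m/n}`. -/
theorem subBergman_kernel_estimate (m n : ℕ) (hm : 0 < m) (hn : 0 < n)
    (hgcd : Nat.gcd m n = 1) (j : ℕ) (hj : j < m) :
    ∃ C : ℝ, 0 < C ∧ ∀ z w : ℂ × ℂ,
      z ∈ Hartogs ((m : ℝ) / n) → w ∈ Hartogs ((m : ℝ) / n) →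
      ‖Kj m n j z w‖
        ≤ C * ‖z.2 * (starRingEnd ℂ) w.2‖
              ^ (2 * (n : ℝ) - 1 - (Ej m n j : ℝ) + (n : ℝ) * j / m)
          / (‖1 - z.2 * (starRingEnd ℂ) w.2‖ ^ 2
            * ‖(z.2 * (starRingEnd ℂ) w.2) ^ n
                - (z.1 * (starRingEnd ℂ) w.1) ^ m‖ ^ 2) := by
  have hm' : (0:ℝ) < m := by exact_mod_cast hm
  have hn' : (0:ℝ) < n := by exact_mod_cast hn
  set A : ℝ := ‖(j:ℂ) + 1 - (m:ℂ)/n * (Ej m n j : ℂ)‖ with hA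
  set B : ℝ := ‖(m:ℂ)/n + (m:ℂ)/n * (Ej m n j : ℂ) - (j:ℂ) - 1‖ with hB
  have hA0 : 0 ≤ A := norm_nonneg _
  have hB0 : 0 ≤ B := norm_nonneg _
  refine ⟨(n / (m * π ^ 2)) * m * (A + B + 1), ?_, ?_⟩
  · have h1 : (0:ℝ) < n / (m * π ^ 2) := div_pos hn' (by positivity)
    have h2 : (0:ℝ) < A + B + 1 := by linarith
    positivity
  intro z w hz hw
  obtain ⟨hz1, hz2⟩ := hz
  obtain ⟨hw1, hw2⟩ := hw
  simp only [Kj]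
  set s : ℂ := z.1 * (starRingEnd ℂ) w.1 with hs
  set t : ℂ := z.2 * (starRingEnd ℂ) w.2 with ht
  have habs_t : ‖t‖ = ‖z.2‖ * ‖w.2‖ := by
    rw [ht, norm_mul, Complex.norm_conj]
  have habs_s : ‖s‖ = ‖z.1‖ * ‖w.1‖ := by
    rw [hs, norm_mul, Complex.norm_conj]
  have htt0 : 0 < ‖t‖ := by
    rw [habs_t]
    exact mul_pos (lt_of_le_of_lt (Real.rpow_nonneg (norm_nonneg _) _) hz1)
      (lt_of_le_of_lt (Real.rpow_nonneg (norm_nonneg _) _) hw1)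
  have htt1 : ‖t‖ < 1 := by
    rw [habs_t]
    nlinarith [norm_nonneg z.2, norm_nonneg w.2]
  have hst : ‖s‖ ^ ((m:ℝ)/n) < ‖t‖ := by
    rw [habs_s, habs_t, Real.mul_rpow (norm_nonneg _) (norm_nonneg _)]
    exact mul_lt_mul'' hz1 hw1 (Real.rpow_nonneg (norm_nonneg _) _)
      (Real.rpow_nonneg (norm_nonneg _) _)
  have hmn : (m:ℝ)/n * n = m := by field_simp
  have hnm : (m:ℝ)/n * ((n:ℝ)/m) = 1 := by field_simp
  have hsm : ‖s‖ ^ m < ‖t‖ ^ n := by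
    calc ‖s‖ ^ m = (‖s‖ ^ ((m:ℝ)/n)) ^ n := by
          rw [← Real.rpow_natCast (‖s‖ ^ ((m:ℝ)/n)) n,
            ← Real.rpow_mul (norm_nonneg _), hmn, Real.rpow_natCast]
      _ < ‖t‖ ^ n := pow_lt_pow_left₀ hst (Real.rpow_nonneg (norm_nonneg _) _) hn.ne'
  have hsj : ‖s‖ ^ j ≤ ‖t‖ ^ ((n:ℝ)*j/m) := by
    have h1 : ‖s‖ ≤ ‖t‖ ^ ((n:ℝ)/m) := by
      have h2 := Real.rpow_le_rpow (Real.rpow_nonneg (norm_nonneg s) _) hst.le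
        (le_of_lt (by positivity : (0:ℝ) < (n:ℝ)/m))
      rwa [← Real.rpow_mul (norm_nonneg _), hnm, Real.rpow_one] at h2
    calc ‖s‖ ^ j ≤ (‖t‖ ^ ((n:ℝ)/m)) ^ j :=
          pow_le_pow_left₀ (norm_nonneg _) h1 j
      _ = ‖t‖ ^ ((n:ℝ)*j/m) := by
          rw [← Real.rpow_natCast (‖t‖ ^ ((n:ℝ)/m)) j,
            ← Real.rpow_mul htt0.le]
          congr 1
          ring
  have h1t : (1:ℂ) - t ≠ 0 := by
    intro h
    have h2 : (1:ℂ) = t := by linear_combination h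
    rw [← h2] at htt1
    simp at htt1
  have hts : t ^ n - s ^ m ≠ 0 := by
    refine sub_ne_zero.mpr fun h => ?_
    have h2 := congrArg norm h
    rw [norm_pow, norm_pow] at h2
    linarith
  have hD : 0 < ‖1 - t‖ ^ 2 * ‖t ^ n - s ^ m‖ ^ 2 :=
    mul_pos (pow_pos (norm_pos_iff.mpr h1t) 2) (pow_pos (norm_pos_iff.mpr hts) 2)
  simp only [norm_div, norm_mul, norm_pow, norm_zpow]
  rw [div_le_div_iff_of_pos_right hD]
  rw [← Real.rpow_intCast (‖t‖) ((n:ℤ) - 1 - (Ej m n j : ℤ))]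
  have hc0 : ‖(n:ℂ)‖ / (‖(m:ℂ)‖ * ‖(π:ℂ)‖ ^ 2)
      = (n:ℝ) / (m * π ^ 2) := by
    rw [Complex.norm_natCast, Complex.norm_natCast, Complex.norm_real, Real.norm_eq_abs, _root_.sq_abs]
  rw [hc0]
  have hF : ‖((j:ℂ) + 1) * t ^ n + ((m:ℂ) - (j:ℂ) - 1) * s ^ m‖
      ≤ (m:ℝ) * ‖t‖ ^ ((n:ℝ)) := by
    have e1 : ‖(j:ℂ) + 1‖ = (j:ℝ) + 1 := by
      rw [show ((j:ℂ) + 1) = ((((j:ℝ) + 1) : ℝ) : ℂ) by push_cast; ring,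
        Complex.norm_of_nonneg (by positivity)]
    have e2 : ‖(m:ℂ) - (j:ℂ) - 1‖ = (m:ℝ) - j - 1 := by
      have hjm : (j:ℝ) + 1 ≤ m := by exact_mod_cast hj
      rw [show ((m:ℂ) - (j:ℂ) - 1) = ((((m:ℝ) - j - 1) : ℝ) : ℂ) by push_cast; ring,
        Complex.norm_of_nonneg (by linarith)]
    calc ‖((j:ℂ) + 1) * t ^ n + ((m:ℂ) - (j:ℂ) - 1) * s ^ m‖
        ≤ ‖((j:ℂ) + 1) * t ^ n‖ + ‖((m:ℂ) - (j:ℂ) - 1) * s ^ m‖ :=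
          norm_add_le _ _
      _ = ((j:ℝ) + 1) * ‖t‖ ^ n + ((m:ℝ) - j - 1) * ‖s‖ ^ m := by
          rw [norm_mul, norm_mul, norm_pow, norm_pow, e1, e2]
      _ ≤ ((j:ℝ) + 1) * ‖t‖ ^ n + ((m:ℝ) - j - 1) * ‖t‖ ^ n := by
          have hjm : (j:ℝ) + 1 ≤ m := by exact_mod_cast hj
          nlinarith [hsm.le]
      _ = (m:ℝ) * ‖t‖ ^ n := by ring
      _ = (m:ℝ) * ‖t‖ ^ ((n:ℝ)) := by rw [Real.rpow_natCast]
  have hG : ‖(j:ℂ) + 1 - (m:ℂ)/n * (Ej m n j : ℂ)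
        + ((m:ℂ)/n + (m:ℂ)/n * (Ej m n j : ℂ) - (j:ℂ) - 1) * t‖ ≤ A + B + 1 := by
    calc ‖(j:ℂ) + 1 - (m:ℂ)/n * (Ej m n j : ℂ)
            + ((m:ℂ)/n + (m:ℂ)/n * (Ej m n j : ℂ) - (j:ℂ) - 1) * t‖
        ≤ A + B * ‖t‖ := by
          rw [hA, hB, ← norm_mul]
          exact norm_add_le _ _
      _ ≤ A + B * 1 := by
          have := mul_le_mul_of_nonneg_left htt1.le hB0
          linarith
      _ ≤ A + B + 1 := by linarith
  calc (n:ℝ) / (m * π ^ 2)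
          * ‖((j:ℂ) + 1) * t ^ n + ((m:ℂ) - (j:ℂ) - 1) * s ^ m‖
          * ‖(j:ℂ) + 1 - (m:ℂ)/n * (Ej m n j : ℂ)
            + ((m:ℂ)/n + (m:ℂ)/n * (Ej m n j : ℂ) - (j:ℂ) - 1) * t‖
          * ‖s‖ ^ j
          * ‖t‖ ^ ((((n:ℤ) - 1 - (Ej m n j : ℤ)) : ℤ) : ℝ)
      ≤ (n:ℝ) / (m * π ^ 2) * ((m:ℝ) * ‖t‖ ^ ((n:ℝ))) * (A + B + 1)
          * ‖t‖ ^ ((n:ℝ)*j/m)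
          * ‖t‖ ^ ((((n:ℤ) - 1 - (Ej m n j : ℤ)) : ℤ) : ℝ) := by
        gcongr <;> first | positivity | exact hF | exact hG | exact hsj
    _ = (n:ℝ) / (m * π ^ 2) * m * (A + B + 1)
          * ‖t‖ ^ (2 * (n:ℝ) - 1 - (Ej m n j : ℝ) + (n:ℝ) * j / m) := by
        rw [show (2 * (n:ℝ) - 1 - (Ej m n j : ℝ) + (n:ℝ) * j / m)
            = (n:ℝ) + ((n:ℝ) * j / m + ((((n:ℤ) - 1 - (Ej m n j : ℤ)) : ℤ) : ℝ)) by
              push_cast; ring,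
          Real.rpow_add htt0, Real.rpow_add htt0]
        ring


end
end

section
/- Let Ω ⊆ ℂⁿ be a domain with Lebesgue measure dV, let K be a measurable function on Ω × Ω that is positive a.e., and let h be a positive measurable function on Ω. Suppose there exist real numbers 0 < a < b such that for every ε ∈ [a, b) there is a constant C_ε with ∫_Ω K(z,w) h(w)^{−ε} dV(w) ≤ C_ε h(z)^{−ε} for a.e. z ∈ Ω and ∫_Ω K(z,w) h(z)^{−ε} dV(z) ≤ C_ε h(w)^{−ε} for a.e. w ∈ Ω. Then for every p ∈ ((a+b)/b, (a+b)/a) the integral operator 𝒦 f(z) := ∫_Ω K(z,w) f(w) dV(w) is bounded on L^p(Ω): there is a constant C_p with ‖𝒦 f‖_{L^p} ≤ C_p ‖f‖_{L^p} for all f ∈ L^p(Ω). -/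
open MeasureTheory Complex Real
open scoped ENNReal NNReal

noncomputable section

private lemma aux_ofReal (x y : ℝ) (hy : 0 < y) (ε : ℝ) :
    ENNReal.ofReal (x * y ^ ε) = ENNReal.ofReal x * ENNReal.ofReal y ^ ε := by
  rw [ENNReal.ofReal_mul' (Real.rpow_nonneg hy.le ε), ENNReal.ofReal_rpow_of_pos hy]

private lemma aux_rpow_ne_top {x : ℝ≥0∞} (hx : x ≠ 0) (hx' : x ≠ ⊤) (y : ℝ) : x ^ y ≠ ⊤ := by
  simp [ENNReal.rpow_eq_top_iff, hx, hx']

/-- A version of Schur's lemma: if a positive kernel `K` on a domain `Ω ⊆ ℂⁿ` admits a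
positive auxiliary function `h` with `𝒦(h^{-ε}) ≲ h^{-ε}` (and symmetrically) for all
`ε ∈ [a,b)`, then the integral operator with kernel `K` is bounded on `L^p(Ω)` for all
`p ∈ ((a+b)/b, (a+b)/a)`. -/
theorem schur_lemma_version {N : ℕ} (Ω : Set (Fin N → ℂ))
    (hΩo : IsOpen Ω) (hΩc : IsConnected Ω)
    (K : (Fin N → ℂ) → (Fin N → ℂ) → ℝ)
    (hKmeas : Measurable (Function.uncurry K))
    (hKpos : ∀ᵐ q ∂((volume.restrict Ω).prod (volume.restrict Ω)), 0 < K q.1 q.2)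
    (h : (Fin N → ℂ) → ℝ) (hhmeas : Measurable h) (hhpos : ∀ z ∈ Ω, 0 < h z)
    (a b : ℝ) (ha : 0 < a) (hab : a < b)
    (hyp : ∀ ε ∈ Set.Ico a b, ∃ C : ℝ,
      (∀ᵐ z ∂volume.restrict Ω,
        ∫⁻ w in Ω, ENNReal.ofReal (K z w * h w ^ (-ε))
          ≤ ENNReal.ofReal (C * h z ^ (-ε))) ∧
      (∀ᵐ w ∂volume.restrict Ω,
        ∫⁻ z in Ω, ENNReal.ofReal (K z w * h z ^ (-ε))
          ≤ ENNReal.ofReal (C * h w ^ (-ε)))) :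
    ∀ p : ℝ, (a + b) / b < p → p < (a + b) / a →
      ∃ Cp : ℝ, 0 < Cp ∧ ∀ f : (Fin N → ℂ) → ℂ,
        MemLp f (ENNReal.ofReal p) (volume.restrict Ω) →
        eLpNorm (fun z => ∫ w in Ω, (K z w : ℂ) * f w) (ENNReal.ofReal p)
            (volume.restrict Ω)
          ≤ ENNReal.ofReal Cp * eLpNorm f (ENNReal.ofReal p) (volume.restrict Ω) := by
  intro p hpl hpr
  have hb : 0 < b := ha.trans hab
  have hp1 : 1 < p := ((one_lt_div hb).mpr (by linarith)).trans hpl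
  have hp0 : 0 < p := zero_lt_one.trans hp1
  have hpq : p.HolderConjugate p.conjExponent := Real.HolderConjugate.conjExponent hp1
  set q : ℝ := p.conjExponent with hqdef
  have hq0 : 0 < q := hpq.symm.pos
  set ε₁ : ℝ := (a + b) / p with hε₁def
  set ε₂ : ℝ := (a + b) / q with hε₂def
  have hpa : p * a < a + b := (lt_div_iff₀ ha).mp hpr
  have hbp : a + b < p * b := (div_lt_iff₀ hb).mp hpl
  have hε₁a : a < ε₁ := (lt_div_iff₀ hp0).mpr (by nlinarith)
  have hε₁b : ε₁ < b := (div_lt_iff₀ hp0).mpr (by nlinarith)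
  have hsum : ε₁ + ε₂ = a + b := by
    rw [hε₁def, hε₂def, div_eq_mul_inv, div_eq_mul_inv, ← mul_add, hpq.inv_add_inv_eq_one, mul_one]
  have hε₂a : a < ε₂ := by linarith
  have hε₂b : ε₂ < b := by linarith
  have hε₂0 : 0 ≤ ε₂ := by linarith
  have hε₁pq : ε₁ * (p / q) = ε₂ := by
    rw [hε₁def, hε₂def]; field_simp
  obtain ⟨C₁, hC₁, -⟩ := hyp ε₁ ⟨hε₁a.le, hε₁b⟩
  obtain ⟨C₂, -, hC₂⟩ := hyp ε₂ ⟨hε₂a.le, hε₂b⟩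
  set D₁ : ℝ := max C₁ 1 with hD₁def
  set D₂ : ℝ := max C₂ 1 with hD₂def
  have hD₁0 : 0 < D₁ := lt_max_of_lt_right zero_lt_one
  have hD₂0 : 0 < D₂ := lt_max_of_lt_right zero_lt_one
  refine ⟨(D₁ ^ (p / q) * D₂) ^ (1 / p),
    Real.rpow_pos_of_pos (mul_pos (Real.rpow_pos_of_pos hD₁0 _) hD₂0) _, ?_⟩
  intro f hf
  obtain ⟨g, hgmeas, hfg⟩ := hf.aestronglyMeasurable.aemeasurable
  have hKfg : (fun z => ∫ w in Ω, (K z w : ℂ) * f w)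
      = (fun z => ∫ w in Ω, (K z w : ℂ) * g w) := by
    funext z
    exact integral_congr_ae (hfg.mono fun w hw => by simp only [hw])
  rw [hKfg, eLpNorm_congr_ae hfg]
  -- a.e. facts
  have hmemae : ∀ᵐ z ∂volume.restrict Ω, z ∈ Ω := ae_restrict_mem hΩo.measurableSet
  have hKae : ∀ᵐ z ∂volume.restrict Ω, ∀ᵐ w ∂volume.restrict Ω, 0 < K z w :=
    Measure.ae_ae_of_ae_prod hKpos
  have hHne : ∀ z ∈ Ω, ENNReal.ofReal (h z) ≠ 0 := fun z hz => by
    simp [ENNReal.ofReal_eq_zero, not_le, hhpos z hz]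
  -- main pointwise a.e. bound
  have hmain : ∀ᵐ z ∂volume.restrict Ω,
      (‖∫ w in Ω, (K z w : ℂ) * g w‖₊ : ℝ≥0∞) ^ p ≤
        ENNReal.ofReal D₁ ^ (p / q) *
          ((∫⁻ w in Ω, ENNReal.ofReal (K z w) *
              (ENNReal.ofReal (h w) ^ ε₂ * (‖g w‖₊ : ℝ≥0∞) ^ p)) *
            ENNReal.ofReal (h z) ^ (-ε₂)) := by
    filter_upwards [hmemae, hKae, hC₁] with z hz hKz hC₁z
    set ε : ℝ := ε₁ / q with hεdef
    have hεq : ε * q = ε₁ := div_mul_cancel₀ _ hq0.ne'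
    have hεp : ε * p = ε₂ := by
      rw [hεdef, hε₁def, hε₂def]; field_simp
    -- Step 1 : norm of integral vs lintegral
    have step1 : (‖∫ w in Ω, (K z w : ℂ) * g w‖₊ : ℝ≥0∞) ≤
        ∫⁻ w in Ω, ENNReal.ofReal (K z w) * (‖g w‖₊ : ℝ≥0∞) := by
      refine (enorm_integral_le_lintegral_enorm _).trans_eq ?_
      refine lintegral_congr_ae ?_
      filter_upwards [hKz] with w hKw
      rw [enorm_eq_nnnorm, nnnorm_mul, ENNReal.coe_mul, Complex.nnnorm_real,
        ← enorm_eq_nnnorm, Real.enorm_eq_ofReal hKw.le]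
    -- Step 2 : Hölder
    set φ : (Fin N → ℂ) → ℝ≥0∞ := fun w => ENNReal.ofReal (K z w) ^ (1 / p) *
        (ENNReal.ofReal (h w) ^ ε * (‖g w‖₊ : ℝ≥0∞)) with hφdef
    set ψ : (Fin N → ℂ) → ℝ≥0∞ := fun w => ENNReal.ofReal (K z w) ^ (1 / q) *
        ENNReal.ofReal (h w) ^ (-ε) with hψdef
    have hφm : Measurable φ :=
      ((hKmeas.of_uncurry_left.ennreal_ofReal).pow_const _).mul
        (((hhmeas.ennreal_ofReal).pow_const _).mul hgmeas.enorm)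
    have hψm : Measurable ψ :=
      ((hKmeas.of_uncurry_left.ennreal_ofReal).pow_const _).mul
        ((hhmeas.ennreal_ofReal).pow_const _)
    have hφp : ∀ w, φ w ^ p = ENNReal.ofReal (K z w) *
        (ENNReal.ofReal (h w) ^ ε₂ * (‖g w‖₊ : ℝ≥0∞) ^ p) := by
      intro w
      rw [hφdef]
      simp only []
      rw [ENNReal.mul_rpow_of_nonneg _ _ hp0.le, ENNReal.mul_rpow_of_nonneg _ _ hp0.le,
        ← ENNReal.rpow_mul, ← ENNReal.rpow_mul, one_div_mul_cancel hp0.ne',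
        ENNReal.rpow_one, hεp]
    have hψq : ∀ w, ψ w ^ q = ENNReal.ofReal (K z w) *
        ENNReal.ofReal (h w) ^ (-ε₁) := by
      intro w
      rw [hψdef]
      simp only []
      rw [ENNReal.mul_rpow_of_nonneg _ _ hq0.le, ← ENNReal.rpow_mul, ← ENNReal.rpow_mul,
        one_div_mul_cancel hq0.ne', ENNReal.rpow_one, neg_mul, hεq]
    have step2 : (∫⁻ w in Ω, ENNReal.ofReal (K z w) * (‖g w‖₊ : ℝ≥0∞)) ≤
        (∫⁻ w in Ω, ENNReal.ofReal (K z w) *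
            (ENNReal.ofReal (h w) ^ ε₂ * (‖g w‖₊ : ℝ≥0∞) ^ p)) ^ (1 / p) *
          (∫⁻ w in Ω, ENNReal.ofReal (K z w) * ENNReal.ofReal (h w) ^ (-ε₁)) ^ (1 / q) := by
      have key := ENNReal.lintegral_mul_le_Lp_mul_Lq (volume.restrict Ω) hpq
        hφm.aemeasurable hψm.aemeasurable
      have heq : ∀ᵐ w ∂volume.restrict Ω,
          ENNReal.ofReal (K z w) * (‖g w‖₊ : ℝ≥0∞) = (φ * ψ) w := by
        filter_upwards [hmemae] with w hw
        have h1 : ENNReal.ofReal (K z w) ^ (1 / p) * ENNReal.ofReal (K z w) ^ (1 / q)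
            = ENNReal.ofReal (K z w) := by
          rw [← ENNReal.rpow_add_of_nonneg _ _ (by positivity) (by positivity),
            one_div, one_div, hpq.inv_add_inv_eq_one, ENNReal.rpow_one]
        have h2 : ENNReal.ofReal (h w) ^ ε * ENNReal.ofReal (h w) ^ (-ε) = 1 := by
          rw [← ENNReal.rpow_add _ _ (hHne w hw) ENNReal.ofReal_ne_top, add_neg_cancel,
            ENNReal.rpow_zero]
        calc ENNReal.ofReal (K z w) * (‖g w‖₊ : ℝ≥0∞)
            = (ENNReal.ofReal (K z w) ^ (1 / p) * ENNReal.ofReal (K z w) ^ (1 / q)) *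
              ((ENNReal.ofReal (h w) ^ ε * ENNReal.ofReal (h w) ^ (-ε)) *
                (‖g w‖₊ : ℝ≥0∞)) := by rw [h1, h2, one_mul]
          _ = (φ * ψ) w := by simp only [Pi.mul_apply, hφdef, hψdef]; ring
      calc (∫⁻ w in Ω, ENNReal.ofReal (K z w) * (‖g w‖₊ : ℝ≥0∞))
          = ∫⁻ w in Ω, (φ * ψ) w := lintegral_congr_ae heq
        _ ≤ (∫⁻ w in Ω, φ w ^ p) ^ (1 / p) * (∫⁻ w in Ω, ψ w ^ q) ^ (1 / q) := key
        _ = _ := by rw [lintegral_congr hφp, lintegral_congr hψq]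
    -- Step 3 : the first Schur hypothesis
    have step3 : (∫⁻ w in Ω, ENNReal.ofReal (K z w) * ENNReal.ofReal (h w) ^ (-ε₁)) ≤
        ENNReal.ofReal D₁ * ENNReal.ofReal (h z) ^ (-ε₁) := by
      calc (∫⁻ w in Ω, ENNReal.ofReal (K z w) * ENNReal.ofReal (h w) ^ (-ε₁))
          = ∫⁻ w in Ω, ENNReal.ofReal (K z w * h w ^ (-ε₁)) := by
            refine lintegral_congr_ae ?_
            filter_upwards [hmemae] with w hw
            rw [aux_ofReal _ _ (hhpos w hw)]
        _ ≤ ENNReal.ofReal (C₁ * h z ^ (-ε₁)) := hC₁z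
        _ ≤ ENNReal.ofReal (D₁ * h z ^ (-ε₁)) := ENNReal.ofReal_le_ofReal
            (mul_le_mul_of_nonneg_right (le_max_left _ _)
              (Real.rpow_nonneg (hhpos z hz).le _))
        _ = _ := aux_ofReal _ _ (hhpos z hz) _
    -- combine
    calc (‖∫ w in Ω, (K z w : ℂ) * g w‖₊ : ℝ≥0∞) ^ p
        ≤ ((∫⁻ w in Ω, ENNReal.ofReal (K z w) *
              (ENNReal.ofReal (h w) ^ ε₂ * (‖g w‖₊ : ℝ≥0∞) ^ p)) ^ (1 / p) *
            (ENNReal.ofReal D₁ * ENNReal.ofReal (h z) ^ (-ε₁)) ^ (1 / q)) ^ p := by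
          refine ENNReal.rpow_le_rpow ((step1.trans step2).trans ?_) hp0.le
          exact mul_le_mul_right (ENNReal.rpow_le_rpow step3 (by positivity)) _
      _ = _ := by
          rw [ENNReal.mul_rpow_of_nonneg _ _ hp0.le, ← ENNReal.rpow_mul,
            one_div_mul_cancel hp0.ne', ENNReal.rpow_one, ← ENNReal.rpow_mul,
            (show 1 / q * p = p / q by ring),
            ENNReal.mul_rpow_of_nonneg _ _ (div_nonneg hp0.le hq0.le),
            ← ENNReal.rpow_mul, neg_mul, hε₁pq]
          ring
  -- outer integration
  have hjm : AEMeasurable (Function.uncurry fun z w =>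
      (ENNReal.ofReal (K z w) * ENNReal.ofReal (h z) ^ (-ε₂)) *
        (ENNReal.ofReal (h w) ^ ε₂ * (‖g w‖₊ : ℝ≥0∞) ^ p))
      ((volume.restrict Ω).prod (volume.restrict Ω)) := by
    refine Measurable.aemeasurable ?_
    exact (hKmeas.ennreal_ofReal.mul
        (((hhmeas.comp measurable_fst).ennreal_ofReal).pow_const _)).mul
      ((((hhmeas.comp measurable_snd).ennreal_ofReal).pow_const _).mul
        (((hgmeas.comp measurable_snd).enorm).pow_const _))
  have hD₁top : ENNReal.ofReal D₁ ^ (p / q) ≠ ⊤ :=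
    ENNReal.rpow_ne_top_of_nonneg (div_nonneg hp0.le hq0.le) ENNReal.ofReal_ne_top
  have houter : (∫⁻ z in Ω, (‖∫ w in Ω, (K z w : ℂ) * g w‖₊ : ℝ≥0∞) ^ p)
      ≤ ENNReal.ofReal D₁ ^ (p / q) *
        (ENNReal.ofReal D₂ * ∫⁻ w in Ω, (‖g w‖₊ : ℝ≥0∞) ^ p) := by
    calc (∫⁻ z in Ω, (‖∫ w in Ω, (K z w : ℂ) * g w‖₊ : ℝ≥0∞) ^ p)
        ≤ ∫⁻ z in Ω, ENNReal.ofReal D₁ ^ (p / q) *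
            ((∫⁻ w in Ω, ENNReal.ofReal (K z w) *
                (ENNReal.ofReal (h w) ^ ε₂ * (‖g w‖₊ : ℝ≥0∞) ^ p)) *
              ENNReal.ofReal (h z) ^ (-ε₂)) := lintegral_mono_ae hmain
      _ = ENNReal.ofReal D₁ ^ (p / q) *
          ∫⁻ z in Ω, (∫⁻ w in Ω, ENNReal.ofReal (K z w) *
              (ENNReal.ofReal (h w) ^ ε₂ * (‖g w‖₊ : ℝ≥0∞) ^ p)) *
            ENNReal.ofReal (h z) ^ (-ε₂) := lintegral_const_mul' _ _ hD₁top
      _ = ENNReal.ofReal D₁ ^ (p / q) *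
          ∫⁻ z in Ω, ∫⁻ w in Ω,
            (ENNReal.ofReal (K z w) * ENNReal.ofReal (h z) ^ (-ε₂)) *
              (ENNReal.ofReal (h w) ^ ε₂ * (‖g w‖₊ : ℝ≥0∞) ^ p) := by
          congr 1
          refine lintegral_congr_ae ?_
          filter_upwards [hmemae] with z hz
          have hne : ENNReal.ofReal (h z) ^ (-ε₂) ≠ ⊤ :=
            aux_rpow_ne_top (hHne z hz) ENNReal.ofReal_ne_top _
          rw [← lintegral_mul_const' _ _ hne]
          exact lintegral_congr fun w => by ring
      _ = ENNReal.ofReal D₁ ^ (p / q) *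
          ∫⁻ w in Ω, ∫⁻ z in Ω,
            (ENNReal.ofReal (K z w) * ENNReal.ofReal (h z) ^ (-ε₂)) *
              (ENNReal.ofReal (h w) ^ ε₂ * (‖g w‖₊ : ℝ≥0∞) ^ p) := by
          rw [lintegral_lintegral_swap hjm]
      _ = ENNReal.ofReal D₁ ^ (p / q) *
          ∫⁻ w in Ω, (∫⁻ z in Ω, ENNReal.ofReal (K z w) * ENNReal.ofReal (h z) ^ (-ε₂)) *
            (ENNReal.ofReal (h w) ^ ε₂ * (‖g w‖₊ : ℝ≥0∞) ^ p) := by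
          congr 1
          refine lintegral_congr fun w => ?_
          refine lintegral_mul_const' _ _ ?_
          exact ENNReal.mul_ne_top
            (ENNReal.rpow_ne_top_of_nonneg hε₂0 ENNReal.ofReal_ne_top)
            (ENNReal.rpow_ne_top_of_nonneg hp0.le ENNReal.coe_ne_top)
      _ ≤ ENNReal.ofReal D₁ ^ (p / q) *
          ∫⁻ w in Ω, (ENNReal.ofReal D₂ * ENNReal.ofReal (h w) ^ (-ε₂)) *
            (ENNReal.ofReal (h w) ^ ε₂ * (‖g w‖₊ : ℝ≥0∞) ^ p) := by
          refine mul_le_mul_right (lintegral_mono_ae ?_) _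
          filter_upwards [hmemae, hC₂] with w hw hC₂w
          refine mul_le_mul_left ?_ _
          calc (∫⁻ z in Ω, ENNReal.ofReal (K z w) * ENNReal.ofReal (h z) ^ (-ε₂))
              = ∫⁻ z in Ω, ENNReal.ofReal (K z w * h z ^ (-ε₂)) := by
                refine lintegral_congr_ae ?_
                filter_upwards [hmemae] with z hz
                rw [aux_ofReal _ _ (hhpos z hz)]
            _ ≤ ENNReal.ofReal (C₂ * h w ^ (-ε₂)) := hC₂w
            _ ≤ ENNReal.ofReal (D₂ * h w ^ (-ε₂)) := ENNReal.ofReal_le_ofReal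
                (mul_le_mul_of_nonneg_right (le_max_left _ _)
                  (Real.rpow_nonneg (hhpos w hw).le _))
            _ = _ := aux_ofReal _ _ (hhpos w hw) _
      _ = ENNReal.ofReal D₁ ^ (p / q) *
          (ENNReal.ofReal D₂ * ∫⁻ w in Ω, (‖g w‖₊ : ℝ≥0∞) ^ p) := by
          congr 1
          rw [← lintegral_const_mul' _ _ ENNReal.ofReal_ne_top]
          refine lintegral_congr_ae ?_
          filter_upwards [hmemae] with w hw
          have h1 : ENNReal.ofReal (h w) ^ (-ε₂) * ENNReal.ofReal (h w) ^ ε₂ = 1 := by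
            rw [← ENNReal.rpow_add _ _ (hHne w hw) ENNReal.ofReal_ne_top, neg_add_cancel,
              ENNReal.rpow_zero]
          calc (ENNReal.ofReal D₂ * ENNReal.ofReal (h w) ^ (-ε₂)) *
                (ENNReal.ofReal (h w) ^ ε₂ * (‖g w‖₊ : ℝ≥0∞) ^ p)
              = ENNReal.ofReal D₂ *
                ((ENNReal.ofReal (h w) ^ (-ε₂) * ENNReal.ofReal (h w) ^ ε₂) *
                  (‖g w‖₊ : ℝ≥0∞) ^ p) := by ring
            _ = ENNReal.ofReal D₂ * (‖g w‖₊ : ℝ≥0∞) ^ p := by rw [h1, one_mul]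
  -- conclusion
  have hpne0 : ENNReal.ofReal p ≠ 0 := by
    simp [ENNReal.ofReal_eq_zero, not_le, hp0]
  rw [eLpNorm_eq_lintegral_rpow_enorm_toReal hpne0 ENNReal.ofReal_ne_top,
    eLpNorm_eq_lintegral_rpow_enorm_toReal hpne0 ENNReal.ofReal_ne_top,
    ENNReal.toReal_ofReal hp0.le]
  calc (∫⁻ z in Ω, (‖∫ w in Ω, (K z w : ℂ) * g w‖₊ : ℝ≥0∞) ^ p) ^ (1 / p)
      ≤ (ENNReal.ofReal D₁ ^ (p / q) *
          (ENNReal.ofReal D₂ * ∫⁻ w in Ω, (‖g w‖₊ : ℝ≥0∞) ^ p)) ^ (1 / p) :=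
        ENNReal.rpow_le_rpow houter (by positivity)
    _ = ENNReal.ofReal ((D₁ ^ (p / q) * D₂) ^ (1 / p)) *
        (∫⁻ w in Ω, (‖g w‖₊ : ℝ≥0∞) ^ p) ^ (1 / p) := by
        rw [← mul_assoc, ENNReal.mul_rpow_of_nonneg _ _ (by positivity)]
        congr 1
        rw [ENNReal.ofReal_rpow_of_pos hD₁0,
          ← ENNReal.ofReal_mul (Real.rpow_nonneg hD₁0.le _),
          ENNReal.ofReal_rpow_of_pos (mul_pos (Real.rpow_pos_of_pos hD₁0 _) hD₂0)]

end
end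

section
/- Let γ ≥ 2. Then the Bergman kernel of ℍ_γ has a zero: there exist points z, w ∈ ℍ_γ such that 𝔹_γ(z,w) = 0, where 𝔹_γ(z,w) = Σ_{α ∈ 𝒜²_γ} z^α · conj(w)^α / c²_{γ,α} (the family being summable at this pair). -/
open MeasureTheory Complex Real

noncomputable section

private lemma hasSum_aux {K : Type*} [NormedField K] [CompleteSpace K]
    (c d x : K) (hx : ‖x‖ < 1) :
    HasSum (fun n : ℕ => (c + d * n) * x ^ n)
      (c * (1 - x)⁻¹ + d * (x / (1 - x) ^ 2)) := by
  have h := ((hasSum_geometric_of_norm_lt_one hx).mul_left c).add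
    ((hasSum_coe_mul_geometric_of_norm_lt_one hx).mul_left d)
  exact h.congr_fun fun n => by ring

private lemma summable_aux (c d x : ℂ) (hx : ‖x‖ < 1) :
    Summable fun n : ℕ => ‖(c + d * n) * x ^ n‖ := by
  have hx' : ‖(‖x‖)‖ < 1 := by rwa [Real.norm_of_nonneg (norm_nonneg x)]
  refine Summable.of_nonneg_of_le (fun n => norm_nonneg _) (fun n => ?_)
    (hasSum_aux ‖c‖ ‖d‖ ‖x‖ hx').summable
  rw [norm_mul, norm_pow]
  refine mul_le_mul_of_nonneg_right ?_ (pow_nonneg (norm_nonneg x) n)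
  calc ‖c + d * n‖ ≤ ‖c‖ + ‖d * (n : ℂ)‖ := norm_add_le _ _
    _ = ‖c‖ + ‖d‖ * n := by rw [norm_mul, Complex.norm_natCast]

private lemma hasSum_prod_aux (c d x c' d' y : ℂ) (hx : ‖x‖ < 1) (hy : ‖y‖ < 1) :
    HasSum (fun p : ℕ × ℕ => ((c + d * p.1) * x ^ p.1) * ((c' + d' * p.2) * y ^ p.2))
      ((c * (1 - x)⁻¹ + d * (x / (1 - x) ^ 2)) * (c' * (1 - y)⁻¹ + d' * (y / (1 - y) ^ 2))) := by
  have hs := summable_mul_of_summable_norm (f := fun m : ℕ => (c + d * m) * x ^ m)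
      (g := fun n : ℕ => (c' + d' * n) * y ^ n)
      (summable_aux c d x hx) (summable_aux c' d' y hy)
  exact HasSum.mul (f := fun m : ℕ => (c + d * m) * x ^ m)
    (g := fun n : ℕ => (c' + d' * n) * y ^ n)
    (hasSum_aux c d x hx) (hasSum_aux c' d' y hy) hs

private lemma div_cSq (γ : ℝ) (α : ℤ × ℤ) (x : ℂ) :
    x / (cSq γ α : ℂ) =
      x * ((((α.1 : ℝ) + 1) ^ 2 + γ * ((α.1 : ℝ) + 1) * ((α.2 : ℝ) + 1) : ℝ) : ℂ)
        / ((γ : ℂ) * (π : ℂ) ^ 2) := by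
  rw [cSq]
  push_cast
  rw [div_eq_mul_inv x, inv_div, ← mul_div_assoc]

private lemma zpow_helper (x : ℂ) (hx : x ≠ 0) (m n : ℕ) :
    x ^ ((n : ℤ) - 1 - (m : ℤ)) = x ^ n * x⁻¹ * (x⁻¹) ^ m := by
  rw [show (n : ℤ) - 1 - (m : ℤ) = (n : ℤ) + -(1 + (m : ℤ)) by ring,
    zpow_add₀ hx, zpow_natCast, zpow_neg, zpow_add₀ hx, zpow_one, zpow_natCast,
    mul_inv, inv_pow, ← mul_assoc]

private lemma zpow_even (x : ℂ) (m : ℕ) : x ^ (2 * (m : ℤ)) = (x ^ 2) ^ m := by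
  rw [show 2 * (m : ℤ) = ((2 * m : ℕ) : ℤ) by push_cast; ring, zpow_natCast, pow_mul]

private lemma zpow_odd (x : ℂ) (m : ℕ) : x ^ (2 * (m : ℤ) + 1) = (x ^ 2) ^ m * x := by
  rw [show 2 * (m : ℤ) + 1 = ((2 * m + 1 : ℕ) : ℤ) by push_cast; ring, zpow_natCast,
    pow_succ, pow_mul]

/-- Theorem: for `γ ≥ 2` the Bergman kernel of `ℍ_γ` has a zero: there are points
`z, w ∈ ℍ_γ` at which the defining monomial family is summable with sum `0`. -/
theorem bergmanKernel_has_zero (γ : ℝ) (hγ : 2 ≤ γ) :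
    ∃ z w : ℂ × ℂ, z ∈ Hartogs γ ∧ w ∈ Hartogs γ ∧
      HasSum
        (fun α : allowable γ =>
          z.1 ^ (α : ℤ × ℤ).1 * z.2 ^ (α : ℤ × ℤ).2
            * ((starRingEnd ℂ) w.1) ^ (α : ℤ × ℤ).1
            * ((starRingEnd ℂ) w.2) ^ (α : ℤ × ℤ).2
            / (cSq γ α : ℂ))
        0 := by
  rcases lt_or_eq_of_le hγ with h2 | h2
  · -- case 2 < γ
    have hγ0 : (0:ℝ) < γ := by linarith
    have hγ1 : (0:ℝ) < γ - 1 := by linarith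
    have hπ : (π : ℂ) ≠ 0 := Complex.ofReal_ne_zero.mpr Real.pi_ne_zero
    have hγc : (γ : ℂ) ≠ 0 := Complex.ofReal_ne_zero.mpr hγ0.ne'
    set u : ℝ := 1 / (γ - 1) with hu
    have hu0 : 0 < u := by positivity
    have hu1 : u < 1 := by rw [hu, div_lt_one hγ1]; linarith
    set r : ℝ := Real.sqrt u with hrdef
    have hr0 : 0 < r := Real.sqrt_pos.mpr hu0
    have hr2 : r ^ 2 = u := Real.sq_sqrt hu0.le
    have hr1 : r < 1 := by nlinarith
    set t : ℝ := -u with htdef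
    have htc0 : ((t : ℝ) : ℂ) ≠ 0 := by
      rw [Complex.ofReal_ne_zero, htdef]
      exact neg_ne_zero.mpr hu0.ne'
    have htc : ‖((t : ℝ) : ℂ)‖ < 1 := by
      rw [Complex.norm_real, Real.norm_eq_abs, htdef, abs_neg, abs_of_pos hu0]
      exact hu1
    refine ⟨((0 : ℂ), (r : ℂ)), ((0 : ℂ), -(r : ℂ)), ?_, ?_, ?_⟩
    · constructor
      · show ‖(0 : ℂ)‖ ^ γ < ‖((r : ℝ) : ℂ)‖
        rw [norm_zero, Real.zero_rpow hγ0.ne', Complex.norm_real, Real.norm_eq_abs, abs_of_pos hr0]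
        exact hr0
      · show ‖((r : ℝ) : ℂ)‖ < 1
        rw [Complex.norm_real, Real.norm_eq_abs, abs_of_pos hr0]
        exact hr1
    · constructor
      · show ‖(0 : ℂ)‖ ^ γ < ‖-(r : ℂ)‖
        rw [norm_zero, Real.zero_rpow hγ0.ne', norm_neg, Complex.norm_real, Real.norm_eq_abs,
          abs_of_pos hr0]
        exact hr0
      · show ‖-(r : ℂ)‖ < 1
        rw [norm_neg, Complex.norm_real, Real.norm_eq_abs, abs_of_pos hr0]
        exact hr1
    · -- the series
      have mem : ∀ n : ℕ, ((0 : ℤ), (n : ℤ) - 1) ∈ allowable γ := by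
        intro n
        refine ⟨le_refl 0, ?_⟩
        have hn : (0:ℝ) ≤ (n:ℝ) := Nat.cast_nonneg n
        have : (0:ℝ) ≤ γ * n := mul_nonneg hγ0.le hn
        push_cast
        nlinarith
      set e : ℕ → allowable γ := fun n => ⟨((0 : ℤ), (n : ℤ) - 1), mem n⟩ with he
      have hinj : Function.Injective e := by
        intro m n h
        have h2 := congrArg (fun x : allowable γ => (x : ℤ × ℤ).2) h
        simp only [e] at h2
        omega
      refine (Function.Injective.hasSum_iff hinj ?_).mp ?_
      · rintro ⟨⟨j, k⟩, hjk⟩ hx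
        rcases eq_or_lt_of_le hjk.1 with hj0 | hj0
        · exfalso
          apply hx
          have hjkr := hjk.2
          rw [← hj0] at hjkr
          push_cast at hjkr
          have hk : -1 ≤ k := by
            by_contra hk
            push_neg at hk
            have hkr : ((k : ℝ) + 1) ≤ -1 := by
              have : (k : ℝ) ≤ -2 := by exact_mod_cast (by omega : k ≤ -2)
              linarith
            nlinarith
          refine ⟨(k + 1).toNat, Subtype.ext ?_⟩
          have hkn : (((k + 1).toNat : ℤ)) = k + 1 := Int.toNat_of_nonneg (by omega)
          simp only [e, Prod.mk.injEq]
          exact ⟨by simpa using hj0, by omega⟩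
        · have hj0' : 0 < j := by simpa using hj0
          have hz : (0 : ℂ) ^ j = 0 := zero_zpow j hj0'.ne'
          show (0:ℂ) ^ j * _ * _ * _ / _ = 0
          rw [hz, zero_mul, zero_mul, zero_mul, zero_div]
      · -- HasSum (f ∘ e) 0
        set C : ℂ := (((t:ℝ):ℂ))⁻¹ / ((γ : ℂ) * (π : ℂ) ^ 2) with hC
        have key : ∀ n : ℕ,
            ((0:ℂ) ^ ((0:ℤ)) * ((r:ℝ):ℂ) ^ ((n:ℤ)-1)
              * ((starRingEnd ℂ) (0:ℂ)) ^ ((0:ℤ))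
              * ((starRingEnd ℂ) (-(r:ℂ))) ^ ((n:ℤ)-1)
              / (cSq γ ((0 : ℤ), (n : ℤ) - 1) : ℂ))
            = (C + ((γ:ℂ) * C) * n) * ((t:ℝ):ℂ) ^ n := by
          intro n
          have hconj : (starRingEnd ℂ) (-(r:ℂ)) = -(r:ℂ) := by
            rw [map_neg, Complex.conj_ofReal]
          have hrt : ((r:ℝ):ℂ) * (-(r:ℂ)) = ((t:ℝ):ℂ) := by
            rw [htdef, ← hr2]
            push_cast
            ring
          rw [div_cSq, zpow_zero, map_zero, zpow_zero, hconj, one_mul, mul_one,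
            show ((r:ℝ):ℂ) ^ ((n:ℤ)-1) * (-(r:ℂ)) ^ ((n:ℤ)-1)
              = (((r:ℝ):ℂ) * (-(r:ℂ))) ^ ((n:ℤ)-1) from (mul_zpow _ _ _).symm,
            hrt, zpow_sub₀ htc0, zpow_one, zpow_natCast]
          push_cast
          rw [hC]
          ring
        have hS := hasSum_aux C ((γ:ℂ) * C) (((t:ℝ)):ℂ) htc
        have hval : C * (1 - ((t:ℝ):ℂ))⁻¹ + ((γ:ℂ) * C) * (((t:ℝ):ℂ) / (1 - ((t:ℝ):ℂ)) ^ 2) = 0 := by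
          have hXY : ((1:ℝ) - t)⁻¹ + γ * (t / (1 - t) ^ 2) = 0 := by
            rw [htdef, hu]
            have h1 : γ - 1 ≠ 0 := hγ1.ne'
            field_simp
            ring
          calc C * (1 - ((t:ℝ):ℂ))⁻¹ + ((γ:ℂ) * C) * (((t:ℝ):ℂ) / (1 - ((t:ℝ):ℂ)) ^ 2)
              = C * ((((1 - t)⁻¹ + γ * (t / (1 - t) ^ 2) : ℝ)) : ℂ) := by push_cast; ring
            _ = 0 := by rw [hXY, Complex.ofReal_zero, mul_zero]
        rw [← hval]
        refine hS.congr_fun fun n => ?_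
        exact key n
  · -- case γ = 2
    subst h2
    have hπ : (π : ℂ) ≠ 0 := Complex.ofReal_ne_zero.mpr Real.pi_ne_zero
    set a : ℝ := Real.sqrt (1/6) with hadef
    have ha0 : 0 < a := Real.sqrt_pos.mpr (by norm_num)
    have ha2 : a ^ 2 = 1/6 := Real.sq_sqrt (by norm_num)
    set s : ℂ := ((-(1/6) : ℝ) : ℂ) with hsdef
    set t : ℂ := ((-(1/4) : ℝ) : ℂ) with htdef
    set v : ℂ := ((-(1/9) : ℝ) : ℂ) with hvdef
    have ht0 : t ≠ 0 := by
      rw [htdef]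
      exact Complex.ofReal_ne_zero.mpr (by norm_num)
    have htn : ‖t‖ < 1 := by
      rw [htdef, Complex.norm_real, Real.norm_eq_abs, abs_neg,
        abs_of_pos (by norm_num : (0:ℝ) < 1/4)]
      norm_num
    have hvn : ‖v‖ < 1 := by
      rw [hvdef, Complex.norm_real, Real.norm_eq_abs, abs_neg,
        abs_of_pos (by norm_num : (0:ℝ) < 1/9)]
      norm_num
    have hsv : s ^ 2 * t⁻¹ = v := by
      rw [hsdef, htdef, hvdef]
      push_cast
      norm_num
    have hca : (starRingEnd ℂ) (-(a:ℂ)) = -(a:ℂ) := by rw [map_neg, Complex.conj_ofReal]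
    have hcb : (starRingEnd ℂ) (-((1/2:ℝ):ℂ)) = -((1/2:ℝ):ℂ) := by
      rw [map_neg, Complex.conj_ofReal]
    have hsa : (a:ℂ) * -(a:ℂ) = s := by
      rw [hsdef, show ((-(1/6):ℝ):ℂ) = -(((1/6):ℝ):ℂ) by push_cast; ring, ← ha2]
      push_cast
      ring
    have hta : ((1/2:ℝ):ℂ) * -((1/2:ℝ):ℂ) = t := by
      rw [htdef]
      push_cast
      norm_num
    refine ⟨((a:ℂ), ((1/2:ℝ):ℂ)), (-(a:ℂ), -((1/2:ℝ):ℂ)), ?_, ?_, ?_⟩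
    · constructor
      · show ‖((a:ℝ):ℂ)‖ ^ (2:ℝ) < ‖(((1/2:ℝ)):ℂ)‖
        rw [Complex.norm_real, Real.norm_eq_abs, Complex.norm_real, Real.norm_eq_abs, abs_of_pos ha0,
          show ((2:ℝ)) = ((2:ℕ):ℝ) by norm_num, Real.rpow_natCast, ha2]
        rw [abs_of_pos]
        · norm_num
        · norm_num
      · show ‖(((1/2:ℝ)):ℂ)‖ < 1
        rw [Complex.norm_real, Real.norm_eq_abs]
        rw [abs_of_pos] <;> norm_num
    · constructor
      · show ‖-((a:ℝ):ℂ)‖ ^ (2:ℝ) < ‖-((1/2:ℝ):ℂ)‖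
        rw [norm_neg, norm_neg, Complex.norm_real, Real.norm_eq_abs, Complex.norm_real, Real.norm_eq_abs,
          abs_of_pos ha0, show ((2:ℝ)) = ((2:ℕ):ℝ) by norm_num, Real.rpow_natCast, ha2]
        rw [abs_of_pos]
        · norm_num
        · norm_num
      · show ‖-((1/2:ℝ):ℂ)‖ < 1
        rw [norm_neg, Complex.norm_real, Real.norm_eq_abs]
        rw [abs_of_pos] <;> norm_num
    · -- the series
      have memE : ∀ p : ℕ × ℕ,
          ((2 * (p.1 : ℤ), (p.2 : ℤ) - 1 - (p.1 : ℤ))) ∈ allowable 2 := by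
        intro p
        constructor
        · positivity
        · have h1 : (0:ℝ) ≤ (p.2 : ℝ) := Nat.cast_nonneg _
          push_cast
          linarith
      have memO : ∀ p : ℕ × ℕ,
          ((2 * (p.1 : ℤ) + 1, (p.2 : ℤ) - 1 - (p.1 : ℤ))) ∈ allowable 2 := by
        intro p
        constructor
        · positivity
        · have h1 : (0:ℝ) ≤ (p.2 : ℝ) := Nat.cast_nonneg _
          push_cast
          linarith
      set e1 : ℕ × ℕ → allowable 2 :=
        fun p => ⟨(2 * (p.1 : ℤ), (p.2 : ℤ) - 1 - (p.1 : ℤ)), memE p⟩ with he1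
      set e2 : ℕ × ℕ → allowable 2 :=
        fun p => ⟨(2 * (p.1 : ℤ) + 1, (p.2 : ℤ) - 1 - (p.1 : ℤ)), memO p⟩ with he2
      show HasSum (fun α : allowable 2 =>
        (a:ℂ) ^ (α : ℤ × ℤ).1 * ((1/2:ℝ):ℂ) ^ (α : ℤ × ℤ).2
          * ((starRingEnd ℂ) (-(a:ℂ))) ^ (α : ℤ × ℤ).1
          * ((starRingEnd ℂ) (-((1/2:ℝ):ℂ))) ^ (α : ℤ × ℤ).2
          / (cSq 2 α : ℂ)) 0
      set F : allowable 2 → ℂ := fun α =>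
        (a:ℂ) ^ (α : ℤ × ℤ).1 * ((1/2:ℝ):ℂ) ^ (α : ℤ × ℤ).2
          * ((starRingEnd ℂ) (-(a:ℂ))) ^ (α : ℤ × ℤ).1
          * ((starRingEnd ℂ) (-((1/2:ℝ):ℂ))) ^ (α : ℤ × ℤ).2
          / (cSq 2 α : ℂ) with hFdef
      set fe : allowable 2 → ℂ :=
        fun α => if Even (α : ℤ × ℤ).1 then F α else 0 with hfedef
      set fo : allowable 2 → ℂ :=
        fun α => if Even (α : ℤ × ℤ).1 then 0 else F α with hfodef
      have hsplit : ∀ α, F α = fe α + fo α := by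
        intro α
        by_cases h : Even (α : ℤ × ℤ).1 <;> simp [hfedef, hfodef, h]
      have hinj1 : Function.Injective e1 := by
        rintro ⟨p1, p2⟩ ⟨q1, q2⟩ h
        have h1 := congrArg (fun x : allowable 2 => (x : ℤ × ℤ).1) h
        have h2 := congrArg (fun x : allowable 2 => (x : ℤ × ℤ).2) h
        simp only [he1] at h1 h2
        exact Prod.ext (show p1 = q1 by omega) (show p2 = q2 by omega)
      have hinj2 : Function.Injective e2 := by
        rintro ⟨p1, p2⟩ ⟨q1, q2⟩ h
        have h1 := congrArg (fun x : allowable 2 => (x : ℤ × ℤ).1) h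
        have h2 := congrArg (fun x : allowable 2 => (x : ℤ × ℤ).2) h
        simp only [he2] at h1 h2
        exact Prod.ext (show p1 = q1 by omega) (show p2 = q2 by omega)
      have hvan1 : ∀ x ∉ Set.range e1, fe x = 0 := by
        rintro ⟨⟨j, k⟩, hjk⟩ hx
        by_cases hev : Even j
        · exfalso
          apply hx
          obtain ⟨m, hm⟩ := hev
          have hj0 : 0 ≤ j := by simpa using hjk.1
          have hineq : (-1:ℝ) < (j:ℝ) + 2 * ((k:ℝ) + 1) := by simpa using hjk.2
          have hineqZ : -1 < j + 2 * (k + 1) := by exact_mod_cast hineq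
          refine ⟨(m.toNat, (m + k + 1).toNat), Subtype.ext ?_⟩
          simp only [he1, Prod.mk.injEq]
          constructor <;> [skip; skip] <;> omega
        · simp [hfedef, hev]
      have hvan2 : ∀ x ∉ Set.range e2, fo x = 0 := by
        rintro ⟨⟨j, k⟩, hjk⟩ hx
        by_cases hev : Even j
        · simp [hfodef, hev]
        · exfalso
          apply hx
          obtain ⟨m, hm⟩ := Int.not_even_iff_odd.mp hev
          have hj0 : 0 ≤ j := by simpa using hjk.1
          have hineq : (-1:ℝ) < (j:ℝ) + 2 * ((k:ℝ) + 1) := by simpa using hjk.2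
          have hineqZ : -1 < j + 2 * (k + 1) := by exact_mod_cast hineq
          refine ⟨(m.toNat, (m + k + 1).toNat), Subtype.ext ?_⟩
          simp only [he2, Prod.mk.injEq]
          constructor <;> [skip; skip] <;> omega
      have keyE : ∀ p : ℕ × ℕ, (fe ∘ e1) p =
          ((t⁻¹ / ((2:ℂ) * (π:ℂ) ^ 2) + (2 * (t⁻¹ / ((2:ℂ) * (π:ℂ) ^ 2))) * p.1) * v ^ p.1)
            * (((1:ℂ) + 2 * p.2) * t ^ p.2) := by
        rintro ⟨m, n⟩
        have hev : Even (2 * (m:ℤ)) := ⟨(m:ℤ), by ring⟩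
        show (if Even ((e1 (m, n) : ℤ × ℤ)).1 then F (e1 (m, n)) else 0) = _
        rw [if_pos (show Even ((e1 (m, n) : ℤ × ℤ)).1 from hev)]
        show (a:ℂ) ^ (2 * (m:ℤ)) * ((1/2:ℝ):ℂ) ^ ((n:ℤ) - 1 - (m:ℤ))
            * ((starRingEnd ℂ) (-(a:ℂ))) ^ (2 * (m:ℤ))
            * ((starRingEnd ℂ) (-((1/2:ℝ):ℂ))) ^ ((n:ℤ) - 1 - (m:ℤ))
            / (cSq 2 ((2 * (m:ℤ), (n:ℤ) - 1 - (m:ℤ))) : ℂ) = _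
        rw [hca, hcb, div_cSq]
        rw [show (a:ℂ) ^ (2 * (m:ℤ)) * ((1/2:ℝ):ℂ) ^ ((n:ℤ) - 1 - (m:ℤ))
              * (-(a:ℂ)) ^ (2 * (m:ℤ)) * (-((1/2:ℝ):ℂ)) ^ ((n:ℤ) - 1 - (m:ℤ))
            = ((a:ℂ) * -(a:ℂ)) ^ (2 * (m:ℤ))
              * (((1/2:ℝ):ℂ) * -((1/2:ℝ):ℂ)) ^ ((n:ℤ) - 1 - (m:ℤ)) by
          rw [mul_zpow, mul_zpow]; ring]
        rw [hsa, hta, zpow_even, zpow_helper t ht0, ← hsv, mul_pow]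
        dsimp only
        push_cast
        ring
      have keyO : ∀ p : ℕ × ℕ, (fo ∘ e2) p =
          (((2 * (s * t⁻¹ / ((2:ℂ) * (π:ℂ) ^ 2)))
              + (2 * (s * t⁻¹ / ((2:ℂ) * (π:ℂ) ^ 2))) * p.1) * v ^ p.1)
            * (((2:ℂ) + 2 * p.2) * t ^ p.2) := by
        rintro ⟨m, n⟩
        have hodd : ¬ Even (2 * (m:ℤ) + 1) := by
          rw [Int.even_add_one]
          exact not_not_intro ⟨(m:ℤ), by ring⟩
        show (if Even ((e2 (m, n) : ℤ × ℤ)).1 then 0 else F (e2 (m, n))) = _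
        rw [if_neg (show ¬ Even ((e2 (m, n) : ℤ × ℤ)).1 from hodd)]
        show (a:ℂ) ^ (2 * (m:ℤ) + 1) * ((1/2:ℝ):ℂ) ^ ((n:ℤ) - 1 - (m:ℤ))
            * ((starRingEnd ℂ) (-(a:ℂ))) ^ (2 * (m:ℤ) + 1)
            * ((starRingEnd ℂ) (-((1/2:ℝ):ℂ))) ^ ((n:ℤ) - 1 - (m:ℤ))
            / (cSq 2 ((2 * (m:ℤ) + 1, (n:ℤ) - 1 - (m:ℤ))) : ℂ) = _
        rw [hca, hcb, div_cSq]
        rw [show (a:ℂ) ^ (2 * (m:ℤ) + 1) * ((1/2:ℝ):ℂ) ^ ((n:ℤ) - 1 - (m:ℤ))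
              * (-(a:ℂ)) ^ (2 * (m:ℤ) + 1) * (-((1/2:ℝ):ℂ)) ^ ((n:ℤ) - 1 - (m:ℤ))
            = ((a:ℂ) * -(a:ℂ)) ^ (2 * (m:ℤ) + 1)
              * (((1/2:ℝ):ℂ) * -((1/2:ℝ):ℂ)) ^ ((n:ℤ) - 1 - (m:ℤ)) by
          rw [mul_zpow, mul_zpow]; ring]
        rw [hsa, hta, zpow_odd, zpow_helper t ht0, ← hsv, mul_pow]
        dsimp only
        push_cast
        ring
      have hEprod := hasSum_prod_aux (t⁻¹ / ((2:ℂ) * (π:ℂ) ^ 2))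
        (2 * (t⁻¹ / ((2:ℂ) * (π:ℂ) ^ 2))) v 1 2 t hvn htn
      have hOprod := hasSum_prod_aux (2 * (s * t⁻¹ / ((2:ℂ) * (π:ℂ) ^ 2)))
        (2 * (s * t⁻¹ / ((2:ℂ) * (π:ℂ) ^ 2))) v 2 2 t hvn htn
      have hE := (hinj1.hasSum_iff hvan1).mp (hEprod.congr_fun keyE)
      have hO := (hinj2.hasSum_iff hvan2).mp (hOprod.congr_fun keyO)
      have htot := hE.add hO
      have hzero :
          (t⁻¹ / ((2:ℂ) * (π:ℂ) ^ 2) * (1 - v)⁻¹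
              + 2 * (t⁻¹ / ((2:ℂ) * (π:ℂ) ^ 2)) * (v / (1 - v) ^ 2))
            * (1 * (1 - t)⁻¹ + 2 * (t / (1 - t) ^ 2))
          + (2 * (s * t⁻¹ / ((2:ℂ) * (π:ℂ) ^ 2)) * (1 - v)⁻¹
              + 2 * (s * t⁻¹ / ((2:ℂ) * (π:ℂ) ^ 2)) * (v / (1 - v) ^ 2))
            * (2 * (1 - t)⁻¹ + 2 * (t / (1 - t) ^ 2)) = 0 := by
        rw [hsdef, htdef, hvdef]
        have hπ2 : (π:ℂ) ^ 2 ≠ 0 := pow_ne_zero _ hπ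
        push_cast
        field_simp
        ring
      rw [← hzero]
      exact htot.congr_fun fun α => hsplit α

end
end

section
/- Let γ > 0 be a real number and let m, n be positive integers with |n/m − 1/γ| < 1/m². Let β₁ be an integer with 0 ≤ β₁ ≤ m−1 and suppose β₂ := (1 − nβ₁ − n − m)/m is an integer. Then β₁ + γ(β₂ + 1) > −1; that is, (β₁, β₂) ∈ 𝒜²_γ, so the monomial z₁^{β₁} z₂^{β₂} is square-integrable on ℍ_γ. -/
open Real

noncomputable section

/-- Lemma: if `|n/m - 1/γ| < 1/m²`, `0 ≤ β₁ ≤ m-1` and `β₂ = (1 - nβ₁ - n - m)/m` is an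
integer, then `(β₁, β₂)` is a `γ`-allowable multi-index, i.e. `β₁ + γ(β₂+1) > -1`. -/
theorem dirichlet_multiIndex_allowable (γ : ℝ) (hγ : 0 < γ) (m n : ℕ)
    (hm : 0 < m) (hn : 0 < n)
    (happrox : |(n : ℝ) / m - 1 / γ| < 1 / (m : ℝ) ^ 2)
    (β₁ β₂ : ℤ) (hβ₁0 : 0 ≤ β₁) (hβ₁m : β₁ ≤ (m : ℤ) - 1)
    (hβ₂ : (m : ℤ) * β₂ = 1 - n * β₁ - n - m) :
    (β₁ : ℝ) + γ * ((β₂ : ℝ) + 1) > -1 ∧ (β₁, β₂) ∈ allowable γ := by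
  have hmR : (0 : ℝ) < m := by exact_mod_cast hm
  have hc : (m : ℝ) * β₂ = 1 - n * β₁ - n - m := by exact_mod_cast hβ₂
  have hb0 : (0 : ℝ) ≤ (β₁ : ℝ) := by exact_mod_cast hβ₁0
  have hb1 : (β₁ : ℝ) + 1 ≤ m := by
    have : (β₁ : ℝ) ≤ (m : ℝ) - 1 := by exact_mod_cast hβ₁m
    linarith
  rw [abs_lt] at happrox
  obtain ⟨h1, h2⟩ := happrox
  -- From h1, h2 : |n/m - 1/γ| < 1/m², derive -γ < γ n m - m² < γ
  have hγm2 : (0 : ℝ) < γ * m ^ 2 := by positivity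
  have hm' : (m : ℝ) ≠ 0 := ne_of_gt hmR
  have hγ' : γ ≠ 0 := ne_of_gt hγ
  have hcomb : (n : ℝ) / m - 1 / γ = ((n : ℝ) * γ - m) / (m * γ) := by
    field_simp
  rw [hcomb] at h1 h2
  have key1 : γ * n * m - m ^ 2 < γ := by
    rw [div_lt_div_iff₀ (by positivity) (by positivity)] at h2
    nlinarith [h2]
  have key2 : -γ < γ * n * m - m ^ 2 := by
    rw [show -(1 / (m : ℝ) ^ 2) = (-1) / (m : ℝ) ^ 2 by ring,
      div_lt_div_iff₀ (by positivity) (by positivity)] at h1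
    nlinarith [h1]
  have main : (β₁ : ℝ) + γ * ((β₂ : ℝ) + 1) > -1 := by
    rw [gt_iff_lt, ← sub_pos]
    have hmain : (0 : ℝ) < γ + ((β₁ : ℝ) + 1) * (m - γ * n) := by
      rcases le_or_gt (γ * n) (m : ℝ) with h | h
      · have := mul_nonneg (by linarith : (0:ℝ) ≤ (β₁:ℝ) + 1) (by linarith : (0:ℝ) ≤ (m:ℝ) - γ * n)
        linarith
      · have hle : ((β₁ : ℝ) + 1) * (γ * n - m) ≤ m * (γ * n - m) :=
          mul_le_mul_of_nonneg_right hb1 (by linarith)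
        nlinarith
    -- goal : 0 < β₁ + γ*(β₂+1) - (-1), use m*β₂ = 1 - n β₁ - n - m
    have := mul_pos hmain hmR
    nlinarith [hc]
  exact ⟨main, hβ₁0, main⟩

end
end
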